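/- arXiv:math/0608291 — 11 statements merged into one kernel-verified Lean document; each statement's English description precedes it below -/
import Mathlib

section
/- Let V be a real vector space and let f, f₁, f₂, f₃, f₁₂, f₁₃, f₂₃ be nonzero vectors in V such that the span of {f, f₁, f₂, f₃} has dimension 4 and, for each pair 1 ≤ i < j ≤ 3, f_{ij} lies in the subspace span{f, f_i, f_j}. Assume moreover that each of the three subspaces Π'_k := span{f_k, f_{ik}, f_{jk}} (where {i,j,k} = {1,2,3}) has dimension 3. Then the intersection Π'₁ ∩ Π'₂ ∩ Π'₃ contains a nonzero vector; i.e., there exists a point f₁₂₃ of projective space lying simultaneously in the three planes through (f₁, f₁₂, f₁₃), (f₂, f₁₂, f₂₃) and (f₃, f₁₃, f₂₃), completing the seven given points to an elementary hexahedron of a Q-net. -/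
/-- **Elementary hexahedron of a Q-net.**
Given seven points of projective space (represented by nonzero vectors of a real
vector space `V`) such that the span of `{f, f₁, f₂, f₃}` is 4-dimensional, each
`f_{ij}` lies in the plane `span {f, f_i, f_j}`, and each of the three planes
`span {f_k, f_{ik}, f_{jk}}` is 3-dimensional, the three latter planes have a
common point, completing the seven points to an elementary hexahedron of a Q-net. -/
theorem qnet_elementary_hexahedron
    (V : Type*) [AddCommGroup V] [Module ℝ V]
    (f f₁ f₂ f₃ f₁₂ f₁₃ f₂₃ : V)
    (hf : f ≠ 0) (hf₁ : f₁ ≠ 0) (hf₂ : f₂ ≠ 0) (hf₃ : f₃ ≠ 0)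
    (hf₁₂ : f₁₂ ≠ 0) (hf₁₃ : f₁₃ ≠ 0) (hf₂₃ : f₂₃ ≠ 0)
    (hdim : Module.finrank ℝ ↥(Submodule.span ℝ ({f, f₁, f₂, f₃} : Set V)) = 4)
    (h12 : f₁₂ ∈ Submodule.span ℝ ({f, f₁, f₂} : Set V))
    (h13 : f₁₃ ∈ Submodule.span ℝ ({f, f₁, f₃} : Set V))
    (h23 : f₂₃ ∈ Submodule.span ℝ ({f, f₂, f₃} : Set V))
    (hPlane₁ : Module.finrank ℝ ↥(Submodule.span ℝ ({f₁, f₁₂, f₁₃} : Set V)) = 3)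
    (hPlane₂ : Module.finrank ℝ ↥(Submodule.span ℝ ({f₂, f₁₂, f₂₃} : Set V)) = 3)
    (hPlane₃ : Module.finrank ℝ ↥(Submodule.span ℝ ({f₃, f₁₃, f₂₃} : Set V)) = 3) :
    ∃ f₁₂₃ : V, f₁₂₃ ≠ 0 ∧
      f₁₂₃ ∈ Submodule.span ℝ ({f₁, f₁₂, f₁₃} : Set V) ⊓
              Submodule.span ℝ ({f₂, f₁₂, f₂₃} : Set V) ⊓
              Submodule.span ℝ ({f₃, f₁₃, f₂₃} : Set V) := by
  set W := Submodule.span ℝ ({f, f₁, f₂, f₃} : Set V) with hW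
  set P₁ := Submodule.span ℝ ({f₁, f₁₂, f₁₃} : Set V) with hP₁
  set P₂ := Submodule.span ℝ ({f₂, f₁₂, f₂₃} : Set V) with hP₂
  set P₃ := Submodule.span ℝ ({f₃, f₁₃, f₂₃} : Set V) with hP₃
  haveI : FiniteDimensional ℝ W := FiniteDimensional.span_of_finite ℝ (Set.toFinite _)
  haveI : FiniteDimensional ℝ P₁ := FiniteDimensional.span_of_finite ℝ (Set.toFinite _)
  haveI : FiniteDimensional ℝ P₂ := FiniteDimensional.span_of_finite ℝ (Set.toFinite _)
  haveI : FiniteDimensional ℝ P₃ := FiniteDimensional.span_of_finite ℝ (Set.toFinite _)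
  -- membership helpers
  have hfW : f ∈ W := Submodule.subset_span (by simp)
  have hf₁W : f₁ ∈ W := Submodule.subset_span (by simp)
  have hf₂W : f₂ ∈ W := Submodule.subset_span (by simp)
  have hf₃W : f₃ ∈ W := Submodule.subset_span (by simp)
  have h12W : f₁₂ ∈ W := by
    refine Submodule.span_le.mpr ?_ h12
    intro x hx
    simp only [Set.mem_insert_iff, Set.mem_singleton_iff] at hx
    rcases hx with rfl | rfl | rfl <;> assumption
  have h13W : f₁₃ ∈ W := by
    refine Submodule.span_le.mpr ?_ h13
    intro x hx
    simp only [Set.mem_insert_iff, Set.mem_singleton_iff] at hx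
    rcases hx with rfl | rfl | rfl <;> assumption
  have h23W : f₂₃ ∈ W := by
    refine Submodule.span_le.mpr ?_ h23
    intro x hx
    simp only [Set.mem_insert_iff, Set.mem_singleton_iff] at hx
    rcases hx with rfl | rfl | rfl <;> assumption
  have hP₁W : P₁ ≤ W := Submodule.span_le.mpr (by
    intro x hx
    simp only [Set.mem_insert_iff, Set.mem_singleton_iff] at hx
    rcases hx with rfl | rfl | rfl <;> assumption)
  have hP₂W : P₂ ≤ W := Submodule.span_le.mpr (by
    intro x hx
    simp only [Set.mem_insert_iff, Set.mem_singleton_iff] at hx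
    rcases hx with rfl | rfl | rfl <;> assumption)
  have hP₃W : P₃ ≤ W := Submodule.span_le.mpr (by
    intro x hx
    simp only [Set.mem_insert_iff, Set.mem_singleton_iff] at hx
    rcases hx with rfl | rfl | rfl <;> assumption)
  have key : ∀ (A B : Submodule ℝ V), A ≤ W → B ≤ W →
      ∀ [FiniteDimensional ℝ A] [FiniteDimensional ℝ B],
      Module.finrank ℝ A + Module.finrank ℝ B - 4 ≤ Module.finrank ℝ (A ⊓ B : Submodule ℝ V) := by
    intro A B hA hB _ _
    have hsup : Module.finrank ℝ (A ⊔ B : Submodule ℝ V) ≤ 4 := by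
      rw [← hdim]
      exact Submodule.finrank_mono (sup_le hA hB)
    have := Submodule.finrank_sup_add_finrank_inf_eq A B
    omega
  have h12' : 2 ≤ Module.finrank ℝ (P₁ ⊓ P₂ : Submodule ℝ V) := by
    have := key P₁ P₂ hP₁W hP₂W
    omega
  haveI : FiniteDimensional ℝ (P₁ ⊓ P₂ : Submodule ℝ V) :=
    Submodule.finiteDimensional_of_le (le_trans inf_le_left hP₁W)
  have hfin : 1 ≤ Module.finrank ℝ ((P₁ ⊓ P₂) ⊓ P₃ : Submodule ℝ V) := by
    have := key (P₁ ⊓ P₂) P₃ (le_trans inf_le_left hP₁W) hP₃W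
    omega
  have : Nontrivial ((P₁ ⊓ P₂ ⊓ P₃ : Submodule ℝ V)) := by
    rw [← Module.finrank_pos_iff (R := ℝ)]
    haveI : FiniteDimensional ℝ ((P₁ ⊓ P₂) ⊓ P₃ : Submodule ℝ V) :=
      Submodule.finiteDimensional_of_le (le_trans inf_le_right hP₃W)
    omega
  obtain ⟨⟨x, hx⟩, hxne⟩ := exists_ne (0 : (P₁ ⊓ P₂ ⊓ P₃ : Submodule ℝ V))
  refine ⟨x, ?_, hx⟩
  simpa [Submodule.mk_eq_zero] using hxne
end

section
/- Let V be a real vector space and let f and f_i (1 ≤ i ≤ 4) be nonzero vectors with dim span{f, f₁, f₂, f₃, f₄} = 5. For each pair 1 ≤ i < j ≤ 4 let f_{ij} be a nonzero vector in span{f, f_i, f_j}. Assume: (i) for each triple i < j < k the intersection span{f_i, f_{ij}, f_{ik}} ∩ span{f_j, f_{ij}, f_{jk}} ∩ span{f_k, f_{ik}, f_{jk}} is one-dimensional, spanned by a vector f_{ijk}; (ii) for each i, the subspace T_i := span{f_i, f_{ij}, f_{ik}, f_{il}} (where {j,k,l} is the complement of {i} in {1,2,3,4}) has dimension 4, and the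 four subspaces T₁, T₂, T₃, T₄ are pairwise distinct; (iii) for each pair i < j with complement {k,l}, the subspace span{f_{ij}, f_{ijk}, f_{ijl}} has dimension 3. Then there exists a nonzero vector f₁₂₃₄ lying in all six planes span{f_{ij}, f_{ijk}, f_{ijl}} (one for each pair i < j): the four values of the eighth point computed from the four 3-dimensional facets of the 4-cube coincide, i.e., Q-nets are 4D consistent. -/
open Module Submodule

private lemma qnet_dim_inf {V : Type*} [AddCommGroup V] [Module ℝ V]
    (W s t : Submodule ℝ V) [FiniteDimensional ℝ W]
    [FiniteDimensional ℝ s] [FiniteDimensional ℝ t]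
    (hs : s ≤ W) (ht : t ≤ W) :
    finrank ℝ s + finrank ℝ t ≤ finrank ℝ W + finrank ℝ ↥(s ⊓ t) := by
  rw [← Submodule.finrank_sup_add_finrank_inf_eq s t]
  have : finrank ℝ ↥(s ⊔ t) ≤ finrank ℝ W := Submodule.finrank_mono (sup_le hs ht)
  omega

private lemma qnet_inf_three {V : Type*} [AddCommGroup V] [Module ℝ V]
    (W s t : Submodule ℝ V) [FiniteDimensional ℝ W]
    [FiniteDimensional ℝ s] [FiniteDimensional ℝ t]
    (hs : s ≤ W) (ht : t ≤ W) (hW : finrank ℝ W = 5)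
    (h4s : finrank ℝ s = 4) (h4t : finrank ℝ t = 4) (hne : s ≠ t) :
    finrank ℝ ↥(s ⊓ t) = 3 := by
  have hsup_le : finrank ℝ ↥(s ⊔ t) ≤ 5 := hW ▸ Submodule.finrank_mono (sup_le hs ht)
  have hsup_ge : 4 ≤ finrank ℝ ↥(s ⊔ t) := h4s ▸ Submodule.finrank_mono le_sup_left
  have hsup5 : finrank ℝ ↥(s ⊔ t) = 5 := by
    rcases eq_or_lt_of_le hsup_ge with h | h
    · exfalso
      have hseq : s = s ⊔ t := Submodule.eq_of_le_of_finrank_eq le_sup_left (by omega)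
      have hteq : t = s ⊔ t := Submodule.eq_of_le_of_finrank_eq le_sup_right (by omega)
      exact hne (hseq.trans hteq.symm)
    · omega
  have := Submodule.finrank_sup_add_finrank_inf_eq s t
  omega


/-- **Q-nets are 4D consistent.**
Given initial data `f`, `f_i`, `f_{ij}` of an elementary 4-cube of a Q-net
(in homogeneous coordinates), with the points `f_{ijk}` determined by the
elementary hexahedron construction, under genericity assumptions the four values
of the eighth point `f₁₂₃₄` computed from the four 3-dimensional facets coincide:
there is a nonzero vector lying in all six planes `span {f_{ij}, f_{ijk}, f_{ijl}}`. -/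
theorem qnet_4D_consistency
    (V : Type*) [AddCommGroup V] [Module ℝ V]
    (f f₁ f₂ f₃ f₄ f₁₂ f₁₃ f₁₄ f₂₃ f₂₄ f₃₄ f₁₂₃ f₁₂₄ f₁₃₄ f₂₃₄ : V)
    (hf : f ≠ 0) (hf₁ : f₁ ≠ 0) (hf₂ : f₂ ≠ 0) (hf₃ : f₃ ≠ 0) (hf₄ : f₄ ≠ 0)
    (hf₁₂ : f₁₂ ≠ 0) (hf₁₃ : f₁₃ ≠ 0) (hf₁₄ : f₁₄ ≠ 0)
    (hf₂₃ : f₂₃ ≠ 0) (hf₂₄ : f₂₄ ≠ 0) (hf₃₄ : f₃₄ ≠ 0)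
    (hdim : Module.finrank ℝ ↥(Submodule.span ℝ ({f, f₁, f₂, f₃, f₄} : Set V)) = 5)
    (h12 : f₁₂ ∈ Submodule.span ℝ ({f, f₁, f₂} : Set V))
    (h13 : f₁₃ ∈ Submodule.span ℝ ({f, f₁, f₃} : Set V))
    (h14 : f₁₄ ∈ Submodule.span ℝ ({f, f₁, f₄} : Set V))
    (h23 : f₂₃ ∈ Submodule.span ℝ ({f, f₂, f₃} : Set V))
    (h24 : f₂₄ ∈ Submodule.span ℝ ({f, f₂, f₄} : Set V))
    (h34 : f₃₄ ∈ Submodule.span ℝ ({f, f₃, f₄} : Set V))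
    -- (i): each f_{ijk} spans the 1-dimensional triple intersection of the
    -- three planes through (f_i, f_{ij}, f_{ik}), (f_j, f_{ij}, f_{jk}), (f_k, f_{ik}, f_{jk})
    (hf₁₂₃ : f₁₂₃ ≠ 0) (hf₁₂₄ : f₁₂₄ ≠ 0) (hf₁₃₄ : f₁₃₄ ≠ 0) (hf₂₃₄ : f₂₃₄ ≠ 0)
    (h123 : Submodule.span ℝ ({f₁, f₁₂, f₁₃} : Set V) ⊓
            Submodule.span ℝ ({f₂, f₁₂, f₂₃} : Set V) ⊓
            Submodule.span ℝ ({f₃, f₁₃, f₂₃} : Set V) =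
            Submodule.span ℝ ({f₁₂₃} : Set V))
    (h124 : Submodule.span ℝ ({f₁, f₁₂, f₁₄} : Set V) ⊓
            Submodule.span ℝ ({f₂, f₁₂, f₂₄} : Set V) ⊓
            Submodule.span ℝ ({f₄, f₁₄, f₂₄} : Set V) =
            Submodule.span ℝ ({f₁₂₄} : Set V))
    (h134 : Submodule.span ℝ ({f₁, f₁₃, f₁₄} : Set V) ⊓
            Submodule.span ℝ ({f₃, f₁₃, f₃₄} : Set V) ⊓
            Submodule.span ℝ ({f₄, f₁₄, f₃₄} : Set V) =
            Submodule.span ℝ ({f₁₃₄} : Set V))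
    (h234 : Submodule.span ℝ ({f₂, f₂₃, f₂₄} : Set V) ⊓
            Submodule.span ℝ ({f₃, f₂₃, f₃₄} : Set V) ⊓
            Submodule.span ℝ ({f₄, f₂₄, f₃₄} : Set V) =
            Submodule.span ℝ ({f₂₃₄} : Set V))
    -- (ii): the four 3-spaces T_i are 4-dimensional and pairwise distinct
    (hT₁ : Module.finrank ℝ ↥(Submodule.span ℝ ({f₁, f₁₂, f₁₃, f₁₄} : Set V)) = 4)
    (hT₂ : Module.finrank ℝ ↥(Submodule.span ℝ ({f₂, f₁₂, f₂₃, f₂₄} : Set V)) = 4)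
    (hT₃ : Module.finrank ℝ ↥(Submodule.span ℝ ({f₃, f₁₃, f₂₃, f₃₄} : Set V)) = 4)
    (hT₄ : Module.finrank ℝ ↥(Submodule.span ℝ ({f₄, f₁₄, f₂₄, f₃₄} : Set V)) = 4)
    (hT₁₂ : Submodule.span ℝ ({f₁, f₁₂, f₁₃, f₁₄} : Set V) ≠
            Submodule.span ℝ ({f₂, f₁₂, f₂₃, f₂₄} : Set V))
    (hT₁₃ : Submodule.span ℝ ({f₁, f₁₂, f₁₃, f₁₄} : Set V) ≠
            Submodule.span ℝ ({f₃, f₁₃, f₂₃, f₃₄} : Set V))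
    (hT₁₄ : Submodule.span ℝ ({f₁, f₁₂, f₁₃, f₁₄} : Set V) ≠
            Submodule.span ℝ ({f₄, f₁₄, f₂₄, f₃₄} : Set V))
    (hT₂₃ : Submodule.span ℝ ({f₂, f₁₂, f₂₃, f₂₄} : Set V) ≠
            Submodule.span ℝ ({f₃, f₁₃, f₂₃, f₃₄} : Set V))
    (hT₂₄ : Submodule.span ℝ ({f₂, f₁₂, f₂₃, f₂₄} : Set V) ≠
            Submodule.span ℝ ({f₄, f₁₄, f₂₄, f₃₄} : Set V))
    (hT₃₄ : Submodule.span ℝ ({f₃, f₁₃, f₂₃, f₃₄} : Set V) ≠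
            Submodule.span ℝ ({f₄, f₁₄, f₂₄, f₃₄} : Set V))
    -- (iii): the six planes span {f_{ij}, f_{ijk}, f_{ijl}} are 3-dimensional
    (hP₁₂ : Module.finrank ℝ ↥(Submodule.span ℝ ({f₁₂, f₁₂₃, f₁₂₄} : Set V)) = 3)
    (hP₁₃ : Module.finrank ℝ ↥(Submodule.span ℝ ({f₁₃, f₁₂₃, f₁₃₄} : Set V)) = 3)
    (hP₁₄ : Module.finrank ℝ ↥(Submodule.span ℝ ({f₁₄, f₁₂₄, f₁₃₄} : Set V)) = 3)
    (hP₂₃ : Module.finrank ℝ ↥(Submodule.span ℝ ({f₂₃, f₁₂₃, f₂₃₄} : Set V)) = 3)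
    (hP₂₄ : Module.finrank ℝ ↥(Submodule.span ℝ ({f₂₄, f₁₂₄, f₂₃₄} : Set V)) = 3)
    (hP₃₄ : Module.finrank ℝ ↥(Submodule.span ℝ ({f₃₄, f₁₃₄, f₂₃₄} : Set V)) = 3) :
    ∃ f₁₂₃₄ : V, f₁₂₃₄ ≠ 0 ∧
      f₁₂₃₄ ∈ Submodule.span ℝ ({f₁₂, f₁₂₃, f₁₂₄} : Set V) ∧
      f₁₂₃₄ ∈ Submodule.span ℝ ({f₁₃, f₁₂₃, f₁₃₄} : Set V) ∧
      f₁₂₃₄ ∈ Submodule.span ℝ ({f₁₄, f₁₂₄, f₁₃₄} : Set V) ∧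
      f₁₂₃₄ ∈ Submodule.span ℝ ({f₂₃, f₁₂₃, f₂₃₄} : Set V) ∧
      f₁₂₃₄ ∈ Submodule.span ℝ ({f₂₄, f₁₂₄, f₂₃₄} : Set V) ∧
      f₁₂₃₄ ∈ Submodule.span ℝ ({f₃₄, f₁₃₄, f₂₃₄} : Set V) := by
  classical
  set W : Submodule ℝ V := Submodule.span ℝ ({f, f₁, f₂, f₃, f₄} : Set V) with hWdef
  set T₁ : Submodule ℝ V := Submodule.span ℝ ({f₁, f₁₂, f₁₃, f₁₄} : Set V) with hT1def
  set T₂ : Submodule ℝ V := Submodule.span ℝ ({f₂, f₁₂, f₂₃, f₂₄} : Set V) with hT2def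
  set T₃ : Submodule ℝ V := Submodule.span ℝ ({f₃, f₁₃, f₂₃, f₃₄} : Set V) with hT3def
  set T₄ : Submodule ℝ V := Submodule.span ℝ ({f₄, f₁₄, f₂₄, f₃₄} : Set V) with hT4def
  haveI : FiniteDimensional ℝ W := FiniteDimensional.span_of_finite ℝ (Set.toFinite _)
  haveI : FiniteDimensional ℝ T₁ := FiniteDimensional.span_of_finite ℝ (Set.toFinite _)
  haveI : FiniteDimensional ℝ T₂ := FiniteDimensional.span_of_finite ℝ (Set.toFinite _)
  haveI : FiniteDimensional ℝ T₃ := FiniteDimensional.span_of_finite ℝ (Set.toFinite _)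
  haveI : FiniteDimensional ℝ T₄ := FiniteDimensional.span_of_finite ℝ (Set.toFinite _)
  -- basic memberships in W
  have mf : f ∈ W := Submodule.subset_span (by simp)
  have mf1 : f₁ ∈ W := Submodule.subset_span (by simp)
  have mf2 : f₂ ∈ W := Submodule.subset_span (by simp)
  have mf3 : f₃ ∈ W := Submodule.subset_span (by simp)
  have mf4 : f₄ ∈ W := Submodule.subset_span (by simp)
  have wspan : ∀ a b c : V, a ∈ W → b ∈ W → c ∈ W →
      Submodule.span ℝ ({a, b, c} : Set V) ≤ W := by
    intro a b c ha hb hc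
    rw [Submodule.span_le]
    intro x hx
    rcases hx with rfl | rfl | rfl <;> assumption
  have mf12 : f₁₂ ∈ W := wspan f f₁ f₂ mf mf1 mf2 h12
  have mf13 : f₁₃ ∈ W := wspan f f₁ f₃ mf mf1 mf3 h13
  have mf14 : f₁₄ ∈ W := wspan f f₁ f₄ mf mf1 mf4 h14
  have mf23 : f₂₃ ∈ W := wspan f f₂ f₃ mf mf2 mf3 h23
  have mf24 : f₂₄ ∈ W := wspan f f₂ f₄ mf mf2 mf4 h24
  have mf34 : f₃₄ ∈ W := wspan f f₃ f₄ mf mf3 mf4 h34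
  have tle : ∀ a b c d : V, a ∈ W → b ∈ W → c ∈ W → d ∈ W →
      Submodule.span ℝ ({a, b, c, d} : Set V) ≤ W := by
    intro a b c d ha hb hc hd
    rw [Submodule.span_le]
    intro x hx
    rcases hx with rfl | rfl | rfl | rfl <;> assumption
  have hT1W : T₁ ≤ W := tle _ _ _ _ mf1 mf12 mf13 mf14
  have hT2W : T₂ ≤ W := tle _ _ _ _ mf2 mf12 mf23 mf24
  have hT3W : T₃ ≤ W := tle _ _ _ _ mf3 mf13 mf23 mf34
  have hT4W : T₄ ≤ W := tle _ _ _ _ mf4 mf14 mf24 mf34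
  -- memberships of triple points in the three defining planes
  have m123 := h123 ▸ Submodule.mem_span_singleton_self f₁₂₃
  have m124 := h124 ▸ Submodule.mem_span_singleton_self f₁₂₄
  have m134 := h134 ▸ Submodule.mem_span_singleton_self f₁₃₄
  have m234 := h234 ▸ Submodule.mem_span_singleton_self f₂₃₄
  obtain ⟨⟨m123a, m123b⟩, m123c⟩ := m123
  obtain ⟨⟨m124a, m124b⟩, m124c⟩ := m124
  obtain ⟨⟨m134a, m134b⟩, m134c⟩ := m134
  obtain ⟨⟨m234a, m234b⟩, m234c⟩ := m234
  -- each f_{ijk} lies in T_i via span {f_i, f_{ij}, f_{ik}} ≤ T_i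
  have sub3 : ∀ (a b c d : V) (x : V), x ∈ Submodule.span ℝ ({a, b, c} : Set V) →
      x ∈ Submodule.span ℝ ({a, b, c, d} : Set V) := by
    intro a b c d x hx
    refine Submodule.span_mono ?_ hx
    intro y hy
    rcases hy with rfl | rfl | rfl <;> simp
  have sub3' : ∀ (a b c d : V) (x : V), x ∈ Submodule.span ℝ ({a, b, d} : Set V) →
      x ∈ Submodule.span ℝ ({a, b, c, d} : Set V) := by
    intro a b c d x hx
    refine Submodule.span_mono ?_ hx
    intro y hy
    rcases hy with rfl | rfl | rfl <;> simp
  have sub3'' : ∀ (a b c d : V) (x : V), x ∈ Submodule.span ℝ ({a, c, d} : Set V) →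
      x ∈ Submodule.span ℝ ({a, b, c, d} : Set V) := by
    intro a b c d x hx
    refine Submodule.span_mono ?_ hx
    intro y hy
    rcases hy with rfl | rfl | rfl <;> simp
  -- memberships of f_{ijk} in T_i, T_j, T_k
  have m123T1 : f₁₂₃ ∈ T₁ := sub3 f₁ f₁₂ f₁₃ f₁₄ _ m123a
  have m123T2 : f₁₂₃ ∈ T₂ := sub3 f₂ f₁₂ f₂₃ f₂₄ _ m123b
  have m123T3 : f₁₂₃ ∈ T₃ := sub3 f₃ f₁₃ f₂₃ f₃₄ _ m123c
  have m124T1 : f₁₂₄ ∈ T₁ := sub3' f₁ f₁₂ f₁₃ f₁₄ _ m124a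
  have m124T2 : f₁₂₄ ∈ T₂ := sub3' f₂ f₁₂ f₂₃ f₂₄ _ m124b
  have m124T4 : f₁₂₄ ∈ T₄ := sub3 f₄ f₁₄ f₂₄ f₃₄ _ m124c
  have m134T1 : f₁₃₄ ∈ T₁ := sub3'' f₁ f₁₂ f₁₃ f₁₄ _ m134a
  have m134T3 : f₁₃₄ ∈ T₃ := sub3' f₃ f₁₃ f₂₃ f₃₄ _ m134b
  have m134T4 : f₁₃₄ ∈ T₄ := sub3' f₄ f₁₄ f₂₄ f₃₄ _ m134c
  have m234T2 : f₂₃₄ ∈ T₂ := sub3'' f₂ f₁₂ f₂₃ f₂₄ _ m234a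
  have m234T3 : f₂₃₄ ∈ T₃ := sub3'' f₃ f₁₃ f₂₃ f₃₄ _ m234b
  have m234T4 : f₂₃₄ ∈ T₄ := sub3'' f₄ f₁₄ f₂₄ f₃₄ _ m234c
  -- each plane P_{ij} is contained in T_i ⊓ T_j
  have ple : ∀ (a b c : V) (p : Submodule ℝ V), a ∈ p → b ∈ p → c ∈ p →
      Submodule.span ℝ ({a, b, c} : Set V) ≤ p := by
    intro a b c p ha hb hc
    rw [Submodule.span_le]
    intro x hx
    rcases hx with rfl | rfl | rfl <;> assumption
  have hP12le : Submodule.span ℝ ({f₁₂, f₁₂₃, f₁₂₄} : Set V) ≤ T₁ ⊓ T₂ :=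
    ple _ _ _ _ ⟨Submodule.subset_span (by simp), Submodule.subset_span (by simp)⟩
      ⟨m123T1, m123T2⟩ ⟨m124T1, m124T2⟩
  have hP13le : Submodule.span ℝ ({f₁₃, f₁₂₃, f₁₃₄} : Set V) ≤ T₁ ⊓ T₃ :=
    ple _ _ _ _ ⟨Submodule.subset_span (by simp), Submodule.subset_span (by simp)⟩
      ⟨m123T1, m123T3⟩ ⟨m134T1, m134T3⟩
  have hP14le : Submodule.span ℝ ({f₁₄, f₁₂₄, f₁₃₄} : Set V) ≤ T₁ ⊓ T₄ :=
    ple _ _ _ _ ⟨Submodule.subset_span (by simp), Submodule.subset_span (by simp)⟩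
      ⟨m124T1, m124T4⟩ ⟨m134T1, m134T4⟩
  have hP23le : Submodule.span ℝ ({f₂₃, f₁₂₃, f₂₃₄} : Set V) ≤ T₂ ⊓ T₃ :=
    ple _ _ _ _ ⟨Submodule.subset_span (by simp), Submodule.subset_span (by simp)⟩
      ⟨m123T2, m123T3⟩ ⟨m234T2, m234T3⟩
  have hP24le : Submodule.span ℝ ({f₂₄, f₁₂₄, f₂₃₄} : Set V) ≤ T₂ ⊓ T₄ :=
    ple _ _ _ _ ⟨Submodule.subset_span (by simp), Submodule.subset_span (by simp)⟩
      ⟨m124T2, m124T4⟩ ⟨m234T2, m234T4⟩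
  have hP34le : Submodule.span ℝ ({f₃₄, f₁₃₄, f₂₃₄} : Set V) ≤ T₃ ⊓ T₄ :=
    ple _ _ _ _ ⟨Submodule.subset_span (by simp), Submodule.subset_span (by simp)⟩
      ⟨m134T3, m134T4⟩ ⟨m234T3, m234T4⟩
  -- the pairwise intersections T_i ⊓ T_j are 3-dimensional, hence equal to P_{ij}
  have hi12 := qnet_inf_three W T₁ T₂ hT1W hT2W hdim hT₁ hT₂ hT₁₂
  have hi13 := qnet_inf_three W T₁ T₃ hT1W hT3W hdim hT₁ hT₃ hT₁₃
  have hi14 := qnet_inf_three W T₁ T₄ hT1W hT4W hdim hT₁ hT₄ hT₁₄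
  have hi23 := qnet_inf_three W T₂ T₃ hT2W hT3W hdim hT₂ hT₃ hT₂₃
  have hi24 := qnet_inf_three W T₂ T₄ hT2W hT4W hdim hT₂ hT₄ hT₂₄
  have hi34 := qnet_inf_three W T₃ T₄ hT3W hT4W hdim hT₃ hT₄ hT₃₄
  have e12 : Submodule.span ℝ ({f₁₂, f₁₂₃, f₁₂₄} : Set V) = T₁ ⊓ T₂ :=
    Submodule.eq_of_le_of_finrank_eq hP12le (by rw [hP₁₂, hi12])
  have e13 : Submodule.span ℝ ({f₁₃, f₁₂₃, f₁₃₄} : Set V) = T₁ ⊓ T₃ :=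
    Submodule.eq_of_le_of_finrank_eq hP13le (by rw [hP₁₃, hi13])
  have e14 : Submodule.span ℝ ({f₁₄, f₁₂₄, f₁₃₄} : Set V) = T₁ ⊓ T₄ :=
    Submodule.eq_of_le_of_finrank_eq hP14le (by rw [hP₁₄, hi14])
  have e23 : Submodule.span ℝ ({f₂₃, f₁₂₃, f₂₃₄} : Set V) = T₂ ⊓ T₃ :=
    Submodule.eq_of_le_of_finrank_eq hP23le (by rw [hP₂₃, hi23])
  have e24 : Submodule.span ℝ ({f₂₄, f₁₂₄, f₂₃₄} : Set V) = T₂ ⊓ T₄ :=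
    Submodule.eq_of_le_of_finrank_eq hP24le (by rw [hP₂₄, hi24])
  have e34 : Submodule.span ℝ ({f₃₄, f₁₃₄, f₂₃₄} : Set V) = T₃ ⊓ T₄ :=
    Submodule.eq_of_le_of_finrank_eq hP34le (by rw [hP₃₄, hi34])
  -- dimension count: T₁ ⊓ T₂ ⊓ T₃ ⊓ T₄ is nonzero
  have h3 : 2 ≤ Module.finrank ℝ ↥(T₁ ⊓ T₂ ⊓ T₃) := by
    have := qnet_dim_inf W (T₁ ⊓ T₂) T₃ (le_trans inf_le_left hT1W) hT3W
    omega
  have h4 : 1 ≤ Module.finrank ℝ ↥(T₁ ⊓ T₂ ⊓ T₃ ⊓ T₄) := by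
    have := qnet_dim_inf W (T₁ ⊓ T₂ ⊓ T₃) T₄ (le_trans inf_le_left (le_trans inf_le_left hT1W)) hT4W
    omega
  have hne : (T₁ ⊓ T₂ ⊓ T₃ ⊓ T₄ : Submodule ℝ V) ≠ ⊥ := by
    intro h
    rw [h] at h4
    simp at h4
  obtain ⟨x, hx, hx0⟩ := Submodule.exists_mem_ne_zero_of_ne_bot hne
  obtain ⟨⟨⟨xT1, xT2⟩, xT3⟩, xT4⟩ := hx
  refine ⟨x, hx0, ?_, ?_, ?_, ?_, ?_, ?_⟩
  · rw [e12]; exact ⟨xT1, xT2⟩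
  · rw [e13]; exact ⟨xT1, xT3⟩
  · rw [e14]; exact ⟨xT1, xT4⟩
  · rw [e23]; exact ⟨xT2, xT3⟩
  · rw [e24]; exact ⟨xT2, xT4⟩
  · rw [e34]; exact ⟨xT3, xT4⟩
end

section
/- Let X be a type and F : X⁷ → X a map (an abstract 3D system: it computes the value at the top vertex of a combinatorial 3-cube from the values at the other seven vertices, the arguments ordered as (f, f₁, f₂, f₃, f₁₂, f₁₃, f₂₃) with respect to an ordered triple of directions). For m ≥ 3 call F m-dimensionally consistent if for every assignment a of values in X to the vertices of the cube {0,1}ᵐ having at most two coordinates equal to 1, there exists an extension b : {0,1}ᵐ → X of a such that for every 3-dimensional face of the cube (determined by an increasing triple of free directions i < j < k and fixed values of the remaining coordinates), the value of b at the top vertex of that face equals F applied to the values of b at the other seven vertices of the face, ordered as above with respect to (i, j, k). Theorem: if F is 4-dimensionally consistent, then F is m-dimensionally consistent for every m ≥ 4. -/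
/-- The vertex of the cube `{0,1}ᵐ` obtained from `v` by setting coordinate `i` to `1`. -/
def cubeShift {m : ℕ} (v : Fin m → Bool) (i : Fin m) : Fin m → Bool :=
  Function.update v i true

/-- An abstract discrete 3D system `F` (computing the value at the top vertex of a
combinatorial 3-cube from the values at the other seven vertices, the arguments being
ordered as `(f, f₁, f₂, f₃, f₁₂, f₁₃, f₂₃)` with respect to an ordered triple of
directions) is `m`-dimensionally consistent if every assignment of values to the
vertices of `{0,1}ᵐ` having at most two coordinates equal to `1` extends to the whole
cube so that the equation of the system holds on every 3-dimensional face. -/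
def IsConsistent {X : Type*} (F : X → X → X → X → X → X → X → X) (m : ℕ) : Prop :=
  ∀ a : (Fin m → Bool) → X,
    ∃ b : (Fin m → Bool) → X,
      (∀ v : Fin m → Bool,
          (Finset.univ.filter fun i => v i = true).card ≤ 2 → b v = a v) ∧
      (∀ i j k : Fin m, i < j → j < k → ∀ v : Fin m → Bool,
          v i = false → v j = false → v k = false →
          b (cubeShift (cubeShift (cubeShift v i) j) k) =
            F (b v) (b (cubeShift v i)) (b (cubeShift v j)) (b (cubeShift v k))
              (b (cubeShift (cubeShift v i) j)) (b (cubeShift (cubeShift v i) k))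
              (b (cubeShift (cubeShift v j) k)))

set_option linter.unusedSectionVars false

namespace ABS

variable {X : Type*}


/-- set coordinate `i` to `0`. -/
def clr {d : ℕ} (v : Fin d → Bool) (i : Fin d) : Fin d → Bool := Function.update v i false

/-- number of coordinates equal to `1`. -/
def wt {d : ℕ} (v : Fin d → Bool) : ℕ := (Finset.univ.filter fun i => v i = true).card

lemma mem_wtset {d : ℕ} {v : Fin d → Bool} {t : Fin d} :
    t ∈ (Finset.univ.filter fun i => v i = true) ↔ v t = true := by
  simp

lemma wt_clr_le {d : ℕ} (u : Fin d → Bool) (i : Fin d) : wt (clr u i) ≤ wt u := by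
  apply Finset.card_le_card
  intro t ht
  rw [mem_wtset] at *
  by_cases h : t = i
  · subst h; simp [clr] at ht
  · rwa [clr, Function.update_of_ne h] at ht

lemma wt_clr_lt {d : ℕ} (u : Fin d → Bool) (i : Fin d) (h : u i = true) :
    wt (clr u i) < wt u := by
  apply Finset.card_lt_card
  rw [Finset.ssubset_iff_of_subset]
  · exact ⟨i, mem_wtset.mpr h, by rw [mem_wtset]; simp [clr]⟩
  · intro t ht
    rw [mem_wtset] at *
    by_cases h' : t = i
    · subst h'; simp [clr] at ht
    · rwa [clr, Function.update_of_ne h'] at ht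

lemma exists_sorted_three {d : ℕ} (s : Finset (Fin d)) (h : 3 ≤ s.card) :
    ∃ c1 c2 c3 : Fin d, c1 < c2 ∧ c2 < c3 ∧ c1 ∈ s ∧ c2 ∈ s ∧ c3 ∈ s := by
  have h1 : s.Nonempty := Finset.card_pos.mp (by omega)
  set c1 := s.min' h1 with hc1def
  have hc1 : c1 ∈ s := s.min'_mem h1
  have h2 : (s.erase c1).Nonempty := Finset.card_pos.mp (by
    rw [Finset.card_erase_of_mem hc1]; omega)
  set c2 := (s.erase c1).min' h2 with hc2def
  have hc2' : c2 ∈ s.erase c1 := Finset.min'_mem _ _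
  have hc2 : c2 ∈ s := Finset.mem_of_mem_erase hc2'
  have h12 : c1 < c2 :=
    lt_of_le_of_ne (s.min'_le c2 hc2) (Ne.symm (Finset.ne_of_mem_erase hc2'))
  have h3 : ((s.erase c1).erase c2).Nonempty := Finset.card_pos.mp (by
    rw [Finset.card_erase_of_mem hc2', Finset.card_erase_of_mem hc1]; omega)
  set c3 := ((s.erase c1).erase c2).min' h3 with hc3def
  have hc3' : c3 ∈ (s.erase c1).erase c2 := Finset.min'_mem _ _
  have hc3'' : c3 ∈ s.erase c1 := Finset.mem_of_mem_erase hc3'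
  have hc3 : c3 ∈ s := Finset.mem_of_mem_erase hc3''
  have h23 : c2 < c3 :=
    lt_of_le_of_ne ((s.erase c1).min'_le c3 hc3'') (Ne.symm (Finset.ne_of_mem_erase hc3'))
  exact ⟨c1, c2, c3, h12, h23, hc1, hc2, hc3⟩

lemma card3 {d : ℕ} {i j k : Fin d} (hij : i < j) (hjk : j < k) :
    ({i, j, k} : Finset (Fin d)).card = 3 := by
  rw [Finset.card_insert_of_notMem (by
      simp only [Finset.mem_insert, Finset.mem_singleton]
      push_neg
      exact ⟨ne_of_lt hij, ne_of_lt (hij.trans hjk)⟩),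
    Finset.card_insert_of_notMem (by simp [ne_of_lt hjk]),
    Finset.card_singleton]

lemma nat3 {i j k p q r : ℕ} (hij : i < j) (hjk : j < k) (hpq : p < q) (hqr : q < r)
    (hi : i = p ∨ i = q ∨ i = r) (hj : j = p ∨ j = q ∨ j = r)
    (hk : k = p ∨ k = q ∨ k = r) : i = p ∧ j = q ∧ k = r := by
  rcases hi with rfl|rfl|rfl <;> rcases hj with rfl|rfl|rfl <;>
    rcases hk with rfl|rfl|rfl <;> omega

lemma fin3 {d : ℕ} {i j k p q r : Fin d} (hij : i < j) (hjk : j < k) (hpq : p < q)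
    (hqr : q < r) (hi : i = p ∨ i = q ∨ i = r) (hj : j = p ∨ j = q ∨ j = r)
    (hk : k = p ∨ k = q ∨ k = r) : i = p ∧ j = q ∧ k = r := by
  have hi' : i.val = p.val ∨ i.val = q.val ∨ i.val = r.val := by
    rcases hi with rfl|rfl|rfl <;> simp
  have hj' : j.val = p.val ∨ j.val = q.val ∨ j.val = r.val := by
    rcases hj with rfl|rfl|rfl <;> simp
  have hk' : k.val = p.val ∨ k.val = q.val ∨ k.val = r.val := by
    rcases hk with rfl|rfl|rfl <;> simp
  obtain ⟨e1, e2, e3⟩ := nat3 hij hjk hpq hqr hi' hj' hk'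
  exact ⟨Fin.ext e1, Fin.ext e2, Fin.ext e3⟩

lemma fin4_triples : ∀ c1 c2 c3 : Fin 4, c1 < c2 → c2 < c3 →
    (c1 = 0 ∧ c2 = 1 ∧ c3 = 2) ∨ (c1 = 0 ∧ c2 = 1 ∧ c3 = 3) ∨
    (c1 = 0 ∧ c2 = 2 ∧ c3 = 3) ∨ (c1 = 1 ∧ c2 = 2 ∧ c3 = 3) := by decide

lemma wt_top4 : wt (fun _ : Fin 4 => true) = 4 := by decide

lemma exists_false_of_wt_le3 : ∀ w : Fin 4 → Bool, wt w ≤ 3 → ∃ l, w l = false := by decide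


/-- face equation at a top vertex, for any function satisfying all face equations. -/
lemma face_eq {d : ℕ} (F : X → X → X → X → X → X → X → X) (g : (Fin d → Bool) → X)
    (heq : ∀ i j k : Fin d, i < j → j < k → ∀ w : Fin d → Bool,
      w i = false → w j = false → w k = false →
      g (cubeShift (cubeShift (cubeShift w i) j) k) =
        F (g w) (g (cubeShift w i)) (g (cubeShift w j)) (g (cubeShift w k))
          (g (cubeShift (cubeShift w i) j)) (g (cubeShift (cubeShift w i) k))
          (g (cubeShift (cubeShift w j) k)))
    (w : Fin d → Bool) (c1 c2 c3 : Fin d) (h12 : c1 < c2) (h23 : c2 < c3)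
    (t1 : w c1 = true) (t2 : w c2 = true) (t3 : w c3 = true) :
    g w = F (g (clr (clr (clr w c1) c2) c3)) (g (clr (clr w c2) c3))
      (g (clr (clr w c1) c3)) (g (clr (clr w c1) c2))
      (g (clr w c3)) (g (clr w c2)) (g (clr w c1)) := by
  have n12 : c1 ≠ c2 := ne_of_lt h12
  have n13 : c1 ≠ c3 := ne_of_lt (h12.trans h23)
  have n23 : c2 ≠ c3 := ne_of_lt h23
  have f1 : (clr (clr (clr w c1) c2) c3) c1 = false := by
    simp [clr, Function.update_apply, n12, n13]
  have f2 : (clr (clr (clr w c1) c2) c3) c2 = false := by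
    simp [clr, Function.update_apply, n23]
  have f3 : (clr (clr (clr w c1) c2) c3) c3 = false := by
    simp [clr, Function.update_apply]
  have E := heq c1 c2 c3 h12 h23 _ f1 f2 f3
  have I1 : cubeShift (cubeShift (cubeShift (clr (clr (clr w c1) c2) c3) c1) c2) c3 = w := by
    funext t
    simp only [cubeShift, clr, Function.update_apply]
    split_ifs <;> simp_all
  have I2 : cubeShift (clr (clr (clr w c1) c2) c3) c1 = clr (clr w c2) c3 := by
    funext t
    simp only [cubeShift, clr, Function.update_apply]
    split_ifs <;> simp_all
  have I3 : cubeShift (clr (clr (clr w c1) c2) c3) c2 = clr (clr w c1) c3 := by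
    funext t
    simp only [cubeShift, clr, Function.update_apply]
    split_ifs <;> simp_all
  have I4 : cubeShift (clr (clr (clr w c1) c2) c3) c3 = clr (clr w c1) c2 := by
    funext t
    simp only [cubeShift, clr, Function.update_apply]
    split_ifs <;> simp_all
  have I5 : cubeShift (cubeShift (clr (clr (clr w c1) c2) c3) c1) c2 = clr w c3 := by
    funext t
    simp only [cubeShift, clr, Function.update_apply]
    split_ifs <;> simp_all
  have I6 : cubeShift (cubeShift (clr (clr (clr w c1) c2) c3) c1) c3 = clr w c2 := by
    funext t
    simp only [cubeShift, clr, Function.update_apply]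
    split_ifs <;> simp_all
  have I7 : cubeShift (cubeShift (clr (clr (clr w c1) c2) c3) c2) c3 = clr w c1 := by
    funext t
    simp only [cubeShift, clr, Function.update_apply]
    split_ifs <;> simp_all
  rw [I1, I5, I6, I7, I2, I3, I4] at E
  exact E


variable {m : ℕ}

/-- embedding of the 4-cube spanned by directions `p,q,r,s` at the base point obtained
from `v` by clearing those coordinates. -/
def emb (v : Fin m → Bool) (p q r s : Fin m) (w : Fin 4 → Bool) : Fin m → Bool :=
  fun t => if t = p then w 0 else if t = q then w 1 else if t = r then w 2
    else if t = s then w 3 else v t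

section embLemmas

variable {v : Fin m → Bool} {p q r s : Fin m}
  (hpq : p < q) (hqr : q < r) (hrs : r < s)
  (hp : v p = true) (hq : v q = true) (hr : v r = true) (hs : v s = true)

include hpq hqr hrs

lemma emb_clr0 : ∀ x : Fin 4 → Bool, emb v p q r s (clr x 0) = clr (emb v p q r s x) p := by
  have n1 : q ≠ p := ne_of_gt hpq
  have n2 : r ≠ p := ne_of_gt (hpq.trans hqr)
  have n3 : s ≠ p := ne_of_gt ((hpq.trans hqr).trans hrs)
  intro x
  funext t
  simp only [emb, clr, Function.update_apply]
  split_ifs <;> simp_all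

lemma emb_clr1 : ∀ x : Fin 4 → Bool, emb v p q r s (clr x 1) = clr (emb v p q r s x) q := by
  have n1 : q ≠ p := ne_of_gt hpq
  have n2 : r ≠ q := ne_of_gt hqr
  have n3 : s ≠ q := ne_of_gt (hqr.trans hrs)
  intro x
  funext t
  simp only [emb, clr, Function.update_apply]
  split_ifs <;> simp_all

lemma emb_clr2 : ∀ x : Fin 4 → Bool, emb v p q r s (clr x 2) = clr (emb v p q r s x) r := by
  have n1 : r ≠ p := ne_of_gt (hpq.trans hqr)
  have n2 : r ≠ q := ne_of_gt hqr
  have n3 : s ≠ r := ne_of_gt hrs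
  intro x
  funext t
  simp only [emb, clr, Function.update_apply]
  split_ifs <;> simp_all

lemma emb_clr3 : ∀ x : Fin 4 → Bool, emb v p q r s (clr x 3) = clr (emb v p q r s x) s := by
  have n1 : s ≠ p := ne_of_gt ((hpq.trans hqr).trans hrs)
  have n2 : s ≠ q := ne_of_gt (hqr.trans hrs)
  have n3 : s ≠ r := ne_of_gt hrs
  intro x
  funext t
  simp only [emb, clr, Function.update_apply]
  split_ifs <;> simp_all

lemma emb_tr0 : ∀ x : Fin 4 → Bool, x 0 = true → emb v p q r s x p = true := by
  intro x hx; simp [emb, hx]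

lemma emb_tr1 : ∀ x : Fin 4 → Bool, x 1 = true → emb v p q r s x q = true := by
  have n1 : q ≠ p := ne_of_gt hpq
  intro x hx; simp [emb, hx, n1]

lemma emb_tr2 : ∀ x : Fin 4 → Bool, x 2 = true → emb v p q r s x r = true := by
  have n1 : r ≠ p := ne_of_gt (hpq.trans hqr)
  have n2 : r ≠ q := ne_of_gt hqr
  intro x hx; simp [emb, hx, n1, n2]

lemma emb_tr3 : ∀ x : Fin 4 → Bool, x 3 = true → emb v p q r s x s = true := by
  have n1 : s ≠ p := ne_of_gt ((hpq.trans hqr).trans hrs)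
  have n2 : s ≠ q := ne_of_gt (hqr.trans hrs)
  have n3 : s ≠ r := ne_of_gt hrs
  intro x hx; simp [emb, hx, n1, n2, n3]

include hp hq hr hs

lemma emb_top : emb v p q r s (fun _ => true) = v := by
  funext t
  simp only [emb]
  split_ifs <;> simp_all

lemma emb_wt_lt : ∀ x : Fin 4 → Bool, (∃ l, x l = false) → wt (emb v p q r s x) < wt v := by
  intro x ⟨l, hl⟩
  apply Finset.card_lt_card
  have hsub : (Finset.univ.filter fun t => emb v p q r s x t = true) ⊆
      (Finset.univ.filter fun t => v t = true) := by
    intro t ht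
    simp only [Finset.mem_filter, Finset.mem_univ, true_and] at *
    simp only [emb] at ht
    split_ifs at ht <;> simp_all
  rw [Finset.ssubset_iff_of_subset hsub]
  fin_cases l
  · exact ⟨p, by simp [hp], by simp [emb]; exact hl⟩
  · have n1 : q ≠ p := ne_of_gt hpq
    exact ⟨q, by simp [hq], by simp [emb, n1]; exact hl⟩
  · have n1 : r ≠ p := ne_of_gt (hpq.trans hqr)
    have n2 : r ≠ q := ne_of_gt hqr
    exact ⟨r, by simp [hr], by simp [emb, n1, n2]; exact hl⟩
  · have n1 : s ≠ p := ne_of_gt ((hpq.trans hqr).trans hrs)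
    have n2 : s ≠ q := ne_of_gt (hqr.trans hrs)
    have n3 : s ≠ r := ne_of_gt hrs
    exact ⟨s, by simp [hs], by simp [emb, n1, n2, n3]; exact hl⟩

end embLemmas

/-- there is a sorted triple of `1`-coordinates. -/
def hasTrip {d : ℕ} (v : Fin d → Bool) : Prop :=
  ∃ t : Fin d × Fin d × Fin d, t.1 < t.2.1 ∧ t.2.1 < t.2.2 ∧
    v t.1 = true ∧ v t.2.1 = true ∧ v t.2.2 = true

lemma hasTrip_wt {d : ℕ} {v : Fin d → Bool} (h : hasTrip v) : 3 ≤ wt v := by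
  obtain ⟨⟨i, j, k⟩, hij, hjk, hi, hj, hk⟩ := h
  have hsub : ({i, j, k} : Finset (Fin d)) ⊆ Finset.univ.filter fun t => v t = true := by
    intro t ht
    simp only [Finset.mem_insert, Finset.mem_singleton] at ht
    rcases ht with rfl|rfl|rfl <;> simp [hi, hj, hk]
  calc 3 = ({i, j, k} : Finset (Fin d)).card := (card3 hij hjk).symm
    _ ≤ _ := Finset.card_le_card hsub

variable {m : ℕ}

open Classical in
noncomputable def go (F : X → X → X → X → X → X → X → X) (a : (Fin m → Bool) → X) :
    ℕ → (Fin m → Bool) → X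
  | 0, v => a v
  | n+1, v =>
    if h : hasTrip v then
      F (go F a n (clr (clr (clr v h.choose.1) h.choose.2.1) h.choose.2.2))
        (go F a n (clr (clr v h.choose.2.1) h.choose.2.2))
        (go F a n (clr (clr v h.choose.1) h.choose.2.2))
        (go F a n (clr (clr v h.choose.1) h.choose.2.1))
        (go F a n (clr v h.choose.2.2))
        (go F a n (clr v h.choose.2.1))
        (go F a n (clr v h.choose.1))
    else a v

noncomputable def b (F : X → X → X → X → X → X → X → X) (a : (Fin m → Bool) → X)
    (v : Fin m → Bool) : X := go F a (wt v) v

variable (F : X → X → X → X → X → X → X → X) (a : (Fin m → Bool) → X)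

/-- the system holds at `v` (top vertex) w.r.t. the ordered triple `i < j < k`. -/
def Val (v : Fin m → Bool) (i j k : Fin m) : Prop :=
  b F a v = F (b F a (clr (clr (clr v i) j) k)) (b F a (clr (clr v j) k))
    (b F a (clr (clr v i) k)) (b F a (clr (clr v i) j))
    (b F a (clr v k)) (b F a (clr v j)) (b F a (clr v i))

lemma go_stab : ∀ n (v : Fin m → Bool), wt v ≤ n → go F a n v = go F a (wt v) v := by
  intro n
  induction n using Nat.strong_induction_on with
  | _ n IH =>
    intro v hv
    cases n with
    | zero =>
      have h0 : wt v = 0 := by omega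
      rw [h0]
    | succ n' =>
      rcases Nat.eq_or_lt_of_le hv with heq | hlt
      · rw [heq]
      · have hle : wt v ≤ n' := by omega
        by_cases h : hasTrip v
        · have h3 : 3 ≤ wt v := hasTrip_wt h
          obtain ⟨w', hw'⟩ : ∃ w', wt v = w' + 1 := ⟨wt v - 1, by omega⟩
          obtain ⟨hij, hjk, hi, hj, hk⟩ := h.choose_spec
          have d1 : wt (clr (clr (clr v h.choose.1) h.choose.2.1) h.choose.2.2) < wt v :=
            lt_of_le_of_lt (le_trans (wt_clr_le _ _) (wt_clr_le _ _)) (wt_clr_lt _ _ hi)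
          have d2 : wt (clr (clr v h.choose.2.1) h.choose.2.2) < wt v :=
            lt_of_le_of_lt (wt_clr_le _ _) (wt_clr_lt _ _ hj)
          have d3 : wt (clr (clr v h.choose.1) h.choose.2.2) < wt v :=
            lt_of_le_of_lt (wt_clr_le _ _) (wt_clr_lt _ _ hi)
          have d4 : wt (clr (clr v h.choose.1) h.choose.2.1) < wt v :=
            lt_of_le_of_lt (wt_clr_le _ _) (wt_clr_lt _ _ hi)
          have d5 : wt (clr v h.choose.2.2) < wt v := wt_clr_lt _ _ hk
          have d6 : wt (clr v h.choose.2.1) < wt v := wt_clr_lt _ _ hj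
          have d7 : wt (clr v h.choose.1) < wt v := wt_clr_lt _ _ hi
          rw [hw']
          simp only [go]
          rw [dif_pos h, dif_pos h]
          rw [IH n' (by omega) _ (by omega), IH w' (by omega) _ (by omega)]
          rw [IH n' (by omega) (clr (clr v h.choose.2.1) h.choose.2.2) (by omega), IH w' (by omega) (clr (clr v h.choose.2.1) h.choose.2.2) (by omega)]
          rw [IH n' (by omega) (clr (clr v h.choose.1) h.choose.2.2) (by omega), IH w' (by omega) (clr (clr v h.choose.1) h.choose.2.2) (by omega)]
          rw [IH n' (by omega) (clr (clr v h.choose.1) h.choose.2.1) (by omega), IH w' (by omega) (clr (clr v h.choose.1) h.choose.2.1) (by omega)]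
          rw [IH n' (by omega) (clr v h.choose.2.2) (by omega), IH w' (by omega) (clr v h.choose.2.2) (by omega)]
          rw [IH n' (by omega) (clr v h.choose.2.1) (by omega), IH w' (by omega) (clr v h.choose.2.1) (by omega)]
          rw [IH n' (by omega) (clr v h.choose.1) (by omega), IH w' (by omega) (clr v h.choose.1) (by omega)]
        · have hwv : go F a (wt v) v = a v := by
            rcases hn : wt v with _ | w'
            · rfl
            · simp only [go]; rw [dif_neg h]
          simp only [go]
          rw [dif_neg h, hwv]

lemma b_low (v : Fin m → Bool) (h : wt v ≤ 2) : b F a v = a v := by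
  have hnt : ¬ hasTrip v := fun ht => by have := hasTrip_wt ht; omega
  rcases hn : wt v with _ | w'
  · rw [b, hn]; rfl
  · rw [b, hn]; simp only [go]; rw [dif_neg hnt]

lemma b_def (v : Fin m → Bool) (h : hasTrip v) :
    ∃ i j k : Fin m, i < j ∧ j < k ∧ v i = true ∧ v j = true ∧ v k = true ∧
      Val F a v i j k := by
  obtain ⟨hij, hjk, hi, hj, hk⟩ := h.choose_spec
  refine ⟨h.choose.1, h.choose.2.1, h.choose.2.2, hij, hjk, hi, hj, hk, ?_⟩
  have h3 : 3 ≤ wt v := hasTrip_wt h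
  obtain ⟨w', hw'⟩ : ∃ w', wt v = w' + 1 := ⟨wt v - 1, by omega⟩
  have d1 : wt (clr (clr (clr v h.choose.1) h.choose.2.1) h.choose.2.2) < wt v :=
    lt_of_le_of_lt (le_trans (wt_clr_le _ _) (wt_clr_le _ _)) (wt_clr_lt _ _ hi)
  have d2 : wt (clr (clr v h.choose.2.1) h.choose.2.2) < wt v :=
    lt_of_le_of_lt (wt_clr_le _ _) (wt_clr_lt _ _ hj)
  have d3 : wt (clr (clr v h.choose.1) h.choose.2.2) < wt v :=
    lt_of_le_of_lt (wt_clr_le _ _) (wt_clr_lt _ _ hi)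
  have d4 : wt (clr (clr v h.choose.1) h.choose.2.1) < wt v :=
    lt_of_le_of_lt (wt_clr_le _ _) (wt_clr_lt _ _ hi)
  have d5 : wt (clr v h.choose.2.2) < wt v := wt_clr_lt _ _ hk
  have d6 : wt (clr v h.choose.2.1) < wt v := wt_clr_lt _ _ hj
  have d7 : wt (clr v h.choose.1) < wt v := wt_clr_lt _ _ hi
  show b F a v = _
  rw [b, hw']
  simp only [go]
  rw [dif_pos h]
  rw [go_stab F a w' _ (by omega), go_stab F a w' (clr (clr v h.choose.2.1) h.choose.2.2) (by omega),
    go_stab F a w' (clr (clr v h.choose.1) h.choose.2.2) (by omega), go_stab F a w' (clr (clr v h.choose.1) h.choose.2.1) (by omega),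
    go_stab F a w' (clr v h.choose.2.2) (by omega), go_stab F a w' (clr v h.choose.2.1) (by omega),
    go_stab F a w' (clr v h.choose.1) (by omega)]
  rfl


section FaceAB

variable (v : Fin m → Bool) (E : (Fin 4 → Bool) → (Fin m → Bool))
  (g : (Fin 4 → Bool) → X)

lemma faceA
    (hag : ∀ w : Fin 4 → Bool, wt w ≤ 2 → g w = b F a (E w))
    (heq : ∀ i j k : Fin 4, i < j → j < k → ∀ w : Fin 4 → Bool,
      w i = false → w j = false → w k = false →
      g (cubeShift (cubeShift (cubeShift w i) j) k) =
        F (g w) (g (cubeShift w i)) (g (cubeShift w j)) (g (cubeShift w k))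
          (g (cubeShift (cubeShift w i) j)) (g (cubeShift (cubeShift w i) k))
          (g (cubeShift (cubeShift w j) k)))
    (IH : ∀ u : Fin m → Bool, wt u < wt v → ∀ x y z : Fin m, x < y → y < z →
      u x = true → u y = true → u z = true → Val F a u x y z)
    (hwlt : ∀ w : Fin 4 → Bool, (∃ l, w l = false) → wt (E w) < wt v)
    (c1 c2 c3 : Fin 4) (h12 : c1 < c2) (h23 : c2 < c3)
    (e1 e2 e3 : Fin m) (g12 : e1 < e2) (g23 : e2 < e3)
    (cp1 : ∀ x : Fin 4 → Bool, E (clr x c1) = clr (E x) e1)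
    (cp2 : ∀ x : Fin 4 → Bool, E (clr x c2) = clr (E x) e2)
    (cp3 : ∀ x : Fin 4 → Bool, E (clr x c3) = clr (E x) e3)
    (tr1 : ∀ x : Fin 4 → Bool, x c1 = true → E x e1 = true)
    (tr2 : ∀ x : Fin 4 → Bool, x c2 = true → E x e2 = true)
    (tr3 : ∀ x : Fin 4 → Bool, x c3 = true → E x e3 = true)
    (w : Fin 4 → Bool) (hw : wt w = 3)
    (t1 : w c1 = true) (t2 : w c2 = true) (t3 : w c3 = true) :
    g w = b F a (E w) := by
  have face := face_eq F g heq w c1 c2 c3 h12 h23 t1 t2 t3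
  have u1 := wt_clr_lt w c1 t1
  have u2 := wt_clr_lt w c2 t2
  have u3 := wt_clr_lt w c3 t3
  have l21 := wt_clr_le (clr w c1) c2
  have l31 := wt_clr_le (clr w c1) c3
  have l32 := wt_clr_le (clr w c2) c3
  have l321 := wt_clr_le (clr (clr w c1) c2) c3
  have A0 : g (clr (clr (clr w c1) c2) c3) = b F a (clr (clr (clr (E w) e1) e2) e3) := by
    rw [hag _ (by omega), cp3, cp2, cp1]
  have A1 : g (clr (clr w c2) c3) = b F a (clr (clr (E w) e2) e3) := by
    rw [hag _ (by omega), cp3, cp2]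
  have A2 : g (clr (clr w c1) c3) = b F a (clr (clr (E w) e1) e3) := by
    rw [hag _ (by omega), cp3, cp1]
  have A3 : g (clr (clr w c1) c2) = b F a (clr (clr (E w) e1) e2) := by
    rw [hag _ (by omega), cp2, cp1]
  have A12 : g (clr w c3) = b F a (clr (E w) e3) := by
    rw [hag _ (by omega), cp3]
  have A13 : g (clr w c2) = b F a (clr (E w) e2) := by
    rw [hag _ (by omega), cp2]
  have A23 : g (clr w c1) = b F a (clr (E w) e1) := by
    rw [hag _ (by omega), cp1]
  have hVal : Val F a (E w) e1 e2 e3 :=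
    IH (E w) (hwlt w (exists_false_of_wt_le3 w (by omega))) e1 e2 e3 g12 g23
      (tr1 w t1) (tr2 w t2) (tr3 w t3)
  rw [face, A0, A1, A2, A3, A12, A13, A23]
  exact hVal.symm

lemma faceB
    (heq : ∀ i j k : Fin 4, i < j → j < k → ∀ w : Fin 4 → Bool,
      w i = false → w j = false → w k = false →
      g (cubeShift (cubeShift (cubeShift w i) j) k) =
        F (g w) (g (cubeShift w i)) (g (cubeShift w j)) (g (cubeShift w k))
          (g (cubeShift (cubeShift w i) j)) (g (cubeShift (cubeShift w i) k))
          (g (cubeShift (cubeShift w j) k)))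
    (hA : ∀ w : Fin 4 → Bool, wt w ≤ 3 → g w = b F a (E w))
    (hEtop : E (fun _ => true) = v)
    (c1 c2 c3 : Fin 4) (h12 : c1 < c2) (h23 : c2 < c3)
    (e1 e2 e3 : Fin m)
    (cp1 : ∀ x : Fin 4 → Bool, E (clr x c1) = clr (E x) e1)
    (cp2 : ∀ x : Fin 4 → Bool, E (clr x c2) = clr (E x) e2)
    (cp3 : ∀ x : Fin 4 → Bool, E (clr x c3) = clr (E x) e3) :
    g (fun _ => true) = F (b F a (clr (clr (clr v e1) e2) e3)) (b F a (clr (clr v e2) e3))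
      (b F a (clr (clr v e1) e3)) (b F a (clr (clr v e1) e2))
      (b F a (clr v e3)) (b F a (clr v e2)) (b F a (clr v e1)) := by
  have face := face_eq F g heq (fun _ => true) c1 c2 c3 h12 h23 rfl rfl rfl
  have u1 := wt_clr_lt (fun _ : Fin 4 => true) c1 rfl
  have u2 := wt_clr_lt (fun _ : Fin 4 => true) c2 rfl
  have u3 := wt_clr_lt (fun _ : Fin 4 => true) c3 rfl
  have l21 := wt_clr_le (clr (fun _ : Fin 4 => true) c1) c2
  have l31 := wt_clr_le (clr (fun _ : Fin 4 => true) c1) c3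
  have l32 := wt_clr_le (clr (fun _ : Fin 4 => true) c2) c3
  have l321 := wt_clr_le (clr (clr (fun _ : Fin 4 => true) c1) c2) c3
  have h4top := wt_top4
  have A0 : g (clr (clr (clr (fun _ => true) c1) c2) c3) = b F a (clr (clr (clr v e1) e2) e3) := by
    rw [hA _ (by omega), cp3, cp2, cp1, hEtop]
  have A1 : g (clr (clr (fun _ => true) c2) c3) = b F a (clr (clr v e2) e3) := by
    rw [hA _ (by omega), cp3, cp2, hEtop]
  have A2 : g (clr (clr (fun _ => true) c1) c3) = b F a (clr (clr v e1) e3) := by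
    rw [hA _ (by omega), cp3, cp1, hEtop]
  have A3 : g (clr (clr (fun _ => true) c1) c2) = b F a (clr (clr v e1) e2) := by
    rw [hA _ (by omega), cp2, cp1, hEtop]
  have A12 : g (clr (fun _ => true) c3) = b F a (clr v e3) := by
    rw [hA _ (by omega), cp3, hEtop]
  have A13 : g (clr (fun _ => true) c2) = b F a (clr v e2) := by
    rw [hA _ (by omega), cp2, hEtop]
  have A23 : g (clr (fun _ => true) c1) = b F a (clr v e1) := by
    rw [hA _ (by omega), cp1, hEtop]
  rw [face, A0, A1, A2, A3, A12, A13, A23]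

end FaceAB



lemma step (h4 : IsConsistent F 4) (v : Fin m → Bool)
    (IH : ∀ u : Fin m → Bool, wt u < wt v → ∀ x y z : Fin m, x < y → y < z →
      u x = true → u y = true → u z = true → Val F a u x y z)
    (p q r s : Fin m) (hpq : p < q) (hqr : q < r) (hrs : r < s)
    (hp : v p = true) (hq : v q = true) (hr : v r = true) (hs : v s = true)
    (h0 : Val F a v p q r ∨ Val F a v p q s ∨ Val F a v p r s ∨ Val F a v q r s) :
    Val F a v p q r ∧ Val F a v p q s ∧ Val F a v p r s ∧ Val F a v q r s := by
  obtain ⟨g, hag, heq⟩ := h4 (fun w => b F a (emb v p q r s w))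
  set E := emb v p q r s with hE
  have hag' : ∀ w : Fin 4 → Bool, wt w ≤ 2 → g w = b F a (E w) := fun w hw => hag w hw
  have hwlt := emb_wt_lt hpq hqr hrs hp hq hr hs
  have cp0 := emb_clr0 (v := v) hpq hqr hrs
  have cp1 := emb_clr1 (v := v) hpq hqr hrs
  have cp2 := emb_clr2 (v := v) hpq hqr hrs
  have cp3 := emb_clr3 (v := v) hpq hqr hrs
  have tr0 := emb_tr0 (v := v) hpq hqr hrs
  have tr1 := emb_tr1 (v := v) hpq hqr hrs
  have tr2 := emb_tr2 (v := v) hpq hqr hrs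
  have tr3 := emb_tr3 (v := v) hpq hqr hrs
  have htop := emb_top hpq hqr hrs hp hq hr hs
  have hA : ∀ w : Fin 4 → Bool, wt w ≤ 3 → g w = b F a (E w) := by
    intro w hw
    rcases Nat.lt_or_ge (wt w) 3 with h2 | h3
    · exact hag' w (by omega)
    · have hw3 : wt w = 3 := by omega
      obtain ⟨c1, c2, c3, h12, h23, m1, m2, m3⟩ :=
        exists_sorted_three (Finset.univ.filter fun i => w i = true) (by rw [← wt]; omega)
      simp only [Finset.mem_filter, Finset.mem_univ, true_and] at m1 m2 m3
      rcases fin4_triples c1 c2 c3 h12 h23 with ⟨rfl, rfl, rfl⟩ | ⟨rfl, rfl, rfl⟩ |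
        ⟨rfl, rfl, rfl⟩ | ⟨rfl, rfl, rfl⟩
      · exact faceA F a v E g hag' heq IH hwlt 0 1 2 (by decide) (by decide)
          p q r hpq hqr cp0 cp1 cp2 tr0 tr1 tr2 w hw3 m1 m2 m3
      · exact faceA F a v E g hag' heq IH hwlt 0 1 3 (by decide) (by decide)
          p q s hpq (hqr.trans hrs) cp0 cp1 cp3 tr0 tr1 tr3 w hw3 m1 m2 m3
      · exact faceA F a v E g hag' heq IH hwlt 0 2 3 (by decide) (by decide)
          p r s (hpq.trans hqr) hrs cp0 cp2 cp3 tr0 tr2 tr3 w hw3 m1 m2 m3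
      · exact faceA F a v E g hag' heq IH hwlt 1 2 3 (by decide) (by decide)
          q r s hqr hrs cp1 cp2 cp3 tr1 tr2 tr3 w hw3 m1 m2 m3
  have B1 := faceB F a v E g heq hA htop 0 1 2 (by decide) (by decide) p q r cp0 cp1 cp2
  have B2 := faceB F a v E g heq hA htop 0 1 3 (by decide) (by decide) p q s cp0 cp1 cp3
  have B3 := faceB F a v E g heq hA htop 0 2 3 (by decide) (by decide) p r s cp0 cp2 cp3
  have B4 := faceB F a v E g heq hA htop 1 2 3 (by decide) (by decide) q r s cp1 cp2 cp3
  have hb : b F a v = g (fun _ => true) := by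
    rcases h0 with h | h | h | h
    · exact h.trans B1.symm
    · exact h.trans B2.symm
    · exact h.trans B3.symm
    · exact h.trans B4.symm
  exact ⟨hb.trans B1, hb.trans B2, hb.trans B3, hb.trans B4⟩


lemma delta_lt {i j k p q r t c x y z : Fin m}
    (hmem : ∀ w : Fin m, (w = x ∨ w = y ∨ w = z) ↔
      (w = t ∨ ((w = p ∨ w = q ∨ w = r) ∧ w ≠ c)))
    (ht1 : t = i ∨ t = j ∨ t = k)
    (ht2 : ¬(t = p ∨ t = q ∨ t = r))
    (hc : ¬(c = i ∨ c = j ∨ c = k)) :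
    (({i, j, k} : Finset (Fin m)) \ {x, y, z}).card <
      (({i, j, k} : Finset (Fin m)) \ {p, q, r}).card := by
  apply Finset.card_lt_card
  rw [Finset.ssubset_iff_of_subset]
  · refine ⟨t, ?_, ?_⟩
    · simp only [Finset.mem_sdiff, Finset.mem_insert, Finset.mem_singleton]
      exact ⟨ht1, ht2⟩
    · simp only [Finset.mem_sdiff, Finset.mem_insert, Finset.mem_singleton]
      intro hcon
      exact hcon.2 ((hmem t).mpr (Or.inl rfl))
  · intro w hw
    simp only [Finset.mem_sdiff, Finset.mem_insert, Finset.mem_singleton] at hw ⊢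
    refine ⟨hw.1, fun hpqr => hw.2 ?_⟩
    have hwc : w ≠ c := by
      rintro rfl
      exact hc hw.1
    exact (hmem w).mpr (Or.inr ⟨hpqr, hwc⟩)

lemma main (h4 : IsConsistent F 4) :
    ∀ (v : Fin m → Bool) (i j k : Fin m), i < j → j < k →
      v i = true → v j = true → v k = true → Val F a v i j k := by
  suffices H : ∀ (n : ℕ) (v : Fin m → Bool), wt v ≤ n → ∀ i j k : Fin m, i < j → j < k →
      v i = true → v j = true → v k = true → Val F a v i j k by
    exact fun v i j k hij hjk hi hj hk => H (wt v) v le_rfl i j k hij hjk hi hj hk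
  intro n
  induction n with
  | zero =>
    intro v hv i j k hij hjk hi hj hk
    exfalso
    have := hasTrip_wt (⟨⟨i, j, k⟩, hij, hjk, hi, hj, hk⟩ : hasTrip v)
    omega
  | succ n IHn =>
    intro v hv i j k hij hjk hi hj hk
    by_cases hle : wt v ≤ n
    · exact IHn v hle i j k hij hjk hi hj hk
    have IH : ∀ u : Fin m → Bool, wt u < wt v → ∀ x y z : Fin m, x < y → y < z →
        u x = true → u y = true → u z = true → Val F a u x y z :=
      fun u hu => IHn u (by omega)
    obtain ⟨p, q, r, hpq, hqr, hp, hq, hr, hval⟩ :=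
      b_def F a v ⟨⟨i, j, k⟩, hij, hjk, hi, hj, hk⟩
    have chain : ∀ (N : ℕ) (p q r : Fin m), p < q → q < r →
        v p = true → v q = true → v r = true → Val F a v p q r →
        (({i, j, k} : Finset (Fin m)) \ {p, q, r}).card ≤ N → Val F a v i j k := by
      intro N
      induction N with
      | zero =>
        intro p q r hpq hqr hp hq hr hval hcard
        have hemp : (({i, j, k} : Finset (Fin m)) \ {p, q, r}) = ∅ :=
          Finset.card_eq_zero.mp (by omega)
        have hmemof : ∀ w : Fin m, (w = i ∨ w = j ∨ w = k) → (w = p ∨ w = q ∨ w = r) := by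
          intro w hw
          by_contra hcon
          have : w ∈ (({i, j, k} : Finset (Fin m)) \ {p, q, r}) := by
            simp only [Finset.mem_sdiff, Finset.mem_insert, Finset.mem_singleton]
            exact ⟨hw, hcon⟩
          rw [hemp] at this
          exact absurd this (Finset.notMem_empty w)
        obtain ⟨rfl, rfl, rfl⟩ := fin3 hij hjk hpq hqr (hmemof i (Or.inl rfl))
          (hmemof j (Or.inr (Or.inl rfl))) (hmemof k (Or.inr (Or.inr rfl)))
        exact hval
      | succ N IHN =>
        intro p q r hpq hqr hp hq hr hval hcard
        by_cases hzero : (({i, j, k} : Finset (Fin m)) \ {p, q, r}).card = 0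
        · exact IHN p q r hpq hqr hp hq hr hval (by omega)
        obtain ⟨t, ht⟩ := Finset.card_pos.mp
          (by omega : 0 < (({i, j, k} : Finset (Fin m)) \ {p, q, r}).card)
        simp only [Finset.mem_sdiff, Finset.mem_insert, Finset.mem_singleton] at ht
        obtain ⟨ht1, ht2⟩ := ht
        have hcq : 0 < (({p, q, r} : Finset (Fin m)) \ {i, j, k}).card := by
          rw [Finset.card_sdiff_comm (by rw [card3 hij hjk, card3 hpq hqr])]
          omega
        obtain ⟨c, hc⟩ := Finset.card_pos.mp hcq
        simp only [Finset.mem_sdiff, Finset.mem_insert, Finset.mem_singleton] at hc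
        obtain ⟨hc1, hc2⟩ := hc
        have htv : v t = true := by rcases ht1 with rfl | rfl | rfl <;> assumption
        have htp : t ≠ p := fun h => ht2 (Or.inl h)
        have htq : t ≠ q := fun h => ht2 (Or.inr (Or.inl h))
        have htr : t ≠ r := fun h => ht2 (Or.inr (Or.inr h))
        have hnpq : p ≠ q := ne_of_lt hpq
        have hnpr : p ≠ r := ne_of_lt (hpq.trans hqr)
        have hnqr : q ≠ r := ne_of_lt hqr
        have hnqp : q ≠ p := hnpq.symm
        have hnrp : r ≠ p := hnpr.symm
        have hnrq : r ≠ q := hnqr.symm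
        rcases lt_trichotomy t p with h1 | h1 | h1
        · -- t < p : tuple (t, p, q, r)
          have all4 := step F a h4 v IH t p q r h1 hpq hqr htv hp hq hr
            (Or.inr (Or.inr (Or.inr hval)))
          rcases hc1 with hcc | hcc | hcc
          · have hc2' : ¬(p = i ∨ p = j ∨ p = k) := by rw [hcc] at hc2; exact hc2
            refine IHN t q r (h1.trans hpq) (hqr) htv hq hr all4.2.2.1 ?_
            have hdlt := delta_lt (i := i) (j := j) (k := k) (p := p) (q := q) (r := r)
              (t := t) (c := p) (x := t) (y := q) (z := r)
              ?_ ht1 ht2 hc2'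
            · omega
            · intro w
              constructor
              · rintro (rfl | rfl | rfl)
                · exact Or.inl rfl
                · exact Or.inr ⟨Or.inr (Or.inl rfl), hnqp⟩
                · exact Or.inr ⟨Or.inr (Or.inr rfl), hnrp⟩
              · rintro (rfl | ⟨(rfl | rfl | rfl), hne⟩)
                · exact Or.inl rfl
                · exact absurd rfl hne
                · exact Or.inr (Or.inl rfl)
                · exact Or.inr (Or.inr rfl)
          · have hc2' : ¬(q = i ∨ q = j ∨ q = k) := by rw [hcc] at hc2; exact hc2
            refine IHN t p r (h1) (hpq.trans hqr) htv hp hr all4.2.1 ?_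
            have hdlt := delta_lt (i := i) (j := j) (k := k) (p := p) (q := q) (r := r)
              (t := t) (c := q) (x := t) (y := p) (z := r)
              ?_ ht1 ht2 hc2'
            · omega
            · intro w
              constructor
              · rintro (rfl | rfl | rfl)
                · exact Or.inl rfl
                · exact Or.inr ⟨Or.inl rfl, hnpq⟩
                · exact Or.inr ⟨Or.inr (Or.inr rfl), hnrq⟩
              · rintro (rfl | ⟨(rfl | rfl | rfl), hne⟩)
                · exact Or.inl rfl
                · exact Or.inr (Or.inl rfl)
                · exact absurd rfl hne
                · exact Or.inr (Or.inr rfl)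
          · have hc2' : ¬(r = i ∨ r = j ∨ r = k) := by rw [hcc] at hc2; exact hc2
            refine IHN t p q (h1) (hpq) htv hp hq all4.1 ?_
            have hdlt := delta_lt (i := i) (j := j) (k := k) (p := p) (q := q) (r := r)
              (t := t) (c := r) (x := t) (y := p) (z := q)
              ?_ ht1 ht2 hc2'
            · omega
            · intro w
              constructor
              · rintro (rfl | rfl | rfl)
                · exact Or.inl rfl
                · exact Or.inr ⟨Or.inl rfl, hnpr⟩
                · exact Or.inr ⟨Or.inr (Or.inl rfl), hnqr⟩
              · rintro (rfl | ⟨(rfl | rfl | rfl), hne⟩)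
                · exact Or.inl rfl
                · exact Or.inr (Or.inl rfl)
                · exact Or.inr (Or.inr rfl)
                · exact absurd rfl hne
        · exact absurd h1 htp
        · rcases lt_trichotomy t q with h2 | h2 | h2
          · -- p < t < q : tuple (p, t, q, r)
            have all4 := step F a h4 v IH p t q r h1 h2 hqr hp htv hq hr
              (Or.inr (Or.inr (Or.inl hval)))
            rcases hc1 with hcc | hcc | hcc
            · have hc2' : ¬(p = i ∨ p = j ∨ p = k) := by rw [hcc] at hc2; exact hc2
              refine IHN t q r (h2) (hqr) htv hq hr all4.2.2.2 ?_
              have hdlt := delta_lt (i := i) (j := j) (k := k) (p := p) (q := q) (r := r)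
                (t := t) (c := p) (x := t) (y := q) (z := r)
                ?_ ht1 ht2 hc2'
              · omega
              · intro w
                constructor
                · rintro (rfl | rfl | rfl)
                  · exact Or.inl rfl
                  · exact Or.inr ⟨Or.inr (Or.inl rfl), hnqp⟩
                  · exact Or.inr ⟨Or.inr (Or.inr rfl), hnrp⟩
                · rintro (rfl | ⟨(rfl | rfl | rfl), hne⟩)
                  · exact Or.inl rfl
                  · exact absurd rfl hne
                  · exact Or.inr (Or.inl rfl)
                  · exact Or.inr (Or.inr rfl)
            · have hc2' : ¬(q = i ∨ q = j ∨ q = k) := by rw [hcc] at hc2; exact hc2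
              refine IHN p t r (h1) (h2.trans hqr) hp htv hr all4.2.1 ?_
              have hdlt := delta_lt (i := i) (j := j) (k := k) (p := p) (q := q) (r := r)
                (t := t) (c := q) (x := p) (y := t) (z := r)
                ?_ ht1 ht2 hc2'
              · omega
              · intro w
                constructor
                · rintro (rfl | rfl | rfl)
                  · exact Or.inr ⟨Or.inl rfl, hnpq⟩
                  · exact Or.inl rfl
                  · exact Or.inr ⟨Or.inr (Or.inr rfl), hnrq⟩
                · rintro (rfl | ⟨(rfl | rfl | rfl), hne⟩)
                  · exact Or.inr (Or.inl rfl)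
                  · exact Or.inl rfl
                  · exact absurd rfl hne
                  · exact Or.inr (Or.inr rfl)
            · have hc2' : ¬(r = i ∨ r = j ∨ r = k) := by rw [hcc] at hc2; exact hc2
              refine IHN p t q (h1) (h2) hp htv hq all4.1 ?_
              have hdlt := delta_lt (i := i) (j := j) (k := k) (p := p) (q := q) (r := r)
                (t := t) (c := r) (x := p) (y := t) (z := q)
                ?_ ht1 ht2 hc2'
              · omega
              · intro w
                constructor
                · rintro (rfl | rfl | rfl)
                  · exact Or.inr ⟨Or.inl rfl, hnpr⟩
                  · exact Or.inl rfl
                  · exact Or.inr ⟨Or.inr (Or.inl rfl), hnqr⟩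
                · rintro (rfl | ⟨(rfl | rfl | rfl), hne⟩)
                  · exact Or.inr (Or.inl rfl)
                  · exact Or.inl rfl
                  · exact Or.inr (Or.inr rfl)
                  · exact absurd rfl hne
          · exact absurd h2 htq
          · rcases lt_trichotomy t r with h3 | h3 | h3
            · -- q < t < r : tuple (p, q, t, r)
              have all4 := step F a h4 v IH p q t r hpq h2 h3 hp hq htv hr
                (Or.inr (Or.inl hval))
              rcases hc1 with hcc | hcc | hcc
              · have hc2' : ¬(p = i ∨ p = j ∨ p = k) := by rw [hcc] at hc2; exact hc2
                refine IHN q t r (h2) (h3) hq htv hr all4.2.2.2 ?_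
                have hdlt := delta_lt (i := i) (j := j) (k := k) (p := p) (q := q) (r := r)
                  (t := t) (c := p) (x := q) (y := t) (z := r)
                  ?_ ht1 ht2 hc2'
                · omega
                · intro w
                  constructor
                  · rintro (rfl | rfl | rfl)
                    · exact Or.inr ⟨Or.inr (Or.inl rfl), hnqp⟩
                    · exact Or.inl rfl
                    · exact Or.inr ⟨Or.inr (Or.inr rfl), hnrp⟩
                  · rintro (rfl | ⟨(rfl | rfl | rfl), hne⟩)
                    · exact Or.inr (Or.inl rfl)
                    · exact absurd rfl hne
                    · exact Or.inl rfl
                    · exact Or.inr (Or.inr rfl)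
              · have hc2' : ¬(q = i ∨ q = j ∨ q = k) := by rw [hcc] at hc2; exact hc2
                refine IHN p t r (hpq.trans h2) (h3) hp htv hr all4.2.2.1 ?_
                have hdlt := delta_lt (i := i) (j := j) (k := k) (p := p) (q := q) (r := r)
                  (t := t) (c := q) (x := p) (y := t) (z := r)
                  ?_ ht1 ht2 hc2'
                · omega
                · intro w
                  constructor
                  · rintro (rfl | rfl | rfl)
                    · exact Or.inr ⟨Or.inl rfl, hnpq⟩
                    · exact Or.inl rfl
                    · exact Or.inr ⟨Or.inr (Or.inr rfl), hnrq⟩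
                  · rintro (rfl | ⟨(rfl | rfl | rfl), hne⟩)
                    · exact Or.inr (Or.inl rfl)
                    · exact Or.inl rfl
                    · exact absurd rfl hne
                    · exact Or.inr (Or.inr rfl)
              · have hc2' : ¬(r = i ∨ r = j ∨ r = k) := by rw [hcc] at hc2; exact hc2
                refine IHN p q t (hpq) (h2) hp hq htv all4.1 ?_
                have hdlt := delta_lt (i := i) (j := j) (k := k) (p := p) (q := q) (r := r)
                  (t := t) (c := r) (x := p) (y := q) (z := t)
                  ?_ ht1 ht2 hc2'
                · omega
                · intro w
                  constructor
                  · rintro (rfl | rfl | rfl)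
                    · exact Or.inr ⟨Or.inl rfl, hnpr⟩
                    · exact Or.inr ⟨Or.inr (Or.inl rfl), hnqr⟩
                    · exact Or.inl rfl
                  · rintro (rfl | ⟨(rfl | rfl | rfl), hne⟩)
                    · exact Or.inr (Or.inr rfl)
                    · exact Or.inl rfl
                    · exact Or.inr (Or.inl rfl)
                    · exact absurd rfl hne
            · exact absurd h3 htr
            · -- r < t : tuple (p, q, r, t)
              have all4 := step F a h4 v IH p q r t hpq hqr h3 hp hq hr htv
                (Or.inl hval)
              rcases hc1 with hcc | hcc | hcc
              · have hc2' : ¬(p = i ∨ p = j ∨ p = k) := by rw [hcc] at hc2; exact hc2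
                refine IHN q r t (hqr) (h3) hq hr htv all4.2.2.2 ?_
                have hdlt := delta_lt (i := i) (j := j) (k := k) (p := p) (q := q) (r := r)
                  (t := t) (c := p) (x := q) (y := r) (z := t)
                  ?_ ht1 ht2 hc2'
                · omega
                · intro w
                  constructor
                  · rintro (rfl | rfl | rfl)
                    · exact Or.inr ⟨Or.inr (Or.inl rfl), hnqp⟩
                    · exact Or.inr ⟨Or.inr (Or.inr rfl), hnrp⟩
                    · exact Or.inl rfl
                  · rintro (rfl | ⟨(rfl | rfl | rfl), hne⟩)
                    · exact Or.inr (Or.inr rfl)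
                    · exact absurd rfl hne
                    · exact Or.inl rfl
                    · exact Or.inr (Or.inl rfl)
              · have hc2' : ¬(q = i ∨ q = j ∨ q = k) := by rw [hcc] at hc2; exact hc2
                refine IHN p r t (hpq.trans hqr) (h3) hp hr htv all4.2.2.1 ?_
                have hdlt := delta_lt (i := i) (j := j) (k := k) (p := p) (q := q) (r := r)
                  (t := t) (c := q) (x := p) (y := r) (z := t)
                  ?_ ht1 ht2 hc2'
                · omega
                · intro w
                  constructor
                  · rintro (rfl | rfl | rfl)
                    · exact Or.inr ⟨Or.inl rfl, hnpq⟩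
                    · exact Or.inr ⟨Or.inr (Or.inr rfl), hnrq⟩
                    · exact Or.inl rfl
                  · rintro (rfl | ⟨(rfl | rfl | rfl), hne⟩)
                    · exact Or.inr (Or.inr rfl)
                    · exact Or.inl rfl
                    · exact absurd rfl hne
                    · exact Or.inr (Or.inl rfl)
              · have hc2' : ¬(r = i ∨ r = j ∨ r = k) := by rw [hcc] at hc2; exact hc2
                refine IHN p q t (hpq) (hqr.trans h3) hp hq htv all4.2.1 ?_
                have hdlt := delta_lt (i := i) (j := j) (k := k) (p := p) (q := q) (r := r)
                  (t := t) (c := r) (x := p) (y := q) (z := t)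
                  ?_ ht1 ht2 hc2'
                · omega
                · intro w
                  constructor
                  · rintro (rfl | rfl | rfl)
                    · exact Or.inr ⟨Or.inl rfl, hnpr⟩
                    · exact Or.inr ⟨Or.inr (Or.inl rfl), hnqr⟩
                    · exact Or.inl rfl
                  · rintro (rfl | ⟨(rfl | rfl | rfl), hne⟩)
                    · exact Or.inr (Or.inr rfl)
                    · exact Or.inl rfl
                    · exact Or.inr (Or.inl rfl)
                    · exact absurd rfl hne
    exact chain ((({i, j, k} : Finset (Fin m)) \ {p, q, r}).card) p q r hpq hqr hp hq hr
      hval le_rfl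


end ABS

/-- **4D consistency yields consistency in all higher dimensions:**
any 4D consistent discrete 3D system is `m`-dimensionally consistent for all `m ≥ 4`. -/
theorem fourD_consistency_implies_mD_consistency
    {X : Type*} (F : X → X → X → X → X → X → X → X)
    (h4 : IsConsistent F 4) :
    ∀ m : ℕ, 4 ≤ m → IsConsistent F m := by
  intro m _ a
  refine ⟨ABS.b F a, fun v h => ABS.b_low F a v h, ?_⟩
  intro i j k hij hjk v hvi hvj hvk
  have nij : i ≠ j := ne_of_lt hij
  have nik : i ≠ k := ne_of_lt (hij.trans hjk)
  have njk : j ≠ k := ne_of_lt hjk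
  have hti : cubeShift (cubeShift (cubeShift v i) j) k i = true := by
    simp [cubeShift, Function.update_apply]
  have htj : cubeShift (cubeShift (cubeShift v i) j) k j = true := by
    simp [cubeShift, Function.update_apply]
  have htk : cubeShift (cubeShift (cubeShift v i) j) k k = true := by
    simp [cubeShift, Function.update_apply]
  have hVal := ABS.main F a h4 (cubeShift (cubeShift (cubeShift v i) j) k) i j k
    hij hjk hti htj htk
  unfold ABS.Val at hVal
  have J0 : ABS.clr (ABS.clr (ABS.clr (cubeShift (cubeShift (cubeShift v i) j) k) i) j) k = v := by
    funext t
    simp only [cubeShift, ABS.clr, Function.update_apply]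
    split_ifs <;> simp_all
  have J1 : ABS.clr (ABS.clr (cubeShift (cubeShift (cubeShift v i) j) k) j) k = cubeShift v i := by
    funext t
    simp only [cubeShift, ABS.clr, Function.update_apply]
    split_ifs <;> simp_all
  have J2 : ABS.clr (ABS.clr (cubeShift (cubeShift (cubeShift v i) j) k) i) k = cubeShift v j := by
    funext t
    simp only [cubeShift, ABS.clr, Function.update_apply]
    split_ifs <;> simp_all
  have J3 : ABS.clr (ABS.clr (cubeShift (cubeShift (cubeShift v i) j) k) i) j = cubeShift v k := by
    funext t
    simp only [cubeShift, ABS.clr, Function.update_apply]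
    split_ifs <;> simp_all
  have J12 : ABS.clr (cubeShift (cubeShift (cubeShift v i) j) k) k = cubeShift (cubeShift v i) j := by
    funext t
    simp only [cubeShift, ABS.clr, Function.update_apply]
    split_ifs <;> simp_all
  have J13 : ABS.clr (cubeShift (cubeShift (cubeShift v i) j) k) j = cubeShift (cubeShift v i) k := by
    funext t
    simp only [cubeShift, ABS.clr, Function.update_apply]
    split_ifs <;> simp_all
  have J23 : ABS.clr (cubeShift (cubeShift (cubeShift v i) j) k) i = cubeShift (cubeShift v j) k := by
    funext t
    simp only [cubeShift, ABS.clr, Function.update_apply]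
    split_ifs <;> simp_all
  rw [J0, J1, J2, J3, J12, J13, J23] at hVal
  exact hVal
end

section
/- Let V be a real vector space and let ℓ, ℓ₁, ℓ₂, ℓ₃, ℓ₁₂, ℓ₁₃, ℓ₂₃ be 2-dimensional subspaces of V such that: ℓ ∩ ℓ_i ≠ 0 for i = 1,2,3; for each pair i < j, ℓ_i ∩ ℓ_{ij} ≠ 0 and ℓ_j ∩ ℓ_{ij} ≠ 0, and the two 1-dimensional subspaces ℓ_i ∩ ℓ_{ij} and ℓ_j ∩ ℓ_{ij} are distinct; the join ℓ ⊔ ℓ₁ ⊔ ℓ₂ ⊔ ℓ₃ has dimension 5; each subspace T_i := ℓ_i ⊔ ℓ_{ij} ⊔ ℓ_{ik} (with {i,j,k} = {1,2,3}) has dimension 4; and W := T₁ ∩ T₂ ∩ T₃ has dimension 2. Then W ∩ ℓ_{ij} ≠ 0 for every pair i < j, i.e., W is a line intersecting all three lines ℓ₁₂, ℓ₁₃, ℓ₂₃. Moreover W is the unique 2-dimensional subspace U with U ∩ ℓ_{ij} ≠ 0 for all three pairs such that the three 1-dimensional intersections U ∩ ℓ_{ij} are pairwise distinct. -/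
private lemma finrank_pos_of_ne_bot' {V : Type*} [AddCommGroup V] [Module ℝ V]
    {P : Submodule ℝ V} [FiniteDimensional ℝ P] (h : P ≠ ⊥) :
    1 ≤ Module.finrank ℝ P :=
  Nat.one_le_iff_ne_zero.mpr (fun h0 => h (Submodule.finrank_eq_zero.mp h0))

/-- If `P, Q` are nonzero distinct subspaces of a 2-dimensional subspace `L`,
then `P ⊔ Q = L`. -/
private lemma sup_eq_of_ne' {V : Type*} [AddCommGroup V] [Module ℝ V]
    {L P Q : Submodule ℝ V} (hL : Module.finrank ℝ L = 2)
    (hP : P ≤ L) (hQ : Q ≤ L) (hP0 : P ≠ ⊥) (hQ0 : Q ≠ ⊥) (hPQ : P ≠ Q) :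
    P ⊔ Q = L := by
  haveI : FiniteDimensional ℝ L := .of_finrank_eq_succ hL
  haveI := Submodule.finiteDimensional_of_le hP
  haveI := Submodule.finiteDimensional_of_le hQ
  have hsup : P ⊔ Q ≤ L := sup_le hP hQ
  haveI := Submodule.finiteDimensional_of_le hsup
  refine Submodule.eq_of_le_of_finrank_le hsup ?_
  rw [hL]
  by_contra h
  push_neg at h
  have h1 : Module.finrank ℝ (P ⊔ Q : Submodule ℝ V) ≤ 1 := Nat.lt_succ_iff.mp h
  have hP' : P = P ⊔ Q :=
    Submodule.eq_of_le_of_finrank_le le_sup_left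
      (h1.trans (finrank_pos_of_ne_bot' hP0))
  have hQ' : Q = P ⊔ Q :=
    Submodule.eq_of_le_of_finrank_le le_sup_right
      (h1.trans (finrank_pos_of_ne_bot' hQ0))
  exact hPQ (hP'.trans hQ'.symm)

/-- **Elementary hexahedron of a discrete line congruence.**
Lines of projective space are represented by 2-dimensional subspaces of a real vector
space `V`; two lines intersect when the corresponding subspaces have nonzero
intersection. Under the stated genericity conditions, the 2-dimensional subspace
`W = T₁ ⊓ T₂ ⊓ T₃` is the unique line intersecting the three lines
`ℓ₁₂, ℓ₁₃, ℓ₂₃` in three pairwise distinct points. -/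
theorem line_congruence_elementary_hexahedron
    (V : Type*) [AddCommGroup V] [Module ℝ V]
    (ℓ ℓ₁ ℓ₂ ℓ₃ ℓ₁₂ ℓ₁₃ ℓ₂₃ : Submodule ℝ V)
    (hℓ : Module.finrank ℝ ↥ℓ = 2) (hℓ₁ : Module.finrank ℝ ↥ℓ₁ = 2)
    (hℓ₂ : Module.finrank ℝ ↥ℓ₂ = 2) (hℓ₃ : Module.finrank ℝ ↥ℓ₃ = 2)
    (hℓ₁₂ : Module.finrank ℝ ↥ℓ₁₂ = 2) (hℓ₁₃ : Module.finrank ℝ ↥ℓ₁₃ = 2)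
    (hℓ₂₃ : Module.finrank ℝ ↥ℓ₂₃ = 2)
    (h01 : ℓ ⊓ ℓ₁ ≠ ⊥) (h02 : ℓ ⊓ ℓ₂ ≠ ⊥) (h03 : ℓ ⊓ ℓ₃ ≠ ⊥)
    (h1_12 : ℓ₁ ⊓ ℓ₁₂ ≠ ⊥) (h2_12 : ℓ₂ ⊓ ℓ₁₂ ≠ ⊥) (hne12 : ℓ₁ ⊓ ℓ₁₂ ≠ ℓ₂ ⊓ ℓ₁₂)
    (h1_13 : ℓ₁ ⊓ ℓ₁₃ ≠ ⊥) (h3_13 : ℓ₃ ⊓ ℓ₁₃ ≠ ⊥) (hne13 : ℓ₁ ⊓ ℓ₁₃ ≠ ℓ₃ ⊓ ℓ₁₃)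
    (h2_23 : ℓ₂ ⊓ ℓ₂₃ ≠ ⊥) (h3_23 : ℓ₃ ⊓ ℓ₂₃ ≠ ⊥) (hne23 : ℓ₂ ⊓ ℓ₂₃ ≠ ℓ₃ ⊓ ℓ₂₃)
    (hjoin : Module.finrank ℝ ↥(ℓ ⊔ ℓ₁ ⊔ ℓ₂ ⊔ ℓ₃) = 5)
    (hT₁ : Module.finrank ℝ ↥(ℓ₁ ⊔ ℓ₁₂ ⊔ ℓ₁₃) = 4)
    (hT₂ : Module.finrank ℝ ↥(ℓ₂ ⊔ ℓ₁₂ ⊔ ℓ₂₃) = 4)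
    (hT₃ : Module.finrank ℝ ↥(ℓ₃ ⊔ ℓ₁₃ ⊔ ℓ₂₃) = 4)
    (hW : Module.finrank ℝ
        ↥((ℓ₁ ⊔ ℓ₁₂ ⊔ ℓ₁₃) ⊓ (ℓ₂ ⊔ ℓ₁₂ ⊔ ℓ₂₃) ⊓ (ℓ₃ ⊔ ℓ₁₃ ⊔ ℓ₂₃)) = 2) :
    (((ℓ₁ ⊔ ℓ₁₂ ⊔ ℓ₁₃) ⊓ (ℓ₂ ⊔ ℓ₁₂ ⊔ ℓ₂₃) ⊓ (ℓ₃ ⊔ ℓ₁₃ ⊔ ℓ₂₃)) ⊓ ℓ₁₂ ≠ ⊥ ∧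
     ((ℓ₁ ⊔ ℓ₁₂ ⊔ ℓ₁₃) ⊓ (ℓ₂ ⊔ ℓ₁₂ ⊔ ℓ₂₃) ⊓ (ℓ₃ ⊔ ℓ₁₃ ⊔ ℓ₂₃)) ⊓ ℓ₁₃ ≠ ⊥ ∧
     ((ℓ₁ ⊔ ℓ₁₂ ⊔ ℓ₁₃) ⊓ (ℓ₂ ⊔ ℓ₁₂ ⊔ ℓ₂₃) ⊓ (ℓ₃ ⊔ ℓ₁₃ ⊔ ℓ₂₃)) ⊓ ℓ₂₃ ≠ ⊥) ∧
    (∀ U : Submodule ℝ V, Module.finrank ℝ ↥U = 2 →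
      U ⊓ ℓ₁₂ ≠ ⊥ → U ⊓ ℓ₁₃ ≠ ⊥ → U ⊓ ℓ₂₃ ≠ ⊥ →
      U ⊓ ℓ₁₂ ≠ U ⊓ ℓ₁₃ → U ⊓ ℓ₁₂ ≠ U ⊓ ℓ₂₃ → U ⊓ ℓ₁₃ ≠ U ⊓ ℓ₂₃ →
      U = (ℓ₁ ⊔ ℓ₁₂ ⊔ ℓ₁₃) ⊓ (ℓ₂ ⊔ ℓ₁₂ ⊔ ℓ₂₃) ⊓ (ℓ₃ ⊔ ℓ₁₃ ⊔ ℓ₂₃)) := by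
  haveI : FiniteDimensional ℝ ℓ := .of_finrank_eq_succ hℓ
  haveI : FiniteDimensional ℝ ℓ₁ := .of_finrank_eq_succ hℓ₁
  haveI : FiniteDimensional ℝ ℓ₂ := .of_finrank_eq_succ hℓ₂
  haveI : FiniteDimensional ℝ ℓ₃ := .of_finrank_eq_succ hℓ₃
  haveI : FiniteDimensional ℝ ℓ₁₂ := .of_finrank_eq_succ hℓ₁₂
  haveI : FiniteDimensional ℝ ℓ₁₃ := .of_finrank_eq_succ hℓ₁₃
  haveI : FiniteDimensional ℝ ℓ₂₃ := .of_finrank_eq_succ hℓ₂₃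
  haveI hS : FiniteDimensional ℝ (ℓ ⊔ ℓ₁ ⊔ ℓ₂ ⊔ ℓ₃ : Submodule ℝ V) :=
    .of_finrank_eq_succ hjoin
  haveI : FiniteDimensional ℝ (ℓ₁ ⊔ ℓ₁₂ ⊔ ℓ₁₃ : Submodule ℝ V) := .of_finrank_eq_succ hT₁
  haveI : FiniteDimensional ℝ (ℓ₂ ⊔ ℓ₁₂ ⊔ ℓ₂₃ : Submodule ℝ V) := .of_finrank_eq_succ hT₂
  haveI : FiniteDimensional ℝ (ℓ₃ ⊔ ℓ₁₃ ⊔ ℓ₂₃ : Submodule ℝ V) := .of_finrank_eq_succ hT₃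
  -- the diagonal lines lie in the span of the original lines
  have h12sub : ℓ₁₂ ≤ ℓ₁ ⊔ ℓ₂ := by
    rw [← sup_eq_of_ne' hℓ₁₂ inf_le_right inf_le_right h1_12 h2_12 hne12]
    exact sup_le (inf_le_left.trans le_sup_left) (inf_le_left.trans le_sup_right)
  have h13sub : ℓ₁₃ ≤ ℓ₁ ⊔ ℓ₃ := by
    rw [← sup_eq_of_ne' hℓ₁₃ inf_le_right inf_le_right h1_13 h3_13 hne13]
    exact sup_le (inf_le_left.trans le_sup_left) (inf_le_left.trans le_sup_right)
  have h23sub : ℓ₂₃ ≤ ℓ₂ ⊔ ℓ₃ := by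
    rw [← sup_eq_of_ne' hℓ₂₃ inf_le_right inf_le_right h2_23 h3_23 hne23]
    exact sup_le (inf_le_left.trans le_sup_left) (inf_le_left.trans le_sup_right)
  -- everything lies in S := ℓ ⊔ ℓ₁ ⊔ ℓ₂ ⊔ ℓ₃ of dimension 5
  have hℓ₁S : ℓ₁ ≤ ℓ ⊔ ℓ₁ ⊔ ℓ₂ ⊔ ℓ₃ := le_sup_right.trans (le_sup_left.trans le_sup_left)
  have hℓ₂S : ℓ₂ ≤ ℓ ⊔ ℓ₁ ⊔ ℓ₂ ⊔ ℓ₃ := le_sup_right.trans le_sup_left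
  have hℓ₃S : ℓ₃ ≤ ℓ ⊔ ℓ₁ ⊔ ℓ₂ ⊔ ℓ₃ := le_sup_right
  have h12S : ℓ₁₂ ≤ ℓ ⊔ ℓ₁ ⊔ ℓ₂ ⊔ ℓ₃ := h12sub.trans (sup_le hℓ₁S hℓ₂S)
  have h13S : ℓ₁₃ ≤ ℓ ⊔ ℓ₁ ⊔ ℓ₂ ⊔ ℓ₃ := h13sub.trans (sup_le hℓ₁S hℓ₃S)
  have h23S : ℓ₂₃ ≤ ℓ ⊔ ℓ₁ ⊔ ℓ₂ ⊔ ℓ₃ := h23sub.trans (sup_le hℓ₂S hℓ₃S)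
  have hT₁S : ℓ₁ ⊔ ℓ₁₂ ⊔ ℓ₁₃ ≤ ℓ ⊔ ℓ₁ ⊔ ℓ₂ ⊔ ℓ₃ := sup_le (sup_le hℓ₁S h12S) h13S
  have hT₂S : ℓ₂ ⊔ ℓ₁₂ ⊔ ℓ₂₃ ≤ ℓ ⊔ ℓ₁ ⊔ ℓ₂ ⊔ ℓ₃ := sup_le (sup_le hℓ₂S h12S) h23S
  have hT₃S : ℓ₃ ⊔ ℓ₁₃ ⊔ ℓ₂₃ ≤ ℓ ⊔ ℓ₁ ⊔ ℓ₂ ⊔ ℓ₃ := sup_le (sup_le hℓ₃S h13S) h23S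
  -- a 4-dimensional `T` and a 2-dimensional `L` inside a 5-dim space must meet
  have key : ∀ T L : Submodule ℝ V, Module.finrank ℝ T = 4 → Module.finrank ℝ L = 2 →
      T ≤ ℓ ⊔ ℓ₁ ⊔ ℓ₂ ⊔ ℓ₃ → L ≤ ℓ ⊔ ℓ₁ ⊔ ℓ₂ ⊔ ℓ₃ → T ⊓ L ≠ ⊥ := by
    intro T L hT hL hTS hLS hbot
    haveI : FiniteDimensional ℝ T := .of_finrank_eq_succ hT
    haveI : FiniteDimensional ℝ L := .of_finrank_eq_succ hL
    have hdim := Submodule.finrank_sup_add_finrank_inf_eq T L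
    rw [hT, hL, hbot, finrank_bot] at hdim
    have hle : Module.finrank ℝ (T ⊔ L : Submodule ℝ V) ≤ 5 :=
      (Submodule.finrank_mono (sup_le hTS hLS)).trans_eq hjoin
    omega
  -- intersections with the diagonal lines
  have e12 : ((ℓ₁ ⊔ ℓ₁₂ ⊔ ℓ₁₃) ⊓ (ℓ₂ ⊔ ℓ₁₂ ⊔ ℓ₂₃) ⊓ (ℓ₃ ⊔ ℓ₁₃ ⊔ ℓ₂₃)) ⊓ ℓ₁₂
      = (ℓ₃ ⊔ ℓ₁₃ ⊔ ℓ₂₃) ⊓ ℓ₁₂ := by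
    refine le_antisymm (inf_le_inf_right _ inf_le_right) ?_
    exact le_inf (le_inf (le_inf (inf_le_right.trans (le_sup_right.trans le_sup_left))
      (inf_le_right.trans (le_sup_right.trans le_sup_left))) inf_le_left) inf_le_right
  have e13 : ((ℓ₁ ⊔ ℓ₁₂ ⊔ ℓ₁₃) ⊓ (ℓ₂ ⊔ ℓ₁₂ ⊔ ℓ₂₃) ⊓ (ℓ₃ ⊔ ℓ₁₃ ⊔ ℓ₂₃)) ⊓ ℓ₁₃
      = (ℓ₂ ⊔ ℓ₁₂ ⊔ ℓ₂₃) ⊓ ℓ₁₃ := by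
    refine le_antisymm (inf_le_inf_right _ (inf_le_left.trans inf_le_right)) ?_
    exact le_inf (le_inf (le_inf (inf_le_right.trans le_sup_right) inf_le_left)
      (inf_le_right.trans (le_sup_right.trans le_sup_left))) inf_le_right
  have e23 : ((ℓ₁ ⊔ ℓ₁₂ ⊔ ℓ₁₃) ⊓ (ℓ₂ ⊔ ℓ₁₂ ⊔ ℓ₂₃) ⊓ (ℓ₃ ⊔ ℓ₁₃ ⊔ ℓ₂₃)) ⊓ ℓ₂₃
      = (ℓ₁ ⊔ ℓ₁₂ ⊔ ℓ₁₃) ⊓ ℓ₂₃ := by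
    refine le_antisymm (inf_le_inf_right _ (inf_le_left.trans inf_le_left)) ?_
    exact le_inf (le_inf (le_inf inf_le_left (inf_le_right.trans le_sup_right))
      (inf_le_right.trans le_sup_right)) inf_le_right
  constructor
  · refine ⟨?_, ?_, ?_⟩
    · rw [e12]; exact key _ _ hT₃ hℓ₁₂ hT₃S h12S
    · rw [e13]; exact key _ _ hT₂ hℓ₁₃ hT₂S h13S
    · rw [e23]; exact key _ _ hT₁ hℓ₂₃ hT₁S h23S
  · intro U hU hU12 hU13 hU23 hd1 hd2 hd3
    haveI : FiniteDimensional ℝ U := .of_finrank_eq_succ hU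
    have hUT₁ : U ≤ ℓ₁ ⊔ ℓ₁₂ ⊔ ℓ₁₃ := by
      rw [← sup_eq_of_ne' hU inf_le_left inf_le_left hU12 hU13 hd1]
      exact sup_le (inf_le_right.trans (le_sup_right.trans le_sup_left))
        (inf_le_right.trans le_sup_right)
    have hUT₂ : U ≤ ℓ₂ ⊔ ℓ₁₂ ⊔ ℓ₂₃ := by
      rw [← sup_eq_of_ne' hU inf_le_left inf_le_left hU12 hU23 hd2]
      exact sup_le (inf_le_right.trans (le_sup_right.trans le_sup_left))
        (inf_le_right.trans le_sup_right)
    have hUT₃ : U ≤ ℓ₃ ⊔ ℓ₁₃ ⊔ ℓ₂₃ := by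
      rw [← sup_eq_of_ne' hU inf_le_left inf_le_left hU13 hU23 hd3]
      exact sup_le (inf_le_right.trans (le_sup_right.trans le_sup_left))
        (inf_le_right.trans le_sup_right)
    have hUW : U ≤ (ℓ₁ ⊔ ℓ₁₂ ⊔ ℓ₁₃) ⊓ (ℓ₂ ⊔ ℓ₁₂ ⊔ ℓ₂₃) ⊓ (ℓ₃ ⊔ ℓ₁₃ ⊔ ℓ₂₃) :=
      le_inf (le_inf hUT₁ hUT₂) hUT₃
    haveI : FiniteDimensional ℝ
        ((ℓ₁ ⊔ ℓ₁₂ ⊔ ℓ₁₃) ⊓ (ℓ₂ ⊔ ℓ₁₂ ⊔ ℓ₂₃) ⊓ (ℓ₃ ⊔ ℓ₁₃ ⊔ ℓ₂₃) : Submodule ℝ V) :=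
      .of_finrank_eq_succ hW
    exact Submodule.eq_of_le_of_finrank_le hUW (by rw [hU, hW])
end

section
/- Let V be a real vector space, m ≥ 3, and let ℓ : ℤᵐ → {2-dimensional subspaces of V} be a discrete line congruence, i.e., dim(ℓ(u) ∩ ℓ(u + e_i)) = 1 for all u ∈ ℤᵐ and 1 ≤ i ≤ m. For fixed k define the k-th focal net f⁽ᵏ⁾(u) := ℓ(u) ∩ ℓ(u + e_k), a 1-dimensional subspace. Then: (a) for every u and every i ≠ k, the four subspaces f⁽ᵏ⁾(u), f⁽ᵏ⁾(u+e_i), f⁽ᵏ⁾(u+e_i+e_k), f⁽ᵏ⁾(u+e_k) span a subspace of dimension at most 3; (b) for every u and all i ≠ j with i, j ≠ k, if the subspaces V_{ij} := ℓ(u) ⊔ ℓ(u+e_i) ⊔ ℓ(u+e_j) ⊔ ℓ(u+e_i+e_j) and V'_{ij} := ℓ(u+e_k) ⊔ ℓ(u+e_i+e_k) ⊔ ℓ(u+e_j+e_k) ⊔ ℓ(u+e_i+e_j+e_k) each have dimension 4 and V_{ij} ≠ V'_{ij}, then the four subspaces f⁽ᵏ⁾(u), f⁽ᵏ⁾(u+e_i),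 f⁽ᵏ⁾(u+e_i+e_j), f⁽ᵏ⁾(u+e_j) span a subspace of dimension at most 3. In other words, all focal nets of a generic discrete line congruence are Q-nets. -/
/-- **Focal nets of a generic discrete line congruence are Q-nets.**
A discrete line congruence is a map `ℓ : ℤᵐ → {2-dimensional subspaces of V}` with
`dim (ℓ u ⊓ ℓ (u + eᵢ)) = 1` for all `u` and `i`. For fixed `k`, the `k`-th focal net
is `f⁽ᵏ⁾ u := ℓ u ⊓ ℓ (u + e_k)`. Then (a) all elementary `(ik)`-quadrilaterals of the
focal net are planar, and (b) under the genericity conditions all elementary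
`(ij)`-quadrilaterals (`i, j ≠ k`) are planar. -/
theorem focal_nets_are_Qnets
    (V : Type*) [AddCommGroup V] [Module ℝ V] (m : ℕ) (hm : 3 ≤ m)
    (ℓ : (Fin m → ℤ) → Submodule ℝ V)
    (hdim : ∀ u, Module.finrank ℝ ↥(ℓ u) = 2)
    (hcongr : ∀ (u : Fin m → ℤ) (i : Fin m),
      Module.finrank ℝ ↥(ℓ u ⊓ ℓ (u + Pi.single i 1)) = 1)
    (k : Fin m) :
    -- (a)
    (∀ (u : Fin m → ℤ) (i : Fin m), i ≠ k →
      Module.finrank ℝ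
        ↥((ℓ u ⊓ ℓ (u + Pi.single k 1)) ⊔
          (ℓ (u + Pi.single i 1) ⊓ ℓ (u + Pi.single i 1 + Pi.single k 1)) ⊔
          (ℓ (u + Pi.single i 1 + Pi.single k 1) ⊓
            ℓ (u + Pi.single i 1 + Pi.single k 1 + Pi.single k 1)) ⊔
          (ℓ (u + Pi.single k 1) ⊓ ℓ (u + Pi.single k 1 + Pi.single k 1))) ≤ 3) ∧
    -- (b)
    (∀ (u : Fin m → ℤ) (i j : Fin m), i ≠ j → i ≠ k → j ≠ k →
      Module.finrank ℝ
        ↥(ℓ u ⊔ ℓ (u + Pi.single i 1) ⊔ ℓ (u + Pi.single j 1) ⊔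
          ℓ (u + Pi.single i 1 + Pi.single j 1)) = 4 →
      Module.finrank ℝ
        ↥(ℓ (u + Pi.single k 1) ⊔ ℓ (u + Pi.single i 1 + Pi.single k 1) ⊔
          ℓ (u + Pi.single j 1 + Pi.single k 1) ⊔
          ℓ (u + Pi.single i 1 + Pi.single j 1 + Pi.single k 1)) = 4 →
      (ℓ u ⊔ ℓ (u + Pi.single i 1) ⊔ ℓ (u + Pi.single j 1) ⊔
          ℓ (u + Pi.single i 1 + Pi.single j 1)) ≠
        (ℓ (u + Pi.single k 1) ⊔ ℓ (u + Pi.single i 1 + Pi.single k 1) ⊔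
          ℓ (u + Pi.single j 1 + Pi.single k 1) ⊔
          ℓ (u + Pi.single i 1 + Pi.single j 1 + Pi.single k 1)) →
      Module.finrank ℝ
        ↥((ℓ u ⊓ ℓ (u + Pi.single k 1)) ⊔
          (ℓ (u + Pi.single i 1) ⊓ ℓ (u + Pi.single i 1 + Pi.single k 1)) ⊔
          (ℓ (u + Pi.single i 1 + Pi.single j 1) ⊓
            ℓ (u + Pi.single i 1 + Pi.single j 1 + Pi.single k 1)) ⊔
          (ℓ (u + Pi.single j 1) ⊓ ℓ (u + Pi.single j 1 + Pi.single k 1))) ≤ 3) := by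
  have hFD : ∀ u, FiniteDimensional ℝ ↥(ℓ u) := fun u =>
    FiniteDimensional.of_finrank_pos (by rw [hdim u]; norm_num)
  haveI := hFD
  constructor
  · -- (a)
    intro u i hi
    have hcomm : u + Pi.single i 1 + Pi.single k 1 = u + Pi.single k 1 + Pi.single i 1 :=
      add_right_comm u _ _
    set A := ℓ (u + Pi.single k 1) with hA
    set B := ℓ (u + Pi.single k 1 + Pi.single i 1) with hB
    haveI : FiniteDimensional ℝ ↥(A ⊔ B) := Submodule.finiteDimensional_sup A B
    have key : Module.finrank ℝ ↥(A ⊔ B) = 3 := by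
      have h1 := Submodule.finrank_sup_add_finrank_inf_eq A B
      rw [hdim, hdim, hcongr] at h1
      omega
    have hle : (ℓ u ⊓ ℓ (u + Pi.single k 1)) ⊔
          (ℓ (u + Pi.single i 1) ⊓ ℓ (u + Pi.single i 1 + Pi.single k 1)) ⊔
          (ℓ (u + Pi.single i 1 + Pi.single k 1) ⊓
            ℓ (u + Pi.single i 1 + Pi.single k 1 + Pi.single k 1)) ⊔
          (ℓ (u + Pi.single k 1) ⊓ ℓ (u + Pi.single k 1 + Pi.single k 1)) ≤ A ⊔ B := by
      rw [hcomm]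
      refine sup_le (sup_le (sup_le ?_ ?_) ?_) ?_
      · exact inf_le_right.trans le_sup_left
      · exact inf_le_right.trans le_sup_right
      · exact inf_le_left.trans le_sup_right
      · exact inf_le_left.trans le_sup_left
    calc Module.finrank ℝ _ ≤ Module.finrank ℝ ↥(A ⊔ B) := Submodule.finrank_mono hle
      _ = 3 := key
  · -- (b)
    intro u i j hij hik hjk hVij hVij' hne
    set A := ℓ u ⊔ ℓ (u + Pi.single i 1) ⊔ ℓ (u + Pi.single j 1) ⊔
        ℓ (u + Pi.single i 1 + Pi.single j 1) with hAdef
    set B := ℓ (u + Pi.single k 1) ⊔ ℓ (u + Pi.single i 1 + Pi.single k 1) ⊔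
        ℓ (u + Pi.single j 1 + Pi.single k 1) ⊔
        ℓ (u + Pi.single i 1 + Pi.single j 1 + Pi.single k 1) with hBdef
    haveI : FiniteDimensional ℝ ↥A := by
      unfold A; infer_instance
    haveI : FiniteDimensional ℝ ↥B := by
      unfold B; infer_instance
    haveI : FiniteDimensional ℝ ↥(A ⊔ B) := Submodule.finiteDimensional_sup A B
    have hsup : 5 ≤ Module.finrank ℝ ↥(A ⊔ B) := by
      have hlt : A < A ⊔ B := by
        rcases lt_or_eq_of_le (le_sup_left : A ≤ A ⊔ B) with h | h
        · exact h
        · exfalso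
          have hBA : B ≤ A := h ▸ le_sup_right
          exact hne (Submodule.eq_of_le_of_finrank_eq hBA (by rw [hVij, hVij'])).symm
      have := Submodule.finrank_lt_finrank_of_lt hlt
      omega
    have hinf : Module.finrank ℝ ↥(A ⊓ B) ≤ 3 := by
      have h1 := Submodule.finrank_sup_add_finrank_inf_eq A B
      rw [hVij, hVij'] at h1
      omega
    have hle : (ℓ u ⊓ ℓ (u + Pi.single k 1)) ⊔
          (ℓ (u + Pi.single i 1) ⊓ ℓ (u + Pi.single i 1 + Pi.single k 1)) ⊔
          (ℓ (u + Pi.single i 1 + Pi.single j 1) ⊓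
            ℓ (u + Pi.single i 1 + Pi.single j 1 + Pi.single k 1)) ⊔
          (ℓ (u + Pi.single j 1) ⊓ ℓ (u + Pi.single j 1 + Pi.single k 1)) ≤ A ⊓ B := by
      refine sup_le (sup_le (sup_le (le_inf ?_ ?_) (le_inf ?_ ?_)) (le_inf ?_ ?_))
        (le_inf ?_ ?_)
      · exact inf_le_left.trans (le_sup_left.trans (le_sup_left.trans le_sup_left))
      · exact inf_le_right.trans (le_sup_left.trans (le_sup_left.trans le_sup_left))
      · exact inf_le_left.trans ((le_sup_right.trans le_sup_left).trans le_sup_left)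
      · exact inf_le_right.trans ((le_sup_right.trans le_sup_left).trans le_sup_left)
      · exact inf_le_left.trans le_sup_right
      · exact inf_le_right.trans le_sup_right
      · exact inf_le_left.trans (le_sup_right.trans le_sup_left)
      · exact inf_le_right.trans (le_sup_right.trans le_sup_left)
    calc Module.finrank ℝ _ ≤ Module.finrank ℝ ↥(A ⊓ B) := Submodule.finrank_mono hle
      _ ≤ 3 := hinf
end

section
/- Let n ≥ 2 and let a, b, c, d be pairwise distinct points of ℝⁿ such that a, b, c are not collinear. Then the set {a, b, c, d} is concyclic if and only if the four vectors (a, 1, |a|²), (b, 1, |b|²), (c, 1, |c|²), (d, 1, |d|²) of ℝⁿ × ℝ × ℝ span a linear subspace of dimension at most 3 (equivalently, (d, 1, |d|²) lies in the span of the other three). That is, a net x in ℝⁿ is circular in the Euclidean sense exactly when its Möbius-geometric lifts x̂ = (x, 1, |x|²) form a Q-net (have planar quadrilaterals) in the projective model of Möbius geometry. -/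
/-!
For a sphere with centre `p`, the function `x ↦ ‖x‖² - 2⟪x, p⟫` is constant on it, so on a
cospherical set `‖x‖²` agrees with an affine function of `x`. Hence if `d = ∑ wᵢ xᵢ` is an affine
combination of `a, b, c` (i.e. `d` lies in their plane), then `d` lies on a sphere through them
exactly when `‖d‖² = ∑ wᵢ ‖xᵢ‖²`, i.e. when `d̂ = ∑ wᵢ x̂ᵢ`. Conversely, the first two components
of a relation `d̂ = ∑ wᵢ x̂ᵢ` say that `d` is such an affine combination. Since the lifts of
affinely independent points are linearly independent, rank `≤ 3` means `d̂ ∈ span {â, b̂, ĉ}`.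
-/

open EuclideanGeometry Module

section AffineSpan

variable {K V P : Type*} [DivisionRing K] [AddCommGroup V] [Module K V] [AddTorsor V P]

theorem Submodule.finrank_sup_span_singleton_le_iff [Module.Finite K V] {W : Submodule K V}
    {v : V} : finrank K ↥(W ⊔ span K {v}) ≤ finrank K W ↔ v ∈ W := by
  by_cases hv : v ∈ W
  · rw [sup_eq_left.2 ((span_singleton_le_iff_mem v W).2 hv)]
    simp [hv]
  · simp [hv, finrank_sup_span_singleton hv]

theorem finrank_vectorSpan_insert_le_iff [Module.Finite K V] {s : Set P} {p₀ : P} (hp₀ : p₀ ∈ s)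
    (q : P) :
    finrank K (vectorSpan K (insert q s)) ≤ finrank K (vectorSpan K s) ↔ q ∈ affineSpan K s := by
  have hp₀' := subset_affineSpan K s hp₀
  rw [← direction_affineSpan, ← affineSpan_insert_affineSpan,
    AffineSubspace.direction_affineSpan_insert hp₀', ← direction_affineSpan, sup_comm,
    Submodule.finrank_sup_span_singleton_le_iff,
    AffineSubspace.vsub_right_mem_direction_iff_mem hp₀']

theorem coplanar_insert_iff_mem_affineSpan [Module.Finite K V] {s : Set P}
    (hcol : ¬Collinear K s) (hcop : Coplanar K s) (q : P) :
    Coplanar K (insert q s) ↔ q ∈ affineSpan K s := by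
  obtain ⟨p₀, hp₀⟩ : s.Nonempty :=
    Set.nonempty_iff_ne_empty.2 (by rintro rfl; exact hcol (collinear_empty K P))
  have h2 : finrank K (vectorSpan K s) = 2 := by
    have := collinear_iff_finrank_le_one.not.1 hcol
    have := hcop.finrank_le_two
    omega
  rw [coplanar_iff_finrank_le_two, ← h2, finrank_vectorSpan_insert_le_iff hp₀]

end AffineSpan

theorem mem_affineSpan_range_iff_exists_sum_smul {K V ι : Type*} [Field K] [AddCommGroup V]
    [Module K V] [Fintype ι] {p : ι → V} {q : V} :
    q ∈ affineSpan K (Set.range p) ↔ ∃ w : ι → K, ∑ i, w i = 1 ∧ ∑ i, w i • p i = q := by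
  constructor
  · intro hq
    obtain ⟨w, hw, rfl⟩ := eq_affineCombination_of_mem_affineSpan_of_fintype hq
    exact ⟨w, hw, (Finset.univ.affineCombination_eq_linear_combination p w hw).symm⟩
  · rintro ⟨w, hw, rfl⟩
    rw [← Finset.univ.affineCombination_eq_linear_combination p w hw]
    exact affineCombination_mem_affineSpan hw p

section MoebiusLift

variable {E ι : Type*} [NormedAddCommGroup E] [InnerProductSpace ℝ E] [Fintype ι]

open scoped RealInnerProductSpace

def moebiusLift (x : E) : E × ℝ × ℝ := (x, 1, ‖x‖ ^ 2)

theorem sum_smul_moebiusLift (w : ι → ℝ) (p : ι → E) :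
    ∑ i, w i • moebiusLift (p i) = (∑ i, w i • p i, ∑ i, w i, ∑ i, w i * ‖p i‖ ^ 2) := by
  ext <;> simp [moebiusLift, Prod.fst_sum, Prod.snd_sum]

theorem moebiusLift_mem_span_range_iff (p : ι → E) (q : E) :
    moebiusLift q ∈ Submodule.span ℝ (Set.range (moebiusLift ∘ p)) ↔
      ∃ w : ι → ℝ, ∑ i, w i • p i = q ∧ ∑ i, w i = 1 ∧ ∑ i, w i * ‖p i‖ ^ 2 = ‖q‖ ^ 2 := by
  simp only [Submodule.mem_span_range_iff_exists_fun, Function.comp_apply, sum_smul_moebiusLift]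
  simp only [moebiusLift, Prod.mk.injEq]

theorem AffineIndependent.linearIndependent_moebiusLift {p : ι → E}
    (hp : AffineIndependent ℝ p) : LinearIndependent ℝ (moebiusLift ∘ p) := by
  refine Fintype.linearIndependent_iff.2 fun w hw ↦ ?_
  simp only [Function.comp_apply, sum_smul_moebiusLift, Prod.mk_eq_zero] at hw
  exact fun i ↦ affineIndependent_iff.1 hp Finset.univ w hw.2.1 hw.1 i (Finset.mem_univ i)

theorem cospherical_iff_exists_norm_sq_eq {s : Set E} :
    Cospherical s ↔ ∃ (c : E) (k : ℝ), ∀ x ∈ s, ‖x‖ ^ 2 = 2 * ⟪x, c⟫ + k := by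
  constructor
  · rintro ⟨c, r, h⟩
    refine ⟨c, r ^ 2 - ‖c‖ ^ 2, fun x hx ↦ ?_⟩
    have := norm_sub_sq_real x c
    rw [← dist_eq_norm, h x hx] at this
    linarith
  · rintro ⟨c, k, h⟩
    refine ⟨c, √(k + ‖c‖ ^ 2), fun x hx ↦ ?_⟩
    rw [← Real.sqrt_sq dist_nonneg, dist_eq_norm, norm_sub_sq_real, h x hx]
    ring_nf

theorem sum_mul_norm_sq_eq_of_norm_sq_eq {p : ι → E} {c : E} {k : ℝ}
    (hp : ∀ i, ‖p i‖ ^ 2 = 2 * ⟪p i, c⟫ + k) {w : ι → ℝ} (hw : ∑ i, w i = 1) :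
    ∑ i, w i * ‖p i‖ ^ 2 = 2 * ⟪∑ i, w i • p i, c⟫ + k := by
  simp only [hp, sum_inner, real_inner_smul_left, mul_add, Finset.sum_add_distrib,
    ← Finset.sum_mul, hw, Finset.mul_sum]
  ring_nf

theorem moebiusLift_mem_span_iff {p : ι → E} (hp : Cospherical (Set.range p)) (q : E) :
    moebiusLift q ∈ Submodule.span ℝ (Set.range (moebiusLift ∘ p)) ↔
      Cospherical (insert q (Set.range p)) ∧ q ∈ affineSpan ℝ (Set.range p) := by
  rw [moebiusLift_mem_span_range_iff, mem_affineSpan_range_iff_exists_sum_smul]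
  constructor
  · rintro ⟨w, rfl, hw, hnorm⟩
    obtain ⟨c, k, hc⟩ := cospherical_iff_exists_norm_sq_eq.1 hp
    refine ⟨cospherical_iff_exists_norm_sq_eq.2 ⟨c, k, ?_⟩, w, hw, rfl⟩
    rintro x (rfl | hx)
    · rw [← hnorm]
      exact sum_mul_norm_sq_eq_of_norm_sq_eq (fun i ↦ hc _ (Set.mem_range_self i)) hw
    · exact hc x hx
  · rintro ⟨hq, w, hw, rfl⟩
    obtain ⟨c, k, hc⟩ := cospherical_iff_exists_norm_sq_eq.1 hq
    refine ⟨w, rfl, hw, ?_⟩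
    rw [hc _ (Set.mem_insert _ _)]
    exact sum_mul_norm_sq_eq_of_norm_sq_eq
      (fun i ↦ hc _ (Set.mem_insert_of_mem _ (Set.mem_range_self i))) hw

end MoebiusLift

theorem concyclic_iff_moebius_lifts_planar_general
    (n : ℕ) (a b c d : EuclideanSpace ℝ (Fin n))
    (hcol : ¬ Collinear ℝ ({a, b, c} : Set (EuclideanSpace ℝ (Fin n)))) :
    Concyclic ({a, b, c, d} : Set (EuclideanSpace ℝ (Fin n))) ↔
      Module.finrank ℝ
        ↥(Submodule.span ℝ
          ({(a, 1, ‖a‖ ^ 2), (b, 1, ‖b‖ ^ 2), (c, 1, ‖c‖ ^ 2), (d, 1, ‖d‖ ^ 2)} :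
            Set (EuclideanSpace ℝ (Fin n) × ℝ × ℝ))) ≤ 3 := by
  have hind : AffineIndependent ℝ ![a, b, c] := affineIndependent_iff_not_collinear_set.2 hcol
  have hrange : Set.range ![a, b, c] = {a, b, c} := by
    ext x
    simp [Matrix.range_cons, or_comm, or_left_comm]
  have hsph : Cospherical (Set.range ![a, b, c]) := by
    obtain ⟨s, -, hs⟩ := hind.existsUnique_dist_eq.exists
    exact cospherical_iff_exists_sphere.2 ⟨s, hs⟩
  have hlifts : Submodule.span ℝ {moebiusLift a, moebiusLift b, moebiusLift c, moebiusLift d} =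
      Submodule.span ℝ (Set.range (moebiusLift ∘ ![a, b, c])) ⊔
        Submodule.span ℝ {moebiusLift d} := by
    rw [← Submodule.span_union, Set.range_comp, hrange, Set.image_insert_eq, Set.image_insert_eq,
      Set.image_singleton, Set.insert_union, Set.insert_union, Set.singleton_union]
  have hrank : finrank ℝ (Submodule.span ℝ (Set.range (moebiusLift ∘ ![a, b, c]))) = 3 := by
    simpa using finrank_span_eq_card hind.linearIndependent_moebiusLift
  calc Concyclic ({a, b, c, d} : Set (EuclideanSpace ℝ (Fin n)))
      ↔ Cospherical (insert d (Set.range ![a, b, c])) ∧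
          d ∈ affineSpan ℝ (Set.range ![a, b, c]) := by
        rw [hrange, ← coplanar_insert_iff_mem_affineSpan hcol (coplanar_triple ℝ a b c),
          show ({a, b, c, d} : Set _) = insert d {a, b, c} by ext; simp [or_comm, or_left_comm]]
        exact ⟨fun h ↦ ⟨h.1, h.2⟩, fun h ↦ ⟨h.1, h.2⟩⟩
    _ ↔ moebiusLift d ∈ Submodule.span ℝ (Set.range (moebiusLift ∘ ![a, b, c])) :=
        (moebiusLift_mem_span_iff hsph d).symm
    _ ↔ _ := by
        rw [← Submodule.finrank_sup_span_singleton_le_iff, hrank, ← hlifts]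
        rfl

/-- **Circularity is equivalent to planarity of the Möbius lifts.**
For pairwise distinct points `a, b, c, d` of ℝⁿ (`n ≥ 2`) with `a, b, c` not
collinear, the set `{a, b, c, d}` is concyclic if and only if the Möbius-geometric
lifts `x̂ = (x, 1, |x|²)` of the four points span a linear subspace of
`ℝⁿ × ℝ × ℝ` of dimension at most 3. -/
theorem concyclic_iff_moebius_lifts_planar
    (n : ℕ) (hn : 2 ≤ n) (a b c d : EuclideanSpace ℝ (Fin n))
    (hab : a ≠ b) (hac : a ≠ c) (had : a ≠ d) (hbc : b ≠ c) (hbd : b ≠ d)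
    (hcd : c ≠ d)
    (hcol : ¬ Collinear ℝ ({a, b, c} : Set (EuclideanSpace ℝ (Fin n)))) :
    Concyclic ({a, b, c, d} : Set (EuclideanSpace ℝ (Fin n))) ↔
      Module.finrank ℝ
        ↥(Submodule.span ℝ
          ({(a, 1, ‖a‖ ^ 2), (b, 1, ‖b‖ ^ 2), (c, 1, ‖c‖ ^ 2), (d, 1, ‖d‖ ^ 2)} :
            Set (EuclideanSpace ℝ (Fin n) × ℝ × ℝ))) ≤ 3 :=
  concyclic_iff_moebius_lifts_planar_general n a b c d hcol
end

section
/- Let v, v₁, v₂, v₁₂ ∈ ℝ³ be unit vectors with v, v₁, v₂ linearly independent, and let d, d₁, d₂, d₁₂ ∈ ℝ. Let P, P₁, P₂, P₁₂ be the corresponding oriented planes P_a = {y ∈ ℝ³ : ⟨v_a, y⟩ = d_a}. Then the four vectors (v, d, 1), (v₁, d₁, 1), (v₂, d₂, 1), (v₁₂, d₁₂, 1) of ℝ³ × ℝ × ℝ span a linear subspace of dimension at most 3 if and only if the four planes P, P₁, P₂, P₁₂ have a common point and v₁₂ lies in the affine span of {v, v₁, v₂} (so that the four unit normals lie in a common plane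 and hence on a circle of the unit sphere S²). That is, an elementary quadrilateral of planes is conical exactly when its Laguerre-geometric lifts are planar. -/
open scoped RealInnerProductSpace


lemma mem_span_triple' {V : Type*} [AddCommGroup V] [Module ℝ V] {u₀ u₁ u₂ x : V} :
    x ∈ Submodule.span ℝ ({u₀, u₁, u₂} : Set V) ↔
      ∃ a b c : ℝ, x = a • u₀ + b • u₁ + c • u₂ := by
  simp only [Submodule.mem_span_insert, Submodule.mem_span_singleton]
  constructor
  · rintro ⟨a, z, ⟨b, w, ⟨c, rfl⟩, rfl⟩, rfl⟩
    exact ⟨a, b, c, by abel⟩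
  · rintro ⟨a, b, c, rfl⟩
    exact ⟨a, _, ⟨b, _, ⟨c, rfl⟩, rfl⟩, by abel⟩

lemma mem_affineSpan_triple' {V : Type*} [AddCommGroup V] [Module ℝ V] {p₀ p₁ p₂ x : V} :
    x ∈ affineSpan ℝ ({p₀, p₁, p₂} : Set V) ↔
      ∃ a b c : ℝ, a + b + c = 1 ∧ x = a • p₀ + b • p₁ + c • p₂ := by
  have hp₀ : p₀ ∈ ({p₀, p₁, p₂} : Set V) := by simp
  have hmem : p₀ ∈ affineSpan ℝ ({p₀, p₁, p₂} : Set V) := mem_affineSpan ℝ hp₀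
  rw [← AffineSubspace.vsub_right_mem_direction_iff_mem hmem x, direction_affineSpan,
    vectorSpan_eq_span_vsub_set_right ℝ hp₀]
  have himg : (· -ᵥ p₀) '' ({p₀, p₁, p₂} : Set V) = {0, p₁ - p₀, p₂ - p₀} := by
    simp [Set.image_insert_eq, vsub_eq_sub]
  rw [himg, Submodule.span_insert_zero, Submodule.mem_span_pair]
  constructor
  · rintro ⟨b, c, h⟩
    refine ⟨1 - b - c, b, c, by ring, ?_⟩
    rw [vsub_eq_sub] at h
    linear_combination (norm := module) -h
  · rintro ⟨a, b, c, hsum, hx⟩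
    refine ⟨b, c, ?_⟩
    rw [vsub_eq_sub, hx]
    have ha : a = 1 - b - c := by linarith
    subst ha
    module

/-- **Conicality is equivalent to planarity of the Laguerre lifts.**
For unit vectors `v, v₁, v₂, v₁₂` in ℝ³ with `v, v₁, v₂` linearly independent, and
offsets `d, d₁, d₂, d₁₂`, the Laguerre-geometric lifts `(v, d, 1)` of the four
oriented planes `{y : ⟨vₐ, y⟩ = dₐ}` span a subspace of dimension at most 3 if and
only if the four planes have a common point and `v₁₂` lies in the affine span of
`{v, v₁, v₂}` (so that the four unit normals lie on a circle of `S²`). -/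
theorem conical_iff_laguerre_lifts_planar
    (v v₁ v₂ v₁₂ : EuclideanSpace ℝ (Fin 3))
    (hv : ‖v‖ = 1) (hv₁ : ‖v₁‖ = 1) (hv₂ : ‖v₂‖ = 1) (hv₁₂ : ‖v₁₂‖ = 1)
    (hindep : LinearIndependent ℝ ![v, v₁, v₂])
    (d d₁ d₂ d₁₂ : ℝ) :
    Module.finrank ℝ
        ↥(Submodule.span ℝ
          ({(v, d, 1), (v₁, d₁, 1), (v₂, d₂, 1), (v₁₂, d₁₂, 1)} :
            Set (EuclideanSpace ℝ (Fin 3) × ℝ × ℝ))) ≤ 3 ↔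
      ((∃ y : EuclideanSpace ℝ (Fin 3),
          ⟪v, y⟫ = d ∧ ⟪v₁, y⟫ = d₁ ∧ ⟪v₂, y⟫ = d₂ ∧ ⟪v₁₂, y⟫ = d₁₂) ∧
        v₁₂ ∈ affineSpan ℝ ({v, v₁, v₂} : Set (EuclideanSpace ℝ (Fin 3)))) := by
  classical
  have hcomp : (⇑(LinearMap.fst ℝ (EuclideanSpace ℝ (Fin 3)) (ℝ × ℝ))) ∘
      ![(v, d, 1), (v₁, d₁, 1), (v₂, d₂, 1)] = ![v, v₁, v₂] := by
    ext i
    fin_cases i <;> rfl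
  have hL3 : LinearIndependent ℝ
      ![((v, d, 1) : EuclideanSpace ℝ (Fin 3) × ℝ × ℝ), (v₁, d₁, 1), (v₂, d₂, 1)] := by
    apply LinearIndependent.of_comp (LinearMap.fst ℝ (EuclideanSpace ℝ (Fin 3)) (ℝ × ℝ))
    rw [hcomp]
    exact hindep
  have hrange3 : Set.range ![((v, d, 1) : EuclideanSpace ℝ (Fin 3) × ℝ × ℝ),
      (v₁, d₁, 1), (v₂, d₂, 1)] =
      ({(v, d, 1), (v₁, d₁, 1), (v₂, d₂, 1)} : Set (EuclideanSpace ℝ (Fin 3) × ℝ × ℝ)) := by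
    ext x
    simp [Matrix.range_cons, Matrix.range_empty]
    tauto
  -- key reduction: rank condition ↔ span membership
  have key : Module.finrank ℝ
      ↥(Submodule.span ℝ
        ({(v, d, 1), (v₁, d₁, 1), (v₂, d₂, 1), (v₁₂, d₁₂, 1)} :
          Set (EuclideanSpace ℝ (Fin 3) × ℝ × ℝ))) ≤ 3 ↔
      ((v₁₂, d₁₂, 1) : EuclideanSpace ℝ (Fin 3) × ℝ × ℝ) ∈ Submodule.span ℝ
        ({(v, d, 1), (v₁, d₁, 1), (v₂, d₂, 1)} : Set (EuclideanSpace ℝ (Fin 3) × ℝ × ℝ)) := by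
    constructor
    · intro h
      by_contra hn
      have h4 : LinearIndependent ℝ
          ![((v₁₂, d₁₂, 1) : EuclideanSpace ℝ (Fin 3) × ℝ × ℝ),
            (v, d, 1), (v₁, d₁, 1), (v₂, d₂, 1)] :=
        linearIndependent_fin_cons.mpr ⟨hL3, by rwa [hrange3]⟩
      have hr4 : Set.range ![((v₁₂, d₁₂, 1) : EuclideanSpace ℝ (Fin 3) × ℝ × ℝ),
          (v, d, 1), (v₁, d₁, 1), (v₂, d₂, 1)] =
          ({(v, d, 1), (v₁, d₁, 1), (v₂, d₂, 1), (v₁₂, d₁₂, 1)} :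
            Set (EuclideanSpace ℝ (Fin 3) × ℝ × ℝ)) := by
        ext x
        simp [Matrix.range_cons, Matrix.range_empty]
        tauto
      have hfr := finrank_span_eq_card h4
      rw [hr4] at hfr
      rw [hfr] at h
      simp at h
    · intro hmem
      have hle : Submodule.span ℝ
          ({(v, d, 1), (v₁, d₁, 1), (v₂, d₂, 1), (v₁₂, d₁₂, 1)} :
            Set (EuclideanSpace ℝ (Fin 3) × ℝ × ℝ)) ≤
          Submodule.span ℝ
          ({(v, d, 1), (v₁, d₁, 1), (v₂, d₂, 1)} :
            Set (EuclideanSpace ℝ (Fin 3) × ℝ × ℝ)) := by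
        rw [Submodule.span_le]
        rintro x hx
        simp only [Set.mem_insert_iff, Set.mem_singleton_iff] at hx
        rcases hx with rfl | rfl | rfl | rfl
        · exact Submodule.subset_span (by simp)
        · exact Submodule.subset_span (by simp)
        · exact Submodule.subset_span (by simp)
        · exact hmem
      have h3 := finrank_span_eq_card hL3
      rw [hrange3] at h3
      exact le_trans (Submodule.finrank_mono hle) (by rw [h3]; simp)
  -- existence of a point solving the first three plane equations
  have hspan : Submodule.span ℝ (Set.range ![v, v₁, v₂]) = ⊤ :=
    hindep.span_eq_top_of_card_eq_finrank (by simp [finrank_euclideanSpace])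
  obtain ⟨y₀, hy₀, hy₁, hy₂⟩ :
      ∃ y₀ : EuclideanSpace ℝ (Fin 3), ⟪v, y₀⟫ = d ∧ ⟪v₁, y₀⟫ = d₁ ∧ ⟪v₂, y₀⟫ = d₂ := by
    set g : EuclideanSpace ℝ (Fin 3) →ₗ[ℝ] (Fin 3 → ℝ) :=
      LinearMap.pi (fun i => (innerSL ℝ (![v, v₁, v₂] i)).toLinearMap) with hg
    have hinj : Function.Injective g := by
      rw [← LinearMap.ker_eq_bot, Submodule.eq_bot_iff]
      intro y hy
      have hyz : ∀ i, ⟪![v, v₁, v₂] i, y⟫ = 0 := by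
        intro i
        have := congrFun (LinearMap.mem_ker.mp hy) i
        simpa [hg] using this
      have hall : ∀ x ∈ Submodule.span ℝ (Set.range ![v, v₁, v₂]), ⟪x, y⟫ = 0 := by
        intro x hx
        induction hx using Submodule.span_induction with
        | mem x h => obtain ⟨i, rfl⟩ := h; exact hyz i
        | zero => simp
        | add a b _ _ ha hb => rw [inner_add_left, ha, hb, add_zero]
        | smul r x _ hx => rw [real_inner_smul_left, hx, mul_zero]
      have : ⟪y, y⟫ = (0 : ℝ) := hall y (by rw [hspan]; trivial)
      exact inner_self_eq_zero.mp this
    have hsurj : Function.Surjective g :=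
      (LinearMap.injective_iff_surjective_of_finrank_eq_finrank
        (by simp [finrank_euclideanSpace])).mp hinj
    obtain ⟨y₀, hy₀⟩ := hsurj ![d, d₁, d₂]
    refine ⟨y₀, ?_, ?_, ?_⟩
    · simpa [hg] using congrFun hy₀ 0
    · simpa [hg] using congrFun hy₀ 1
    · simpa [hg] using congrFun hy₀ 2
  rw [key]
  constructor
  · intro hmem
    obtain ⟨a, b, c, hcomb⟩ := mem_span_triple'.mp hmem
    simp only [Prod.smul_mk, Prod.mk_add_mk, Prod.ext_iff, smul_eq_mul, mul_one] at hcomb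
    obtain ⟨hvcomb, hdcomb, hsum⟩ := hcomb
    constructor
    · refine ⟨y₀, hy₀, hy₁, hy₂, ?_⟩
      rw [hvcomb, inner_add_left, inner_add_left, real_inner_smul_left,
        real_inner_smul_left, real_inner_smul_left, hy₀, hy₁, hy₂]
      exact hdcomb.symm
    · exact mem_affineSpan_triple'.mpr ⟨a, b, c, hsum.symm, hvcomb⟩
  · rintro ⟨⟨y, hyv, hyv₁, hyv₂, hyv₁₂⟩, haff⟩
    obtain ⟨a, b, c, hsum, hvcomb⟩ := mem_affineSpan_triple'.mp haff
    have hd : d₁₂ = a * d + b * d₁ + c * d₂ := by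
      rw [← hyv₁₂, hvcomb, inner_add_left, inner_add_left, real_inner_smul_left,
        real_inner_smul_left, real_inner_smul_left, hyv, hyv₁, hyv₂]
    refine mem_span_triple'.mpr ⟨a, b, c, ?_⟩
    simp only [Prod.smul_mk, Prod.mk_add_mk, Prod.ext_iff, smul_eq_mul, mul_one]
    exact ⟨hvcomb, hd, hsum.symm⟩
end

section
/- Let V be a real vector space with a symmetric bilinear form B. Let ℓ, ℓ₁, ℓ₂ be 2-dimensional totally isotropic subspaces with ℓ ∩ ℓ₁ ≠ 0, ℓ ∩ ℓ₂ ≠ 0, ℓ₁ ∩ ℓ₂ = 0, and such that U := ℓ ⊔ ℓ₁ ⊔ ℓ₂ has dimension 4. Let s ∈ U be an isotropic vector (B(s, s) = 0) with s ∉ ℓ₁ and s ∉ ℓ₂. Then ℓ₁₂ := (ℓ₁ ⊔ span{s}) ∩ (ℓ₂ ⊔ span{s}) is a 2-dimensional totally isotropic subspace containing s, with ℓ₁₂ ∩ ℓ₁ ≠ 0 and ℓ₁₂ ∩ ℓ₂ ≠ 0. (This is the elementary construction step showing that a discrete R-congruence of spheres can be extended to a principal contact element net: given three contact elements ℓ,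 ℓ₁, ℓ₂ of an elementary quadrilateral and a sphere ŝ₁₂ in the plane of the quadrilateral, there is an isotropic line ℓ₁₂ through ŝ₁₂ intersecting ℓ₁ and ℓ₂.) -/
/-- **Elementary construction step for extending an R-congruence to a principal
contact element net.** Let `ℓ, ℓ₁, ℓ₂` be 2-dimensional totally isotropic subspaces
(isotropic lines) with `ℓ` meeting `ℓ₁` and `ℓ₂`, `ℓ₁ ⊓ ℓ₂ = ⊥`, whose join `U` is
4-dimensional, and let `s ∈ U` be an isotropic vector with `s ∉ ℓ₁`, `s ∉ ℓ₂`. Then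
`ℓ₁₂ := (ℓ₁ ⊔ span {s}) ⊓ (ℓ₂ ⊔ span {s})` is a 2-dimensional totally isotropic
subspace containing `s` and meeting both `ℓ₁` and `ℓ₂`. -/
theorem isotropic_line_through_sphere_of_quadrilateral
    (V : Type*) [AddCommGroup V] [Module ℝ V]
    (B : LinearMap.BilinForm ℝ V) (hB : ∀ x y : V, B x y = B y x)
    (ℓ ℓ₁ ℓ₂ : Submodule ℝ V)
    (hℓ2 : Module.finrank ℝ ↥ℓ = 2)
    (hℓ₁2 : Module.finrank ℝ ↥ℓ₁ = 2)
    (hℓ₂2 : Module.finrank ℝ ↥ℓ₂ = 2)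
    (hℓiso : ∀ x ∈ ℓ, ∀ y ∈ ℓ, B x y = 0)
    (hℓ₁iso : ∀ x ∈ ℓ₁, ∀ y ∈ ℓ₁, B x y = 0)
    (hℓ₂iso : ∀ x ∈ ℓ₂, ∀ y ∈ ℓ₂, B x y = 0)
    (h01 : ℓ ⊓ ℓ₁ ≠ ⊥) (h02 : ℓ ⊓ ℓ₂ ≠ ⊥) (h12 : ℓ₁ ⊓ ℓ₂ = ⊥)
    (hU : Module.finrank ℝ ↥(ℓ ⊔ ℓ₁ ⊔ ℓ₂) = 4)
    (s : V) (hsU : s ∈ ℓ ⊔ ℓ₁ ⊔ ℓ₂) (hs : B s s = 0)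
    (hs1 : s ∉ ℓ₁) (hs2 : s ∉ ℓ₂) :
    Module.finrank ℝ
        ↥((ℓ₁ ⊔ Submodule.span ℝ {s}) ⊓ (ℓ₂ ⊔ Submodule.span ℝ {s})) = 2 ∧
      (∀ x ∈ (ℓ₁ ⊔ Submodule.span ℝ {s}) ⊓ (ℓ₂ ⊔ Submodule.span ℝ {s}),
        ∀ y ∈ (ℓ₁ ⊔ Submodule.span ℝ {s}) ⊓ (ℓ₂ ⊔ Submodule.span ℝ {s}),
          B x y = 0) ∧
      s ∈ (ℓ₁ ⊔ Submodule.span ℝ {s}) ⊓ (ℓ₂ ⊔ Submodule.span ℝ {s}) ∧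
      (ℓ₁ ⊔ Submodule.span ℝ {s}) ⊓ (ℓ₂ ⊔ Submodule.span ℝ {s}) ⊓ ℓ₁ ≠ ⊥ ∧
      (ℓ₁ ⊔ Submodule.span ℝ {s}) ⊓ (ℓ₂ ⊔ Submodule.span ℝ {s}) ⊓ ℓ₂ ≠ ⊥ := by
  haveI F1 : FiniteDimensional ℝ ↥ℓ₁ := .of_finrank_pos (by omega)
  haveI F2 : FiniteDimensional ℝ ↥ℓ₂ := .of_finrank_pos (by omega)
  haveI FU : FiniteDimensional ℝ ↥(ℓ ⊔ ℓ₁ ⊔ ℓ₂) := .of_finrank_pos (by omega)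
  -- ℓ₁ ⊔ ℓ₂ = whole U
  have hsup : ℓ₁ ⊔ ℓ₂ = ℓ ⊔ ℓ₁ ⊔ ℓ₂ := by
    apply Submodule.eq_of_le_of_finrank_eq
    · exact sup_le (le_sup_of_le_left le_sup_right) le_sup_right
    · have h := Submodule.finrank_sup_add_finrank_inf_eq ℓ₁ ℓ₂
      rw [h12] at h
      simp only [finrank_bot] at h
      omega
  have hsU' : s ∈ ℓ₁ ⊔ ℓ₂ := by rw [hsup]; exact hsU
  obtain ⟨a₁, ha₁, a₂, ha₂, hsum⟩ := Submodule.mem_sup.mp hsU'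
  have hane1 : a₁ ≠ 0 := by
    rintro rfl; exact hs2 (by rw [← hsum, zero_add]; exact ha₂)
  have hane2 : a₂ ≠ 0 := by
    rintro rfl; exact hs1 (by rw [← hsum, add_zero]; exact ha₁)
  have hsne : s ≠ 0 := fun h => hs1 (h ▸ ℓ₁.zero_mem)
  -- B a₁ a₂ = 0
  have hB12 : B a₁ a₂ = 0 := by
    have hexp : B s s = B a₁ a₁ + B a₁ a₂ + (B a₂ a₁ + B a₂ a₂) := by
      rw [← hsum]; simp only [map_add, LinearMap.add_apply]; ring
    rw [hℓ₁iso a₁ ha₁ a₁ ha₁, hℓ₂iso a₂ ha₂ a₂ ha₂, hB a₂ a₁, hs] at hexp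
    linarith
  have hBa1s : B a₁ s = 0 := by
    rw [← hsum, map_add, hℓ₁iso a₁ ha₁ a₁ ha₁, hB12]; ring
  -- the intersection equals span {a₁, s}
  have hkey : (ℓ₁ ⊔ Submodule.span ℝ {s}) ⊓ (ℓ₂ ⊔ Submodule.span ℝ {s})
      = Submodule.span ℝ {a₁, s} := by
    apply le_antisymm
    · rintro x ⟨hx1, hx2⟩
      obtain ⟨u₁, hu₁, z₁, hz₁, hxe1⟩ := Submodule.mem_sup.mp hx1
      obtain ⟨c, rfl⟩ := Submodule.mem_span_singleton.mp hz₁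
      obtain ⟨u₂, hu₂, z₂, hz₂, hxe2⟩ := Submodule.mem_sup.mp hx2
      obtain ⟨d, rfl⟩ := Submodule.mem_span_singleton.mp hz₂
      have heq : u₁ + c • (a₁ + a₂) = u₂ + d • (a₁ + a₂) := by
        rw [hsum]; exact hxe1.trans hxe2.symm
      have hw : u₁ - (d - c) • a₁ = u₂ + (d - c) • a₂ := by
        linear_combination (norm := module) heq
      have hmem : u₁ - (d - c) • a₁ ∈ ℓ₁ ⊓ ℓ₂ := by
        constructor
        · exact ℓ₁.sub_mem hu₁ (ℓ₁.smul_mem _ ha₁)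
        · rw [hw]; exact ℓ₂.add_mem hu₂ (ℓ₂.smul_mem _ ha₂)
      rw [h12, Submodule.mem_bot, sub_eq_zero] at hmem
      rw [Submodule.mem_span_pair]
      exact ⟨d - c, c, by rw [← hxe1, hmem]⟩
    · rw [Submodule.span_le, Set.insert_subset_iff, Set.singleton_subset_iff]
      constructor
      · refine ⟨Submodule.mem_sup_left ha₁, ?_⟩
        have ha1e : a₁ = (-a₂) + s := by rw [← hsum]; abel
        rw [SetLike.mem_coe, ha1e]
        exact (ℓ₂ ⊔ Submodule.span ℝ {s}).add_mem
          (Submodule.mem_sup_left (ℓ₂.neg_mem ha₂))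
          (Submodule.mem_sup_right (Submodule.mem_span_singleton_self s))
      · exact ⟨Submodule.mem_sup_right (Submodule.mem_span_singleton_self s),
          Submodule.mem_sup_right (Submodule.mem_span_singleton_self s)⟩
  rw [hkey]
  have hs_not_span : s ∉ Submodule.span ℝ ({a₁} : Set V) := by
    intro h
    obtain ⟨c, rfl⟩ := Submodule.mem_span_singleton.mp h
    exact hs1 (ℓ₁.smul_mem c ha₁)
  refine ⟨?_, ?_, ?_, ?_, ?_⟩
  · -- finrank = 2
    have hinf : Submodule.span ℝ ({a₁} : Set V) ⊓ Submodule.span ℝ ({s} : Set V) = ⊥ := by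
      rw [eq_bot_iff]
      rintro x ⟨hx1, hx2⟩
      obtain ⟨c, rfl⟩ := Submodule.mem_span_singleton.mp hx2
      rcases eq_or_ne c 0 with rfl | hc
      · simp
      · exfalso
        apply hs_not_span
        have : s = c⁻¹ • (c • s) := by rw [smul_smul, inv_mul_cancel₀ hc, one_smul]
        rw [this]
        exact (Submodule.span ℝ ({a₁} : Set V)).smul_mem _ hx1
    have h := Submodule.finrank_sup_add_finrank_inf_eq
      (Submodule.span ℝ ({a₁} : Set V)) (Submodule.span ℝ ({s} : Set V))
    rw [hinf, finrank_span_singleton hane1, finrank_span_singleton hsne] at h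
    simp only [finrank_bot] at h
    rw [show ({a₁, s} : Set V) = insert a₁ {s} from rfl, Submodule.span_insert]
    omega
  · -- isotropic
    intro x hx y hy
    obtain ⟨cx, dx, rfl⟩ := Submodule.mem_span_pair.mp hx
    obtain ⟨cy, dy, rfl⟩ := Submodule.mem_span_pair.mp hy
    simp only [map_add, map_smul, LinearMap.add_apply, LinearMap.smul_apply, smul_eq_mul]
    rw [hℓ₁iso a₁ ha₁ a₁ ha₁, hBa1s, hB s a₁, hBa1s, hs]
    ring
  · exact Submodule.subset_span (by simp)
  · rw [Submodule.ne_bot_iff]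
    exact ⟨a₁, ⟨Submodule.subset_span (by simp), ha₁⟩, hane1⟩
  · rw [Submodule.ne_bot_iff]
    refine ⟨a₂, ⟨?_, ha₂⟩, hane2⟩
    have : a₂ = (-1 : ℝ) • a₁ + (1 : ℝ) • s := by
      rw [← hsum]; module
    exact Submodule.mem_span_pair.mpr ⟨-1, 1, this.symm⟩
end

section
/- Let (x, v) : ℤ² → ℝ³ × ℝ³ with |v(u)| = 1 be a principal contact element net: for every u ∈ ℤ² and i ∈ {1,2} there exist c ∈ ℝ³ and r ∈ ℝ with c = x(u) + r·v(u) and c = x(u+e_i) + r·v(u+e_i). Fix u ∈ ℤ² and suppose that the four points x(u), x(u+e₁), x(u+e₁+e₂), x(u+e₂) are pairwise distinct, that no three of them are collinear, and that at each of the four vertices of the quadrilateral the principal curvature spheres (c, r) of the two edges adjacent to that vertex are distinct. Then the four points x(u), x(u+e₁), x(u+e₁+e₂), x(u+e₂) are concyclic. (The points of a principal contact element net form a circular net.) -/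
/-!
An edge equation `X + ρ • n = X' + ρ • n'` says `X' - X = ρ • (n - n')`. Summed around the
quadrilateral `A B C D` (radii `r s t w` on the edges `AB BC DC AD`) these give a linear relation
among the four unit normals. Eliminating the normals yields
`α • (D - A) + β • (B - A) + γ • (C - A) = 0` with `α = r s (w - t)`, and pairing the normal
relation with each normal shows that the same coefficients annihilate
`‖D - A‖², ‖B - A‖², ‖C - A‖²`. A sphere through `A` centred at `o` is the quadric
`‖X - A‖² = 2 ⟪X - A, o - A⟫`, so such a relation with `α ≠ 0` puts `D` in the plane of `A B C`
and on the circumcircle of `A B C`.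
-/

open EuclideanGeometry RealInnerProductSpace

section Concyclic

variable {V P : Type*} [NormedAddCommGroup V] [InnerProductSpace ℝ V] [MetricSpace P]
  [NormedAddTorsor V P]

theorem dist_eq_dist_iff_norm_vsub_sq_eq_two_inner {A X o : P} :
    dist X o = dist A o ↔ ‖X -ᵥ A‖ ^ 2 = 2 * ⟪X -ᵥ A, o -ᵥ A⟫ := by
  rw [dist_eq_norm_vsub V, dist_comm, dist_eq_norm_vsub V, ← vsub_sub_vsub_cancel_right X o A,
    ← sq_eq_sq₀ (norm_nonneg _) (norm_nonneg _), norm_sub_sq_real]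
  constructor <;> intro h <;> linarith

variable {A B C D : P} {α β γ : ℝ}

theorem mem_affineSpan_of_smul_vsub_add_eq_zero (hα : α ≠ 0)
    (h : α • (D -ᵥ A) + β • (B -ᵥ A) + γ • (C -ᵥ A) = 0) :
    D ∈ affineSpan ℝ {A, B, C} := by
  have hA : A ∈ affineSpan ℝ {A, B, C} := mem_affineSpan ℝ (by simp)
  have hB : B -ᵥ A ∈ (affineSpan ℝ {A, B, C}).direction :=
    AffineSubspace.vsub_mem_direction (mem_affineSpan ℝ (by simp)) hA
  have hC : C -ᵥ A ∈ (affineSpan ℝ {A, B, C}).direction :=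
    AffineSubspace.vsub_mem_direction (mem_affineSpan ℝ (by simp)) hA
  have hD : α • (D -ᵥ A) = -(β • (B -ᵥ A) + γ • (C -ᵥ A)) := by
    linear_combination (norm := module) h
  rw [← AffineSubspace.vsub_right_mem_direction_iff_mem hA, ← Submodule.smul_mem_iff _ hα, hD]
  exact neg_mem (add_mem (Submodule.smul_mem _ β hB) (Submodule.smul_mem _ γ hC))

theorem dist_eq_of_smul_vsub_add_eq_zero {o : P} (hB : dist B o = dist A o)
    (hC : dist C o = dist A o) (hα : α ≠ 0)
    (hvec : α • (D -ᵥ A) + β • (B -ᵥ A) + γ • (C -ᵥ A) = 0)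
    (hnorm : α * ‖D -ᵥ A‖ ^ 2 + β * ‖B -ᵥ A‖ ^ 2 + γ * ‖C -ᵥ A‖ ^ 2 = 0) :
    dist D o = dist A o := by
  rw [dist_eq_dist_iff_norm_vsub_sq_eq_two_inner] at hB hC ⊢
  have hinner := congrArg (⟪·, o -ᵥ A⟫) hvec
  simp only [inner_add_left, real_inner_smul_left, inner_zero_left] at hinner
  refine mul_left_cancel₀ hα ?_
  linear_combination hnorm - 2 * hinner - β * hB - γ * hC

theorem concyclic_of_smul_vsub_add_eq_zero (hABC : ¬ Collinear ℝ {A, B, C}) (hα : α ≠ 0)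
    (hvec : α • (D -ᵥ A) + β • (B -ᵥ A) + γ • (C -ᵥ A) = 0)
    (hnorm : α * ‖D -ᵥ A‖ ^ 2 + β * ‖B -ᵥ A‖ ^ 2 + γ * ‖C -ᵥ A‖ ^ 2 = 0) :
    Concyclic ({A, B, C, D} : Set P) := by
  have hD := mem_affineSpan_of_smul_vsub_add_eq_zero hα hvec
  let T : Affine.Simplex ℝ P 2 := ⟨![A, B, C], affineIndependent_iff_not_collinear_set.2 hABC⟩
  have hA : dist A T.circumcenter = T.circumradius := T.dist_circumcenter_eq_circumradius 0
  have hB : dist B T.circumcenter = T.circumradius := T.dist_circumcenter_eq_circumradius 1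
  have hC : dist C T.circumcenter = T.circumradius := T.dist_circumcenter_eq_circumradius 2
  refine ⟨⟨T.circumcenter, T.circumradius, ?_⟩, ?_⟩
  · have hD' :=
      dist_eq_of_smul_vsub_add_eq_zero (hB.trans hA.symm) (hC.trans hA.symm) hα hvec hnorm
    simp only [Set.mem_insert_iff, Set.mem_singleton_iff]
    rintro X (rfl | rfl | rfl | rfl) <;> [exact hA; exact hB; exact hC; exact hD'.trans hA]
  · have hset : ({A, B, C, D} : Set P) = insert D {A, B, C} := by
      ext; simp only [Set.mem_insert_iff, Set.mem_singleton_iff]; tauto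
    rw [hset, coplanar_insert_iff_of_mem_affineSpan hD]
    exact coplanar_triple (k := ℝ) A B C

end Concyclic

section CommonSpheres

variable {V : Type*} [NormedAddCommGroup V] [InnerProductSpace ℝ V] {A B C D a b c d : V}
  {r s t w : ℝ}

theorem smul_sub_add_eq_zero_of_common_spheres (hAB : A + r • a = B + r • b)
    (hBC : B + s • b = C + s • c) (hDC : D + t • d = C + t • c) (hAD : A + w • a = D + w • d) :
    (r * s * (w - t)) • (D - A) + (w * t * (s - r)) • (B - A)
      + (w * r * (t - s)) • (C - A) = 0 := by
  linear_combination (norm := module)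
    (-(s * w * t)) • hAB - (r * w * t) • hBC + (r * s * w) • hDC + (r * s * t) • hAD

theorem norm_sq_relation_of_common_spheres (ha : ‖a‖ = 1) (hb : ‖b‖ = 1) (hc : ‖c‖ = 1)
    (hd : ‖d‖ = 1) (hAB : A + r • a = B + r • b) (hBC : B + s • b = C + s • c)
    (hDC : D + t • d = C + t • c) (hAD : A + w • a = D + w • d) :
    r * s * (w - t) * ‖D - A‖ ^ 2 + w * t * (s - r) * ‖B - A‖ ^ 2
      + w * r * (t - s) * ‖C - A‖ ^ 2 = 0 := by
  have hclose : (r - w) • a + (s - r) • b + (t - s) • c + (w - t) • d = 0 := by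
    linear_combination (norm := module) hAB + hBC - hDC - hAD
  have hDA : D - A = w • (a - d) := by linear_combination (norm := module) -hAD
  have hBA : B - A = r • (a - b) := by linear_combination (norm := module) -hAB
  have hCA : C - A = r • (a - b) + s • (b - c) := by
    linear_combination (norm := module) -hAB - hBC
  have ka := congrArg (⟪·, a⟫) hclose
  have kb := congrArg (⟪·, b⟫) hclose
  have kc := congrArg (⟪·, c⟫) hclose
  have kd := congrArg (⟪·, d⟫) hclose
  have haa : ⟪a, a⟫ = 1 := inner_self_eq_one_of_norm_eq_one ha
  have hbb : ⟪b, b⟫ = 1 := inner_self_eq_one_of_norm_eq_one hb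
  have hcc : ⟪c, c⟫ = 1 := inner_self_eq_one_of_norm_eq_one hc
  have hdd : ⟪d, d⟫ = 1 := inner_self_eq_one_of_norm_eq_one hd
  simp only [inner_add_left, real_inner_smul_left, inner_zero_left, haa, hbb, hcc, hdd,
    real_inner_comm a b, real_inner_comm a c, real_inner_comm a d, real_inner_comm b c,
    real_inner_comm b d, real_inner_comm c d] at ka kb kc kd
  rw [hDA, hBA, hCA, ← real_inner_self_eq_norm_sq, ← real_inner_self_eq_norm_sq,
    ← real_inner_self_eq_norm_sq]
  simp only [inner_add_left, inner_add_right, inner_sub_left, inner_sub_right,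
    real_inner_smul_left, real_inner_smul_right, haa, hbb, hcc, hdd,
    real_inner_comm a b, real_inner_comm a c, real_inner_comm a d, real_inner_comm b c]
  linear_combination (-(r * s * w * (r + w))) * ka - (r * s * w * (s - r)) * kb
    - (r * s * w * (t - s)) * kc + (r * s * w * (w - t)) * kd

end CommonSpheres

theorem points_of_principal_net_are_circular_general
    (x v : ℤ × ℤ → EuclideanSpace ℝ (Fin 3))
    (hunit : ∀ u : ℤ × ℤ, ‖v u‖ = 1)
    (hprin1 : ∀ u : ℤ × ℤ, ∃ (c : EuclideanSpace ℝ (Fin 3)) (r : ℝ),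
        c = x u + r • v u ∧ c = x (u.1 + 1, u.2) + r • v (u.1 + 1, u.2))
    (hprin2 : ∀ u : ℤ × ℤ, ∃ (c : EuclideanSpace ℝ (Fin 3)) (r : ℝ),
        c = x u + r • v u ∧ c = x (u.1, u.2 + 1) + r • v (u.1, u.2 + 1))
    (u : ℤ × ℤ)
    -- the four vertices of the elementary quadrilateral at u are pairwise distinct
    (hd1 : x u ≠ x (u.1 + 1, u.2)) (hd4 : x (u.1 + 1, u.2) ≠ x (u.1 + 1, u.2 + 1))
    -- no three of the four vertices are collinear
    (hc1 : ¬ Collinear ℝ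
      ({x u, x (u.1 + 1, u.2), x (u.1 + 1, u.2 + 1)} : Set (EuclideanSpace ℝ (Fin 3))))
    -- at each vertex, the principal curvature spheres of the two adjacent edges differ
    (hv01 : ∀ (c : EuclideanSpace ℝ (Fin 3)) (r : ℝ) (c' : EuclideanSpace ℝ (Fin 3)) (r' : ℝ),
      (c = x u + r • v u ∧ c = x (u.1, u.2 + 1) + r • v (u.1, u.2 + 1)) →
      (c' = x (u.1, u.2 + 1) + r' • v (u.1, u.2 + 1) ∧
        c' = x (u.1 + 1, u.2 + 1) + r' • v (u.1 + 1, u.2 + 1)) →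
      (c, r) ≠ (c', r')) :
    Concyclic ({x u, x (u.1 + 1, u.2), x (u.1 + 1, u.2 + 1), x (u.1, u.2 + 1)} :
      Set (EuclideanSpace ℝ (Fin 3))) := by
  obtain ⟨p, r, hpA, hpB⟩ := hprin1 u
  obtain ⟨q, s, hqB, hqC⟩ := hprin2 (u.1 + 1, u.2)
  obtain ⟨m, t, hmD, hmC⟩ := hprin1 (u.1, u.2 + 1)
  obtain ⟨n, w, hnA, hnD⟩ := hprin2 u
  have hAB := hpA.symm.trans hpB
  have hBC := hqB.symm.trans hqC
  have hDC := hmD.symm.trans hmC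
  have hAD := hnA.symm.trans hnD
  have hr : r ≠ 0 := by rintro rfl; exact hd1 (by simpa using hAB)
  have hs : s ≠ 0 := by rintro rfl; exact hd4 (by simpa using hBC)
  have hwt : w - t ≠ 0 :=
    sub_ne_zero.2 fun h => hv01 n w m t ⟨hnA, hnD⟩ ⟨hmD, hmC⟩ (by rw [hnD, hmD, h])
  exact concyclic_of_smul_vsub_add_eq_zero hc1 (mul_ne_zero (mul_ne_zero hr hs) hwt)
    (smul_sub_add_eq_zero_of_common_spheres hAB hBC hDC hAD)
    (norm_sq_relation_of_common_spheres (hunit _) (hunit _) (hunit _) (hunit _) hAB hBC hDC hAD)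

/-- **The points of a principal contact element net form a circular net.**
Let `(x, v) : ℤ² → ℝ³ × S²` be a principal contact element net: any two neighboring
contact elements share an inscribed sphere (`c = x + r • v` for both). If at some
`u ∈ ℤ²` the four points of the elementary quadrilateral are pairwise distinct, no
three of them are collinear, and at each vertex the principal curvature spheres of
the two adjacent edges are distinct, then the four points are concyclic. -/
theorem points_of_principal_net_are_circular
    (x v : ℤ × ℤ → EuclideanSpace ℝ (Fin 3))
    (hunit : ∀ u : ℤ × ℤ, ‖v u‖ = 1)
    (hprin1 : ∀ u : ℤ × ℤ, ∃ (c : EuclideanSpace ℝ (Fin 3)) (r : ℝ),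
        c = x u + r • v u ∧ c = x (u.1 + 1, u.2) + r • v (u.1 + 1, u.2))
    (hprin2 : ∀ u : ℤ × ℤ, ∃ (c : EuclideanSpace ℝ (Fin 3)) (r : ℝ),
        c = x u + r • v u ∧ c = x (u.1, u.2 + 1) + r • v (u.1, u.2 + 1))
    (u : ℤ × ℤ)
    -- the four vertices of the elementary quadrilateral at u are pairwise distinct
    (hd1 : x u ≠ x (u.1 + 1, u.2)) (hd2 : x u ≠ x (u.1 + 1, u.2 + 1))
    (hd3 : x u ≠ x (u.1, u.2 + 1)) (hd4 : x (u.1 + 1, u.2) ≠ x (u.1 + 1, u.2 + 1))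
    (hd5 : x (u.1 + 1, u.2) ≠ x (u.1, u.2 + 1))
    (hd6 : x (u.1 + 1, u.2 + 1) ≠ x (u.1, u.2 + 1))
    -- no three of the four vertices are collinear
    (hc1 : ¬ Collinear ℝ
      ({x u, x (u.1 + 1, u.2), x (u.1 + 1, u.2 + 1)} : Set (EuclideanSpace ℝ (Fin 3))))
    (hc2 : ¬ Collinear ℝ
      ({x u, x (u.1 + 1, u.2), x (u.1, u.2 + 1)} : Set (EuclideanSpace ℝ (Fin 3))))
    (hc3 : ¬ Collinear ℝ
      ({x u, x (u.1 + 1, u.2 + 1), x (u.1, u.2 + 1)} : Set (EuclideanSpace ℝ (Fin 3))))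
    (hc4 : ¬ Collinear ℝ
      ({x (u.1 + 1, u.2), x (u.1 + 1, u.2 + 1), x (u.1, u.2 + 1)} :
        Set (EuclideanSpace ℝ (Fin 3))))
    -- at each vertex, the principal curvature spheres of the two adjacent edges differ
    (hv00 : ∀ (c : EuclideanSpace ℝ (Fin 3)) (r : ℝ) (c' : EuclideanSpace ℝ (Fin 3)) (r' : ℝ),
      (c = x u + r • v u ∧ c = x (u.1 + 1, u.2) + r • v (u.1 + 1, u.2)) →
      (c' = x u + r' • v u ∧ c' = x (u.1, u.2 + 1) + r' • v (u.1, u.2 + 1)) →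
      (c, r) ≠ (c', r'))
    (hv10 : ∀ (c : EuclideanSpace ℝ (Fin 3)) (r : ℝ) (c' : EuclideanSpace ℝ (Fin 3)) (r' : ℝ),
      (c = x u + r • v u ∧ c = x (u.1 + 1, u.2) + r • v (u.1 + 1, u.2)) →
      (c' = x (u.1 + 1, u.2) + r' • v (u.1 + 1, u.2) ∧
        c' = x (u.1 + 1, u.2 + 1) + r' • v (u.1 + 1, u.2 + 1)) →
      (c, r) ≠ (c', r'))
    (hv01 : ∀ (c : EuclideanSpace ℝ (Fin 3)) (r : ℝ) (c' : EuclideanSpace ℝ (Fin 3)) (r' : ℝ),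
      (c = x u + r • v u ∧ c = x (u.1, u.2 + 1) + r • v (u.1, u.2 + 1)) →
      (c' = x (u.1, u.2 + 1) + r' • v (u.1, u.2 + 1) ∧
        c' = x (u.1 + 1, u.2 + 1) + r' • v (u.1 + 1, u.2 + 1)) →
      (c, r) ≠ (c', r'))
    (hv11 : ∀ (c : EuclideanSpace ℝ (Fin 3)) (r : ℝ) (c' : EuclideanSpace ℝ (Fin 3)) (r' : ℝ),
      (c = x (u.1 + 1, u.2) + r • v (u.1 + 1, u.2) ∧
        c = x (u.1 + 1, u.2 + 1) + r • v (u.1 + 1, u.2 + 1)) →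
      (c' = x (u.1, u.2 + 1) + r' • v (u.1, u.2 + 1) ∧
        c' = x (u.1 + 1, u.2 + 1) + r' • v (u.1 + 1, u.2 + 1)) →
      (c, r) ≠ (c', r')) :
    Concyclic ({x u, x (u.1 + 1, u.2), x (u.1 + 1, u.2 + 1), x (u.1, u.2 + 1)} :
      Set (EuclideanSpace ℝ (Fin 3))) :=
  points_of_principal_net_are_circular_general x v hunit hprin1 hprin2 u hd1 hd4 hc1 hv01
end

section
/- Let (x, v) : ℤ² → ℝ³ × ℝ³ with |v(u)| = 1 be a principal contact element net: for every u ∈ ℤ² and i ∈ {1,2} there exist c ∈ ℝ³ and r ∈ ℝ with c = x(u) + r·v(u) and c = x(u+e_i) + r·v(u+e_i). Fix u ∈ ℤ² and suppose that the four points x(u), x(u+e₁), x(u+e₁+e₂), x(u+e₂) are pairwise distinct, that no three of them are collinear, that at each vertex of the quadrilateral the principal curvature spheres of the two adjacent edges are distinct, and that the three unit normals v(u), v(u+e₁), v(u+e₂) are linearly independent. Then the four oriented tangent planes P_a = {y ∈ ℝ³ : ⟨v_a, y⟩ = ⟨v_a, x_a⟩} at the four vertices have a common point, and the four unit normals v(u),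 v(u+e₁), v(u+e₁+e₂), v(u+e₂) lie in a common affine plane (their affine span has dimension at most 2), hence on a circle of the unit sphere S². (The tangent planes of a principal contact element net form a conical net.) -/
open EuclideanGeometry
open scoped RealInnerProductSpace

private lemma aux_lin {E : Type*} [NormedAddCommGroup E] [InnerProductSpace ℝ E]
    (c a n : E) (r : ℝ) (h : c = a + r • n) :
    r * ⟪n, a⟫ = ⟪c, a⟫ - ‖a‖^2 := by
  have : ⟪c, a⟫ = ⟪a, a⟫ + r * ⟪n, a⟫ := by
    rw [h, inner_add_left, real_inner_smul_left]
  rw [this, real_inner_self_eq_norm_sq]; ring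

private lemma aux_mid {E : Type*} [NormedAddCommGroup E] [InnerProductSpace ℝ E]
    (c a b n m : E) (r : ℝ) (ha : c = a + r • n) (hb : c = b + r • m)
    (hn : ‖n‖ = 1) (hm : ‖m‖ = 1) :
    2*⟪c,a⟫ - ‖a‖^2 = 2*⟪c,b⟫ - ‖b‖^2 := by
  have h1 : ‖c - a‖^2 = r^2 := by
    rw [ha]; simp [norm_smul, hn, mul_pow, sq_abs]
  have h2 : ‖c - b‖^2 = r^2 := by
    rw [hb]; simp [norm_smul, hm, mul_pow, sq_abs]
  have e1 : ‖c - a‖^2 = ‖c‖^2 - 2*⟪c,a⟫ + ‖a‖^2 := by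
    rw [norm_sub_sq_real]
  have e2 : ‖c - b‖^2 = ‖c‖^2 - 2*⟪c,b⟫ + ‖b‖^2 := by
    rw [norm_sub_sq_real]
  nlinarith [h1, h2, e1, e2]

set_option maxHeartbeats 1000000 in
/-- **The tangent planes of a principal contact element net form a conical net.**
Let `(x, v) : ℤ² → ℝ³ × S²` be a principal contact element net. If at some `u ∈ ℤ²`
the four points of the elementary quadrilateral are pairwise distinct, no three are
collinear, at each vertex the principal curvature spheres of the two adjacent edges
are distinct, and `v u, v (u+e₁), v (u+e₂)` are linearly independent, then the four
oriented tangent planes have a common point and the four unit normals lie in a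
common affine plane, hence on a circle of `S²`. -/
theorem planes_of_principal_net_are_conical
    (x v : ℤ × ℤ → EuclideanSpace ℝ (Fin 3))
    (hunit : ∀ u : ℤ × ℤ, ‖v u‖ = 1)
    (hprin1 : ∀ u : ℤ × ℤ, ∃ (c : EuclideanSpace ℝ (Fin 3)) (r : ℝ),
        c = x u + r • v u ∧ c = x (u.1 + 1, u.2) + r • v (u.1 + 1, u.2))
    (hprin2 : ∀ u : ℤ × ℤ, ∃ (c : EuclideanSpace ℝ (Fin 3)) (r : ℝ),
        c = x u + r • v u ∧ c = x (u.1, u.2 + 1) + r • v (u.1, u.2 + 1))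
    (u : ℤ × ℤ)
    (hd1 : x u ≠ x (u.1 + 1, u.2)) (hd2 : x u ≠ x (u.1 + 1, u.2 + 1))
    (hd3 : x u ≠ x (u.1, u.2 + 1)) (hd4 : x (u.1 + 1, u.2) ≠ x (u.1 + 1, u.2 + 1))
    (hd5 : x (u.1 + 1, u.2) ≠ x (u.1, u.2 + 1))
    (hd6 : x (u.1 + 1, u.2 + 1) ≠ x (u.1, u.2 + 1))
    (hc1 : ¬ Collinear ℝ
      ({x u, x (u.1 + 1, u.2), x (u.1 + 1, u.2 + 1)} : Set (EuclideanSpace ℝ (Fin 3))))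
    (hc2 : ¬ Collinear ℝ
      ({x u, x (u.1 + 1, u.2), x (u.1, u.2 + 1)} : Set (EuclideanSpace ℝ (Fin 3))))
    (hc3 : ¬ Collinear ℝ
      ({x u, x (u.1 + 1, u.2 + 1), x (u.1, u.2 + 1)} : Set (EuclideanSpace ℝ (Fin 3))))
    (hc4 : ¬ Collinear ℝ
      ({x (u.1 + 1, u.2), x (u.1 + 1, u.2 + 1), x (u.1, u.2 + 1)} :
        Set (EuclideanSpace ℝ (Fin 3))))
    (hv00 : ∀ (c : EuclideanSpace ℝ (Fin 3)) (r : ℝ) (c' : EuclideanSpace ℝ (Fin 3)) (r' : ℝ),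
      (c = x u + r • v u ∧ c = x (u.1 + 1, u.2) + r • v (u.1 + 1, u.2)) →
      (c' = x u + r' • v u ∧ c' = x (u.1, u.2 + 1) + r' • v (u.1, u.2 + 1)) →
      (c, r) ≠ (c', r'))
    (hv10 : ∀ (c : EuclideanSpace ℝ (Fin 3)) (r : ℝ) (c' : EuclideanSpace ℝ (Fin 3)) (r' : ℝ),
      (c = x u + r • v u ∧ c = x (u.1 + 1, u.2) + r • v (u.1 + 1, u.2)) →
      (c' = x (u.1 + 1, u.2) + r' • v (u.1 + 1, u.2) ∧
        c' = x (u.1 + 1, u.2 + 1) + r' • v (u.1 + 1, u.2 + 1)) →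
      (c, r) ≠ (c', r'))
    (hv01 : ∀ (c : EuclideanSpace ℝ (Fin 3)) (r : ℝ) (c' : EuclideanSpace ℝ (Fin 3)) (r' : ℝ),
      (c = x u + r • v u ∧ c = x (u.1, u.2 + 1) + r • v (u.1, u.2 + 1)) →
      (c' = x (u.1, u.2 + 1) + r' • v (u.1, u.2 + 1) ∧
        c' = x (u.1 + 1, u.2 + 1) + r' • v (u.1 + 1, u.2 + 1)) →
      (c, r) ≠ (c', r'))
    (hv11 : ∀ (c : EuclideanSpace ℝ (Fin 3)) (r : ℝ) (c' : EuclideanSpace ℝ (Fin 3)) (r' : ℝ),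
      (c = x (u.1 + 1, u.2) + r • v (u.1 + 1, u.2) ∧
        c = x (u.1 + 1, u.2 + 1) + r • v (u.1 + 1, u.2 + 1)) →
      (c' = x (u.1, u.2 + 1) + r' • v (u.1, u.2 + 1) ∧
        c' = x (u.1 + 1, u.2 + 1) + r' • v (u.1 + 1, u.2 + 1)) →
      (c, r) ≠ (c', r'))
    (hindep : LinearIndependent ℝ ![v u, v (u.1 + 1, u.2), v (u.1, u.2 + 1)]) :
    (∃ y : EuclideanSpace ℝ (Fin 3),
      ⟪v u, y⟫ = ⟪v u, x u⟫ ∧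
      ⟪v (u.1 + 1, u.2), y⟫ = ⟪v (u.1 + 1, u.2), x (u.1 + 1, u.2)⟫ ∧
      ⟪v (u.1 + 1, u.2 + 1), y⟫ = ⟪v (u.1 + 1, u.2 + 1), x (u.1 + 1, u.2 + 1)⟫ ∧
      ⟪v (u.1, u.2 + 1), y⟫ = ⟪v (u.1, u.2 + 1), x (u.1, u.2 + 1)⟫) ∧
    Coplanar ℝ ({v u, v (u.1 + 1, u.2), v (u.1 + 1, u.2 + 1), v (u.1, u.2 + 1)} :
      Set (EuclideanSpace ℝ (Fin 3))) ∧
    Concyclic ({v u, v (u.1 + 1, u.2), v (u.1 + 1, u.2 + 1), v (u.1, u.2 + 1)} :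
      Set (EuclideanSpace ℝ (Fin 3))) := by
  set a := x u with ha'
  set b := x (u.1 + 1, u.2) with hb'
  set d := x (u.1, u.2 + 1) with hd'
  set cc := x (u.1 + 1, u.2 + 1) with hcc'
  set n0 := v u with hn0'
  set n1 := v (u.1 + 1, u.2) with hn1'
  set n2 := v (u.1, u.2 + 1) with hn2'
  set n3 := v (u.1 + 1, u.2 + 1) with hn3'
  obtain ⟨c1, r1, h1a, h1b⟩ := hprin1 u
  obtain ⟨c2, r2, h2a, h2b⟩ := hprin2 u
  obtain ⟨c3, r3, h3a, h3b⟩ := hprin2 (u.1 + 1, u.2)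
  obtain ⟨c4, r4, h4a, h4b⟩ := hprin1 (u.1, u.2 + 1)
  -- normalize pairs
  simp only at h3a h3b h4a h4b
  have hrne : r3 ≠ r4 := by
    intro h
    exact hv11 c3 r3 c4 r4 ⟨h3a, h3b⟩ ⟨h4a, h4b⟩
      (by rw [Prod.mk.injEq]; exact ⟨by rw [h3b, h4b, h], h⟩)
  -- scalar identities
  have E1a := aux_lin c1 a n0 r1 h1a
  have E1b := aux_lin c1 b n1 r1 h1b
  have E2a := aux_lin c2 a n0 r2 h2a
  have E2b := aux_lin c2 d n2 r2 h2b
  have E3a := aux_lin c3 b n1 r3 h3a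
  have E3b := aux_lin c3 cc n3 r3 h3b
  have E4a := aux_lin c4 d n2 r4 h4a
  have E4b := aux_lin c4 cc n3 r4 h4b
  have M1 := aux_mid c1 a b n0 n1 r1 h1a h1b (hunit u) (hunit _)
  have M2 := aux_mid c2 a d n0 n2 r2 h2a h2b (hunit u) (hunit _)
  have M3 := aux_mid c3 b cc n1 n3 r3 h3a h3b (hunit _) (hunit _)
  have M4 := aux_mid c4 d cc n2 n3 r4 h4a h4b (hunit _) (hunit _)
  have hQ : (r2 - r1) * ⟪n0, a⟫ + (r1 - r3) * ⟪n1, b⟫ + (r4 - r2) * ⟪n2, d⟫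
      + (r3 - r4) * ⟪n3, cc⟫ = 0 := by linarith [E1a, E1b, E2a, E2b, E3a, E3b, E4a, E4b, M1, M2, M3, M4]
  -- vector identity
  have e1 : a + r1 • n0 = b + r1 • n1 := h1a.symm.trans h1b
  have e2 : a + r2 • n0 = d + r2 • n2 := h2a.symm.trans h2b
  have e3 : b + r3 • n1 = cc + r3 • n3 := h3a.symm.trans h3b
  have e4 : d + r4 • n2 = cc + r4 • n3 := h4a.symm.trans h4b
  have hE : (r2 - r1) • n0 + (r1 - r3) • n1 + (r4 - r2) • n2 + (r3 - r4) • n3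
      = (0 : EuclideanSpace ℝ (Fin 3)) := by
    linear_combination (norm := module) -e1 + e2 - e3 + e4
  -- common point via linear algebra
  have hne34 : r3 - r4 ≠ 0 := sub_ne_zero.mpr hrne
  have hfr : Fintype.card (Fin 3) = Module.finrank ℝ (EuclideanSpace ℝ (Fin 3)) := by
    simp [finrank_euclideanSpace]
  have hspan : Submodule.span ℝ (Set.range ![n0, n1, n2]) = ⊤ := by
    have := (basisOfLinearIndependentOfCardEqFinrank hindep hfr).span_eq
    rwa [coe_basisOfLinearIndependentOfCardEqFinrank] at this
  set L : EuclideanSpace ℝ (Fin 3) →ₗ[ℝ] (Fin 3 → ℝ) :=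
    LinearMap.pi (fun i => innerₗ _ (![n0, n1, n2] i)) with hL
  have hLapp : ∀ (w : EuclideanSpace ℝ (Fin 3)) (i : Fin 3), L w i = ⟪![n0,n1,n2] i, w⟫ := by
    intro w i; rfl
  have hinj : Function.Injective L := by
    rw [← LinearMap.ker_eq_bot, Submodule.eq_bot_iff]
    intro w hw
    have hz : ∀ i : Fin 3, ⟪![n0,n1,n2] i, w⟫ = 0 := by
      intro i
      have : L w i = 0 := by rw [hw]; rfl
      rwa [hLapp] at this
    have hwmem : w ∈ Submodule.span ℝ (Set.range ![n0, n1, n2]) := by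
      rw [hspan]; trivial
    rw [Finsupp.mem_span_range_iff_exists_finsupp] at hwmem
    obtain ⟨cf, hcf⟩ := hwmem
    have : ⟪w, w⟫ = 0 := by
      calc ⟪w, w⟫ = ⟪(cf.sum fun i c => c • ![n0,n1,n2] i), w⟫ := by rw [hcf]
        _ = 0 := by
          rw [Finsupp.sum, sum_inner]
          refine Finset.sum_eq_zero fun i _ => ?_
          rw [real_inner_smul_left, hz i, mul_zero]
    exact inner_self_eq_zero.mp this
  have hsurj : Function.Surjective L :=
    (LinearMap.injective_iff_surjective_of_finrank_eq_finrank
      (by simp [finrank_euclideanSpace])).mp hinj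
  obtain ⟨y, hy⟩ := hsurj ![⟪n0, a⟫, ⟪n1, b⟫, ⟪n2, d⟫]
  have hy0 : ⟪n0, y⟫ = ⟪n0, a⟫ := by
    have := congr_fun hy 0; rwa [hLapp] at this
  have hy1 : ⟪n1, y⟫ = ⟪n1, b⟫ := by
    have := congr_fun hy 1; rwa [hLapp] at this
  have hy2 : ⟪n2, y⟫ = ⟪n2, d⟫ := by
    have := congr_fun hy 2; rwa [hLapp] at this
  have hiE : (r2 - r1) * ⟪n0, y⟫ + (r1 - r3) * ⟪n1, y⟫ + (r4 - r2) * ⟪n2, y⟫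
      + (r3 - r4) * ⟪n3, y⟫ = 0 := by
    have h := congrArg (fun w : EuclideanSpace ℝ (Fin 3) => ⟪w, y⟫) hE
    simp only [inner_add_left, real_inner_smul_left, inner_zero_left] at h
    exact h
  rw [hy0, hy1, hy2] at hiE
  have hy3 : ⟪n3, y⟫ = ⟪n3, cc⟫ := by
    apply mul_left_cancel₀ hne34
    linarith [hiE, hQ]
  -- coplanarity
  have h0m : n0 ∈ affineSpan ℝ ({n0, n1, n2} : Set (EuclideanSpace ℝ (Fin 3))) :=
    mem_affineSpan ℝ (by simp)
  have h1m : n1 ∈ affineSpan ℝ ({n0, n1, n2} : Set (EuclideanSpace ℝ (Fin 3))) :=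
    mem_affineSpan ℝ (by simp)
  have h2m : n2 ∈ affineSpan ℝ ({n0, n1, n2} : Set (EuclideanSpace ℝ (Fin 3))) :=
    mem_affineSpan ℝ (by simp)
  have hsmul : (r3 - r4) • (n3 - n0)
      = (r3 - r1) • (n1 - n0) + (r2 - r4) • (n2 - n0) := by
    linear_combination (norm := module) hE
  have hw : n3 - n0 ∈ (affineSpan ℝ ({n0, n1, n2} :
      Set (EuclideanSpace ℝ (Fin 3)))).direction := by
    rw [← Submodule.smul_mem_iff _ hne34, hsmul]
    refine Submodule.add_mem _ (Submodule.smul_mem _ _ ?_) (Submodule.smul_mem _ _ ?_)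
    · rw [direction_affineSpan]
      have := vsub_mem_vectorSpan ℝ (Set.mem_insert_of_mem n0 (Set.mem_insert n1 {n2}))
        (Set.mem_insert n0 {n1, n2})
      simpa using this
    · rw [direction_affineSpan]
      have := vsub_mem_vectorSpan ℝ
        (Set.mem_insert_of_mem n0 (Set.mem_insert_of_mem n1 (Set.mem_singleton n2)))
        (Set.mem_insert n0 {n1, n2})
      simpa using this
  have hmem : n3 ∈ affineSpan ℝ ({n0, n1, n2} : Set (EuclideanSpace ℝ (Fin 3))) := by
    have := AffineSubspace.vadd_mem_of_mem_direction hw h0m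
    simpa using this
  have hcop : Coplanar ℝ ({n0, n1, n3, n2} : Set (EuclideanSpace ℝ (Fin 3))) := by
    have hset : ({n0, n1, n3, n2} : Set (EuclideanSpace ℝ (Fin 3)))
        = insert n3 {n0, n1, n2} := by
      ext z; simp only [Set.mem_insert_iff, Set.mem_singleton_iff]; tauto
    rw [hset]
    exact (coplanar_insert_iff_of_mem_affineSpan hmem).mpr (coplanar_triple ℝ n0 n1 n2)
  refine ⟨⟨y, hy0, hy1, hy3, hy2⟩, hcop, ⟨0, 1, ?_⟩, hcop⟩
  intro p hp
  simp only [Set.mem_insert_iff, Set.mem_singleton_iff] at hp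
  rcases hp with h | h | h | h <;> subst h <;>
    simp [dist_zero_right, hunit, hn0', hn1', hn2', hn3']
end

section
/- Let p, q, a₁, a₂, b₁, b₂ be points of ℝ³ with p ≠ q. Suppose that the quadruple {a₁, a₂, p, q} is concyclic, that the quadruple {b₁, b₂, p, q} is concyclic, that a₁, p, q are not collinear (so that {a₁, a₂, p, q} spans an affine plane Π), and that b₁ ∉ Π. Then the six points a₁, a₂, b₁, b₂, p, q are cospherical: there is a single sphere in ℝ³ containing all of them. (For any two neighboring quadrilaterals of a circular net there is one common sphere containing both circles.) -/
open EuclideanGeometry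

private abbrev E3 : Type := EuclideanSpace ℝ (Fin 3)

/-- If `x, y, z` are not collinear and `{x, y, z, w}` is coplanar, then `w` lies in the
affine span (plane) of `x, y, z`. -/
private lemma aux_mem_span {x y z w : E3}
    (hcol : ¬ Collinear ℝ ({x, y, z} : Set E3))
    (hcop : Coplanar ℝ ({x, y, z, w} : Set E3)) :
    w ∈ affineSpan ℝ ({x, y, z} : Set E3) := by
  have hsub : ({x, y, z} : Set E3) ⊆ ({x, y, z, w} : Set E3) := by
    intro a ha
    simp only [Set.mem_insert_iff, Set.mem_singleton_iff] at ha ⊢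
    tauto
  have hind : AffineIndependent ℝ ![x, y, z] :=
    affineIndependent_iff_not_collinear_set.mpr hcol
  have hrange : Set.range ![x, y, z] = ({x, y, z} : Set E3) := by
    ext u; simp [Matrix.range_cons, Matrix.range_empty]; tauto
  have hfr : Module.finrank ℝ (vectorSpan ℝ ({x, y, z} : Set E3)) = 2 := by
    have h := hind.finrank_vectorSpan (n := 2) (by simp)
    rwa [hrange] at h
  haveI := hcop.finiteDimensional_vectorSpan
  have hle : vectorSpan ℝ ({x, y, z} : Set E3) ≤ vectorSpan ℝ ({x, y, z, w} : Set E3) :=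
    vectorSpan_mono ℝ hsub
  have heq : vectorSpan ℝ ({x, y, z} : Set E3) = vectorSpan ℝ ({x, y, z, w} : Set E3) :=
    Submodule.eq_of_le_of_finrank_le hle (by rw [hfr]; exact hcop.finrank_le_two)
  have hspan : affineSpan ℝ ({x, y, z} : Set E3) = affineSpan ℝ ({x, y, z, w} : Set E3) := by
    apply AffineSubspace.ext_of_direction_eq
    · rw [direction_affineSpan, direction_affineSpan]; exact heq
    · exact ⟨x, mem_affineSpan ℝ (by simp), mem_affineSpan ℝ (by simp)⟩
  rw [hspan]
  exact mem_affineSpan ℝ (by simp)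

/-- If `w` lies in the plane of the noncollinear points `x, y, z`, and `x, y, z, w` all lie
on a sphere centered at `c'`, then any point `c` equidistant from `x, y, z` is also
equidistant from `w`. -/
private lemma aux_dist_eq {x y z w c c' : E3} {r' : ℝ}
    (hcol : ¬ Collinear ℝ ({x, y, z} : Set E3))
    (hw : w ∈ affineSpan ℝ ({x, y, z} : Set E3))
    (hx' : dist x c' = r') (hy' : dist y c' = r') (hz' : dist z c' = r') (hw' : dist w c' = r')
    (hxy : dist x c = dist y c) (hxz : dist x c = dist z c) :
    dist w c = dist x c := by
  have hind : AffineIndependent ℝ ![x, y, z] :=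
    affineIndependent_iff_not_collinear_set.mpr hcol
  set T : Affine.Simplex ℝ E3 2 := ⟨![x, y, z], hind⟩ with hT
  have hrange : Set.range T.points = ({x, y, z} : Set E3) := by
    ext u; simp [hT, Matrix.range_cons, Matrix.range_empty]; tauto
  set PL : AffineSubspace ℝ E3 := affineSpan ℝ ({x, y, z} : Set E3) with hPL
  have hxPL : x ∈ PL := mem_affineSpan ℝ (by simp)
  have hyPL : y ∈ PL := mem_affineSpan ℝ (by simp)
  have hzPL : z ∈ PL := mem_affineSpan ℝ (by simp)
  haveI : Nonempty PL := ⟨⟨x, hxPL⟩⟩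
  set pc : E3 := ↑(EuclideanGeometry.orthogonalProjection PL c) with hpc
  set pc' : E3 := ↑(EuclideanGeometry.orthogonalProjection PL c') with hpc'
  have pyth : ∀ u : E3, u ∈ PL →
      dist u c * dist u c = dist u pc * dist u pc + dist c pc * dist c pc := fun u hu =>
    EuclideanGeometry.dist_sq_eq_dist_orthogonalProjection_sq_add_dist_orthogonalProjection_sq c hu
  have pyth' : ∀ u : E3, u ∈ PL →
      dist u c' * dist u c' = dist u pc' * dist u pc' + dist c' pc' * dist c' pc' := fun u hu =>
    EuclideanGeometry.dist_sq_eq_dist_orthogonalProjection_sq_add_dist_orthogonalProjection_sq c' hu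
  have e1 : dist y pc = dist x pc := by
    rw [← mul_self_inj dist_nonneg dist_nonneg]
    have h1 := pyth x hxPL
    have h2 := pyth y hyPL
    have hq : dist y c * dist y c = dist x c * dist x c := by rw [hxy]
    linarith
  have e2 : dist z pc = dist x pc := by
    rw [← mul_self_inj dist_nonneg dist_nonneg]
    have h1 := pyth x hxPL
    have h2 := pyth z hzPL
    have hq : dist z c * dist z c = dist x c * dist x c := by rw [hxz]
    linarith
  have e1' : dist y pc' = dist x pc' := by
    rw [← mul_self_inj dist_nonneg dist_nonneg]
    have h1 := pyth' x hxPL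
    have h2 := pyth' y hyPL
    have hq : dist y c' * dist y c' = dist x c' * dist x c' := by rw [hx', hy']
    linarith
  have e2' : dist z pc' = dist x pc' := by
    rw [← mul_self_inj dist_nonneg dist_nonneg]
    have h1 := pyth' x hxPL
    have h2 := pyth' z hzPL
    have hq : dist z c' * dist z c' = dist x c' * dist x c' := by rw [hx', hz']
    linarith
  have hmem : pc ∈ affineSpan ℝ (Set.range T.points) := by
    rw [hrange]
    exact (EuclideanGeometry.orthogonalProjection PL c).2
  have hmem' : pc' ∈ affineSpan ℝ (Set.range T.points) := by
    rw [hrange]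
    exact (EuclideanGeometry.orthogonalProjection PL c').2
  have hcc : pc = T.circumcenter := by
    refine T.eq_circumcenter_of_dist_eq hmem (r := dist x pc) fun i => ?_
    fin_cases i <;> simp only [hT] <;>
      simp [Matrix.cons_val_zero, Matrix.cons_val_one, e1, e2]
  have hcc' : pc' = T.circumcenter := by
    refine T.eq_circumcenter_of_dist_eq hmem' (r := dist x pc') fun i => ?_
    fin_cases i <;> simp only [hT] <;>
      simp [Matrix.cons_val_zero, Matrix.cons_val_one, e1', e2']
  have hpp : pc = pc' := by rw [hcc, hcc']
  have e3 : dist w pc' = dist x pc' := by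
    rw [← mul_self_inj dist_nonneg dist_nonneg]
    have h1 := pyth' x hxPL
    have h2 := pyth' w hw
    have hq : dist w c' * dist w c' = dist x c' * dist x c' := by rw [hx', hw']
    linarith
  have e4 : dist w pc = dist x pc := by rw [hpp]; exact e3
  rw [← mul_self_inj dist_nonneg dist_nonneg]
  have h1 := pyth x hxPL
  have h2 := pyth w hw
  have hq : dist w pc * dist w pc = dist x pc * dist x pc := by rw [e4]
  linarith

/-- **Two neighboring quadrilaterals of a circular net lie on a common sphere.**
If `{a₁, a₂, p, q}` and `{b₁, b₂, p, q}` are two concyclic quadruples of ℝ³ sharing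
the two distinct points `p ≠ q`, with `a₁, p, q` not collinear (so the first
quadruple spans a plane Π) and `b₁ ∉ Π`, then the six points are cospherical. -/
theorem neighboring_circular_quads_cospherical
    (p q a₁ a₂ b₁ b₂ : EuclideanSpace ℝ (Fin 3))
    (hpq : p ≠ q)
    (ha : Concyclic ({a₁, a₂, p, q} : Set (EuclideanSpace ℝ (Fin 3))))
    (hb : Concyclic ({b₁, b₂, p, q} : Set (EuclideanSpace ℝ (Fin 3))))
    (hcol : ¬ Collinear ℝ ({a₁, p, q} : Set (EuclideanSpace ℝ (Fin 3))))
    (hb₁ : b₁ ∉ affineSpan ℝ ({a₁, a₂, p, q} : Set (EuclideanSpace ℝ (Fin 3)))) :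
    Cospherical ({a₁, a₂, b₁, b₂, p, q} : Set (EuclideanSpace ℝ (Fin 3))) := by
  obtain ⟨⟨ca, ra, hca⟩, hacop⟩ := ha
  obtain ⟨⟨cb, rb, hcb⟩, hbcop⟩ := hb
  have hca1 : dist a₁ ca = ra := hca a₁ (by simp)
  have hca2 : dist a₂ ca = ra := hca a₂ (by simp)
  have hcap : dist p ca = ra := hca p (by simp)
  have hcaq : dist q ca = ra := hca q (by simp)
  have hcb1 : dist b₁ cb = rb := hcb b₁ (by simp)
  have hcb2 : dist b₂ cb = rb := hcb b₂ (by simp)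
  have hcbp : dist p cb = rb := hcb p (by simp)
  have hcbq : dist q cb = rb := hcb q (by simp)
  have ha₂mem : a₂ ∈ affineSpan ℝ ({a₁, p, q} : Set E3) := by
    refine aux_mem_span hcol ?_
    have hs : ({a₁, p, q, a₂} : Set E3) = {a₁, a₂, p, q} := by
      ext u; simp only [Set.mem_insert_iff, Set.mem_singleton_iff]; tauto
    rw [hs]; exact hacop
  have hb₁' : b₁ ∉ affineSpan ℝ ({a₁, p, q} : Set E3) := by
    intro h
    apply hb₁
    refine affineSpan_mono ℝ ?_ h
    intro u hu
    simp only [Set.mem_insert_iff, Set.mem_singleton_iff] at hu ⊢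
    tauto
  have hcolb : ¬ Collinear ℝ ({b₁, p, q} : Set E3) := by
    intro h
    have hmem : b₁ ∈ line[ℝ, p, q] :=
      h.mem_affineSpan_of_mem_of_ne (by simp) (by simp) (by simp) hpq
    apply hb₁
    refine affineSpan_mono ℝ ?_ hmem
    intro u hu
    simp only [Set.mem_insert_iff, Set.mem_singleton_iff] at hu ⊢
    tauto
  have hb₂mem : b₂ ∈ affineSpan ℝ ({b₁, p, q} : Set E3) := by
    refine aux_mem_span hcolb ?_
    have hs : ({b₁, p, q, b₂} : Set E3) = {b₁, b₂, p, q} := by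
      ext u; simp only [Set.mem_insert_iff, Set.mem_singleton_iff]; tauto
    rw [hs]; exact hbcop
  have hncop : ¬ Coplanar ℝ ({a₁, p, q, b₁} : Set E3) := fun hc => hb₁' (aux_mem_span hcol hc)
  have hind4 : AffineIndependent ℝ ![a₁, p, q, b₁] := by
    by_contra h4
    apply hncop
    have hrange : Set.range ![a₁, p, q, b₁] = ({a₁, p, q, b₁} : Set E3) := by
      ext u; simp [Matrix.range_cons, Matrix.range_empty]; tauto
    have hfr := (finrank_vectorSpan_le_iff_not_affineIndependent ℝ ![a₁, p, q, b₁]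
      (Fintype.card_fin 4)).mpr h4
    rw [hrange] at hfr
    exact coplanar_iff_finrank_le_two.mpr hfr
  set S : Affine.Simplex ℝ E3 3 := ⟨![a₁, p, q, b₁], hind4⟩ with hS
  set c : E3 := S.circumcenter with hc
  have hd : ∀ i, dist (S.points i) c = S.circumradius := fun i => by
    rw [dist_comm]; exact S.dist_circumcenter_eq_circumradius' i
  have hda1 : dist a₁ c = S.circumradius := by simpa [hS] using hd 0
  have hdp : dist p c = S.circumradius := by simpa [hS] using hd 1
  have hdq : dist q c = S.circumradius := by simpa [hS] using hd 2
  have hdb1 : dist b₁ c = S.circumradius := by simpa [hS] using hd 3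
  have hda2 : dist a₂ c = dist a₁ c :=
    aux_dist_eq hcol ha₂mem hca1 hcap hcaq hca2 (by rw [hda1, hdp]) (by rw [hda1, hdq])
  have hdb2 : dist b₂ c = dist b₁ c :=
    aux_dist_eq hcolb hb₂mem hcb1 hcbp hcbq hcb2 (by rw [hdb1, hdp]) (by rw [hdb1, hdq])
  refine ⟨c, S.circumradius, ?_⟩
  intro u hu
  simp only [Set.mem_insert_iff, Set.mem_singleton_iff] at hu
  rcases hu with rfl | rfl | rfl | rfl | rfl | rfl
  · exact hda1
  · rw [hda2, hda1]
  · exact hdb1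
  · rw [hdb2, hdb1]
  · exact hdp
  · exact hdq
end
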